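/- arXiv:1312.0098 — 5 statements merged into one kernel-verified Lean document; each statement's English description precedes it below -/
import Mathlib

section
/- Let G and H be connected graphs with at least 2 vertices each, and suppose at least one of G, H is not a complete graph. Then rx_3(G[H]) ≤ rx_3(G) + rc(H). -/
open SimpleGraph

/-- An edge coloring `c` of `G` is a 3-rainbow coloring if every set of at most three
vertices is contained in a rainbow tree of `G`, formalized as a connected subgraph of `G`
on whose edge set the coloring `c` is injective. -/
def IsRainbowColoring3 {V : Type*} (G : SimpleGraph V) (c : Sym2 V → ℕ) : Prop :=
  ∀ S : Set V, S.ncard ≤ 3 →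
    ∃ T : G.Subgraph, T.Connected ∧ S ⊆ T.verts ∧ Set.InjOn c T.edgeSet

/-- The 3-rainbow index `rx₃(G)`: the minimum number of colors in a 3-rainbow coloring. -/
noncomputable def rx3 {V : Type*} (G : SimpleGraph V) : ℕ :=
  sInf {n | ∃ c : Sym2 V → ℕ, (∀ e ∈ G.edgeSet, c e < n) ∧ IsRainbowColoring3 G c}

/-- The Steiner distance of a vertex set `S` of `G`: the minimum number of edges of a
tree (connected subgraph) of `G` containing `S`. -/
noncomputable def steinerDist {V : Type*} (G : SimpleGraph V) (S : Set V) : ℕ :=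
  sInf {n | ∃ T : G.Subgraph, T.Connected ∧ S ⊆ T.verts ∧ T.edgeSet.ncard = n}

/-- The 3-Steiner diameter of `G`: the maximum Steiner distance over vertex sets of
at most 3 vertices. -/
noncomputable def sdiam3 {V : Type*} (G : SimpleGraph V) : ℕ :=
  sSup {n | ∃ S : Set V, S.ncard ≤ 3 ∧ steinerDist G S = n}

/-- The rainbow connection number `rc(G)`: the minimum number of colors in an edge coloring
of `G` such that every two vertices are joined by a path whose edges all receive
distinct colors. -/
noncomputable def rcIndex {V : Type*} (G : SimpleGraph V) : ℕ :=
  sInf {n | ∃ c : Sym2 V → ℕ, (∀ e ∈ G.edgeSet, c e < n) ∧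
    ∀ u v : V, ∃ p : G.Walk u v, p.IsPath ∧ (p.edges.map c).Nodup}

/-- The lexicographic product `G[H]` of simple graphs. -/
def lexProd {α β : Type*} (G : SimpleGraph α) (H : SimpleGraph β) :
    SimpleGraph (α × β) where
  Adj x y := G.Adj x.1 y.1 ∨ (x.1 = y.1 ∧ H.Adj x.2 y.2)
  symm := by
    constructor
    rintro x y (h | ⟨h1, h2⟩)
    · exact Or.inl h.symm
    · exact Or.inr ⟨h1.symm, h2.symm⟩
  loopless := by
    constructor
    rintro x (h | ⟨-, h⟩)
    · exact G.irrefl h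
    · exact H.irrefl h

/-- The strong product `G ⊠ H` of simple graphs. -/
def strongProd {α β : Type*} (G : SimpleGraph α) (H : SimpleGraph β) :
    SimpleGraph (α × β) where
  Adj x y := x ≠ y ∧ (x.1 = y.1 ∨ G.Adj x.1 y.1) ∧ (x.2 = y.2 ∨ H.Adj x.2 y.2)
  symm := by
    constructor
    rintro x y ⟨hne, h1, h2⟩
    exact ⟨hne.symm, h1.imp Eq.symm (fun h => h.symm), h2.imp Eq.symm (fun h => h.symm)⟩
  loopless := ⟨fun x h => h.1 rfl⟩

/-- The join `G ∨ H` of two simple graphs: the disjoint union of `G` and `H` together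
with all edges joining a vertex of `G` to a vertex of `H`. -/
def joinGraph {α β : Type*} (G : SimpleGraph α) (H : SimpleGraph β) :
    SimpleGraph (α ⊕ β) where
  Adj x y :=
    match x, y with
    | Sum.inl a, Sum.inl b => G.Adj a b
    | Sum.inr a, Sum.inr b => H.Adj a b
    | Sum.inl _, Sum.inr _ => True
    | Sum.inr _, Sum.inl _ => True
  symm := by
    constructor
    rintro (a | a) (b | b) h
    · exact h.symm
    · trivial
    · trivial
    · exact h.symm
  loopless := by
    constructor
    rintro (a | a) h
    · exact G.irrefl h
    · exact H.irrefl h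

/-- The Cartesian product `G₁ □ G₂ □ ⋯ □ G_k` of a family of simple graphs
(the Cartesian product is associative, so this is the iterated Cartesian product). -/
def boxProdFamily {k : ℕ} {V : Fin k → Type*} (G : ∀ i, SimpleGraph (V i)) :
    SimpleGraph (∀ i, V i) where
  Adj x y := ∃ i, (G i).Adj (x i) (y i) ∧ ∀ j, j ≠ i → x j = y j
  symm := by
    constructor
    rintro x y ⟨i, hadj, heq⟩
    exact ⟨i, hadj.symm, fun j hj => (heq j hj).symm⟩
  loopless := by
    constructor
    rintro x ⟨i, hadj, -⟩
    exact (G i).irrefl hadj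

lemma SimpleGraph.Subgraph.Connected.sup {V : Type*} {G : SimpleGraph V} {H K : G.Subgraph}
    (hH : H.Connected) (hK : K.Connected) (hn : (H ⊓ K).verts.Nonempty) : (H ⊔ K).Connected :=
  Subgraph.connected_sup hH.preconnected hK.preconnected hn

namespace Rx3Aux

variable {V : Type*} {G : SimpleGraph V}

lemma injOn_of_map_nodup {γ : Type*} {f : γ → ℕ} {L : List γ} (h : (L.map f).Nodup) :
    Set.InjOn f {e | e ∈ L} := fun a ha b hb hab =>
  List.inj_on_of_nodup_map h ha hb hab

lemma injOn_union {γ : Type*} {f : γ → ℕ} {A B : Set γ} (hA : Set.InjOn f A)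
    (hB : Set.InjOn f B) (hAB : ∀ a ∈ A, ∀ b ∈ B, f a ≠ f b) :
    Set.InjOn f (A ∪ B) := by
  intro a ha b hb hab
  rcases ha with ha | ha <;> rcases hb with hb | hb
  · exact hA ha hb hab
  · exact absurd hab (hAB _ ha _ hb)
  · exact absurd hab.symm (hAB _ hb _ ha)
  · exact hB ha hb hab

lemma exists_of_map_eq_map {γ δ : Type*} {f : γ → ℕ} {Φ : δ → ℕ} :
    ∀ (L1 : List γ) (L2 : List δ), L1.map f = L2.map Φ →
      ∀ e ∈ L1, ∃ g ∈ L2, f e = Φ g := by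
  intro L1
  induction L1 with
  | nil => intro L2 _ e he; simp at he
  | cons x L ih =>
    intro L2 h e he
    cases L2 with
    | nil => simp at h
    | cons y L2' =>
      simp only [List.map_cons, List.cons.injEq] at h
      rcases List.mem_cons.mp he with rfl | he
      · exact ⟨y, List.mem_cons_self, h.1⟩
      · obtain ⟨g, hg, hfg⟩ := ih L2' h.2 e he
        exact ⟨g, List.mem_cons_of_mem _ hg, hfg⟩

lemma map_coe_edge_mem {T : G.Subgraph} (e0 : Sym2 T.verts) (h : e0 ∈ T.coe.edgeSet) :
    Sym2.map T.hom e0 ∈ T.edgeSet := by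
  induction e0 with
  | _ a b =>
    have hadj : T.Adj (a : V) (b : V) := (Subgraph.coe_adj T a b) ▸ h
    simpa [Sym2.map_pair_eq, Subgraph.mem_edgeSet] using hadj

/-- Extract a path between two vertices of a connected subgraph, with edges and support
inside the subgraph. -/
lemma exists_path_in_subgraph {T : G.Subgraph} (hT : T.Connected) {u v : V}
    (hu : u ∈ T.verts) (hv : v ∈ T.verts) :
    ∃ p : G.Walk u v, p.IsPath ∧ (∀ e ∈ p.edges, e ∈ T.edgeSet) ∧
      (∀ x ∈ p.support, x ∈ T.verts) := by
  classical
  have hreach := hT.coe ⟨u, hu⟩ ⟨v, hv⟩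
  obtain ⟨w0⟩ := hreach
  let w : G.Walk u v := w0.map T.hom
  have hedges : ∀ e ∈ w.edges, e ∈ T.edgeSet := by
    intro e he
    rw [show w.edges = (w0.map T.hom).edges from rfl, Walk.edges_map] at he
    obtain ⟨e0, he0, rfl⟩ := List.mem_map.mp he
    exact map_coe_edge_mem e0 (w0.edges_subset_edgeSet he0)
  have hsupp : ∀ x ∈ w.support, x ∈ T.verts := by
    intro x hx
    rw [show w.support = (w0.map T.hom).support from rfl, Walk.support_map] at hx
    obtain ⟨x0, _, rfl⟩ := List.mem_map.mp hx
    exact x0.2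
  exact ⟨w.bypass, w.bypass_isPath, fun e he => hedges e (w.edges_bypass_subset he),
    fun x hx => hsupp x (w.support_bypass_subset hx)⟩

/-- First-hit prefix of a path into a set `S`. -/
lemma exists_prefix_until (S : Set V) {a b : V} (w : G.Walk a b) :
    w.IsPath → b ∈ S →
    ∃ (c : V) (w' : G.Walk a c), c ∈ S ∧ w'.IsPath ∧ (∀ e ∈ w'.edges, e ∈ w.edges) ∧
      (∀ x ∈ w'.support, x ∈ w.support) ∧ (∀ x ∈ w'.support, x ≠ c → x ∉ S) := by
  classical
  induction w with
  | nil =>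
    intro _ hb
    refine ⟨_, Walk.nil, hb, Walk.IsPath.nil, by simp, by simp, ?_⟩
    intro x hx hxc
    simp only [Walk.support_nil, List.mem_singleton] at hx
    exact absurd hx hxc
  | @cons t t' s h p ih =>
    intro hw hb
    by_cases ha : t ∈ S
    · refine ⟨t, Walk.nil, ha, Walk.IsPath.nil, by simp, ?_, ?_⟩
      · intro x hx
        simp only [Walk.support_nil, List.mem_singleton] at hx
        subst hx; simp
      · intro x hx hxc
        simp only [Walk.support_nil, List.mem_singleton] at hx
        exact absurd hx hxc
    · obtain ⟨c, w', hc, hw', hedges, hsupp, hlast⟩ := ih hw.of_cons hb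
      have hA : t ∉ w'.support := fun hmem =>
        ((Walk.cons_isPath_iff h p).mp hw).2 (hsupp t hmem)
      refine ⟨c, Walk.cons h w', hc, hw'.cons hA, ?_, ?_, ?_⟩
      · intro e he
        rw [Walk.edges_cons] at he ⊢
        rcases List.mem_cons.mp he with rfl | he
        · exact List.mem_cons_self
        · exact List.mem_cons_of_mem _ (hedges e he)
      · intro x hx
        rw [Walk.support_cons] at hx ⊢
        rcases List.mem_cons.mp hx with rfl | hx
        · exact List.mem_cons_self
        · exact List.mem_cons_of_mem _ (hsupp x hx)
      · intro x hx hxc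
        rw [Walk.support_cons] at hx
        rcases List.mem_cons.mp hx with rfl | hx
        · exact ha
        · exact hlast x hx hxc

lemma two_distinct_edges_of_path {u v : V} {p : G.Walk u v} (hp : p.IsPath)
    (h2 : 2 ≤ p.length) : ∃ e1 e2, e1 ∈ p.edges ∧ e2 ∈ p.edges ∧ e1 ≠ e2 := by
  cases p with
  | nil => simp at h2
  | @cons _ w1 _ h q =>
    cases q with
    | nil => simp at h2
    | @cons _ w2 _ h' q' =>
      refine ⟨s(u, w1), s(w1, w2), by simp, by simp, ?_⟩
      intro heq
      rw [Sym2.eq_iff] at heq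
      rcases heq with ⟨rfl, _⟩ | ⟨rfl, -⟩
      · exact G.irrefl h
      · have : u ∈ (Walk.cons h' q').support := by
          rw [Walk.support_cons]; exact List.mem_cons_of_mem _ q'.start_mem_support
        exact ((Walk.cons_isPath_iff h _).mp hp).2 this

lemma connected_card_two_adj [Fintype V] (hcard : Fintype.card V = 2)
    (hG : G.Connected) {u v : V} (huv : u ≠ v) : G.Adj u v := by
  classical
  have hall : ∀ w : V, w = u ∨ w = v := by
    intro w
    by_contra hw
    push_neg at hw
    have h3 : ({u, v, w} : Finset V).card = 3 := by
      rw [Finset.card_insert_of_notMem (by simp [huv, Ne.symm hw.1]),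
        Finset.card_insert_of_notMem (by simp [Ne.symm hw.2]), Finset.card_singleton]
    have hle := Finset.card_le_univ ({u, v, w} : Finset V)
    rw [h3] at hle
    omega
  obtain ⟨w⟩ := hG.preconnected u v
  cases w with
  | nil => exact absurd rfl huv
  | @cons _ x _ h p =>
    rcases hall x with rfl | rfl
    · exact absurd h G.irrefl
    · exact h

lemma connected_exists_adj [Fintype V] (hG : G.Connected) (hcard : 2 ≤ Fintype.card V)
    (g : V) : ∃ g', G.Adj g g' := by
  obtain ⟨g'', hg''⟩ := Fintype.exists_ne_of_one_lt_card (by omega) g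
  obtain ⟨w⟩ := hG.preconnected g g''
  cases w with
  | nil => exact absurd rfl hg''.symm
  | cons h _ => exact ⟨_, h⟩

lemma exists_third [Fintype V] (hcard : 3 ≤ Fintype.card V) (x y : V) :
    ∃ u : V, u ≠ x ∧ u ≠ y := by
  classical
  by_contra hc
  push_neg at hc
  have hsub : (Finset.univ : Finset V) ⊆ {x, y} := by
    intro u _
    have := hc u
    by_cases hux : u = x
    · simp [hux]
    · simp [this hux]
  have h1 := Finset.card_le_card hsub
  have h2 : ({x, y} : Finset V).card ≤ 2 := (Finset.card_insert_le _ _).trans (by simp)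
  rw [Finset.card_univ] at h1
  omega

lemma subset_three {S : Set V} [Finite V] (hS : S.ncard ≤ 3) (v0 : V) :
    ∃ x y z : V, S ⊆ {x, y, z} := by
  have hfin : S.Finite := Set.toFinite S
  rcases (by omega : S.ncard = 0 ∨ S.ncard = 1 ∨ S.ncard = 2 ∨ S.ncard = 3) with h | h | h | h
  · rw [Set.ncard_eq_zero hfin] at h
    exact ⟨v0, v0, v0, by simp [h]⟩
  · rw [Set.ncard_eq_one] at h
    obtain ⟨a, rfl⟩ := h
    exact ⟨a, a, a, by simp⟩
  · rw [Set.ncard_eq_two] at h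
    obtain ⟨a, b, _, rfl⟩ := h
    exact ⟨a, b, b, by intro t ht; simp at ht ⊢; tauto⟩
  · rw [Set.ncard_eq_three] at h
    obtain ⟨a, b, c, _, _, _, rfl⟩ := h
    exact ⟨a, b, c, by simp⟩

end Rx3Aux

section LexAux

open Rx3Aux

variable {α β : Type*} (G : SimpleGraph α) (H : SimpleGraph β)

/-- The embedding of `H` into the fiber over `g` in `G[H]`. -/
def fiberHom (g : α) : H →g lexProd G H where
  toFun := fun b => (g, b)
  map_rel' := fun hadj => Or.inr ⟨rfl, hadj⟩

variable {G H}

lemma lift_walk {c : Sym2 (α × β) → ℕ} {Φ : Sym2 α → ℕ} {P : β → β → Prop}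
    (hc : ∀ (x y : α) (lx ly : β), G.Adj x y → P lx ly →
      c s((x, lx), (y, ly)) = Φ s(x, y)) :
    ∀ {a b : α} (w : G.Walk a b) (l : ℕ → β),
      (∀ i < w.length, P (l i) (l (i + 1))) →
      ∃ W : (lexProd G H).Walk (a, l 0) (b, l w.length),
        W.edges.map c = w.edges.map Φ ∧
        ∀ j ≤ w.length, (w.getVert j, l j) ∈ W.support := by
  intro a b w
  induction w with
  | nil =>
    intro l _
    refine ⟨Walk.nil, by simp, ?_⟩
    intro j hj
    have hj0 : j = 0 := Nat.le_zero.mp (by simpa using hj)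
    subst hj0
    simp
  | @cons t t' s h p ih =>
    intro l hl
    have hl' : ∀ i < p.length, (fun i => l (i + 1)) i ≠ ((fun i => l (i + 1)) (i + 1)) ∨ True := fun _ _ => Or.inr trivial
    obtain ⟨W', hWe, hWs⟩ := ih (fun i => l (i + 1))
      (fun i hi => hl (i + 1) (by rw [Walk.length_cons]; omega))
    refine ⟨Walk.cons (by left; exact h) W', ?_, ?_⟩
    · show List.map c (s((t, l 0), (t', l (0 + 1))) :: W'.edges) = _
      simp only [Walk.edges_cons, List.map_cons]
      congr 1
      exact hc t t' (l 0) (l 1) h (hl 0 (by rw [Walk.length_cons]; omega))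
    · intro j hj
      rcases j with _ | j
      · simp [Walk.support_cons]
      · simp only [Walk.getVert_cons_succ, Walk.support_cons]
        exact List.mem_cons_of_mem _ (hWs j (by rw [Walk.length_cons] at hj; omega))

lemma fiber_walk_colors (g : α) {c : Sym2 (α × β) → ℕ} {f : Sym2 β → ℕ}
    (hf : ∀ u v : β, c s((g, u), (g, v)) = f s(u, v)) {x y : β} (p : H.Walk x y) :
    (p.map (fiberHom G H g)).edges.map c = p.edges.map f := by
  rw [Walk.edges_map, List.map_map]
  have hpt : ∀ e : Sym2 β, c (Sym2.map (fiberHom G H g) e) = f e := by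
    intro e
    induction e with
    | _ u v => simp only [Sym2.map_pair_eq]; exact hf u v
  exact List.map_congr_left fun e _ => hpt e

lemma injOn_toSubgraph {V' : Type*} {Γ : SimpleGraph V'} {u v : V'} (w : Γ.Walk u v)
    (c : Sym2 V' → ℕ) (h : (w.edges.map c).Nodup) : Set.InjOn c w.toSubgraph.edgeSet := by
  rw [Walk.edgeSet_toSubgraph]
  exact injOn_of_map_nodup h

end LexAux

section SpecAux

open Rx3Aux

variable {V : Type*} [Fintype V] (Γ : SimpleGraph V)

lemma rx3_le {n : ℕ} (h : ∃ c : Sym2 V → ℕ, (∀ e ∈ Γ.edgeSet, c e < n) ∧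
    IsRainbowColoring3 Γ c) : rx3 Γ ≤ n := by unfold rx3; exact Nat.sInf_le h

lemma rx3_spec (hΓ : Γ.Connected) :
    ∃ c : Sym2 V → ℕ, (∀ e ∈ Γ.edgeSet, c e < rx3 Γ) ∧ IsRainbowColoring3 Γ c := by
  classical
  have hne : Nonempty V := hΓ.nonempty
  unfold rx3
  have h0 : ({n | ∃ c : Sym2 V → ℕ, (∀ e ∈ Γ.edgeSet, c e < n) ∧ IsRainbowColoring3 Γ c} :
      Set ℕ).Nonempty := ?_
  · exact Nat.sInf_mem h0
  refine ⟨Fintype.card (Sym2 V), fun e => (Fintype.equivFin (Sym2 V) e : ℕ), fun e _ => (Fintype.equivFin (Sym2 V) e).2, ?_⟩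
  intro S _
  refine ⟨⊤, ?_, by simp, ?_⟩
  · rw [Subgraph.connected_iff']
    exact (Subgraph.topIso (G := Γ)).connected_iff.mpr hΓ
  · intro e1 _ e2 _ h12
    exact (Fintype.equivFin (Sym2 V)).injective (Fin.val_injective h12)

lemma rc_spec (hΓ : Γ.Connected) :
    ∃ c : Sym2 V → ℕ, (∀ e ∈ Γ.edgeSet, c e < rcIndex Γ) ∧
      ∀ u v : V, ∃ p : Γ.Walk u v, p.IsPath ∧ (p.edges.map c).Nodup := by
  classical
  unfold rcIndex
  have h0 : ({n | ∃ c : Sym2 V → ℕ, (∀ e ∈ Γ.edgeSet, c e < n) ∧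
      ∀ u v : V, ∃ p : Γ.Walk u v, p.IsPath ∧ (p.edges.map c).Nodup} : Set ℕ).Nonempty := ?_
  · exact Nat.sInf_mem h0
  refine ⟨Fintype.card (Sym2 V), fun e => (Fintype.equivFin (Sym2 V) e : ℕ), fun e _ => (Fintype.equivFin (Sym2 V) e).2, ?_⟩
  intro u v
  obtain ⟨w⟩ := hΓ.preconnected u v
  refine ⟨w.bypass, w.bypass_isPath, ?_⟩
  apply List.Nodup.map
  · intro e1 e2 h12
    exact (Fintype.equivFin (Sym2 V)).injective (Fin.val_injective h12)
  · exact w.bypass_isPath.edges_nodup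

lemma rc_ge_two (hΓ : Γ.Connected) (hne : Γ ≠ ⊤) : 2 ≤ rcIndex Γ := by
  classical
  have hex : ∃ u v : V, u ≠ v ∧ ¬Γ.Adj u v := by
    by_contra hc
    push_neg at hc
    apply hne
    ext x y
    rw [top_adj]
    exact ⟨Adj.ne, fun hxy => hc x y hxy⟩
  obtain ⟨u, v, huv, hnadj⟩ := hex
  obtain ⟨c, hbd, hpaths⟩ := rc_spec Γ hΓ
  obtain ⟨p, hp, hnd⟩ := hpaths u v
  cases p with
  | nil => exact absurd rfl huv
  | @cons _ w1 _ h q =>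
    cases q with
    | nil => exact absurd h hnadj
    | @cons _ w2 _ h' q' =>
      obtain ⟨e1, e2, he1, he2, hne12⟩ := two_distinct_edges_of_path hp (by
        rw [Walk.length_cons, Walk.length_cons]; omega)
      have hc12 : c e1 ≠ c e2 := fun hcc => hne12 (List.inj_on_of_nodup_map hnd he1 he2 hcc)
      have hb1 := hbd e1 ((Walk.cons h (Walk.cons h' q')).edges_subset_edgeSet he1)
      have hb2 := hbd e2 ((Walk.cons h (Walk.cons h' q')).edges_subset_edgeSet he2)
      omega

lemma rc_ge_one (hΓ : Γ.Connected) (hcard : 2 ≤ Fintype.card V) : 1 ≤ rcIndex Γ := by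
  obtain ⟨g⟩ := hΓ.nonempty
  obtain ⟨g', hadj⟩ := connected_exists_adj hΓ hcard g
  obtain ⟨c, hbd, _⟩ := rc_spec Γ hΓ
  have := hbd s(g, g') hadj
  omega

lemma rx3_ge_one (hΓ : Γ.Connected) (hcard : 2 ≤ Fintype.card V) : 1 ≤ rx3 Γ := by
  obtain ⟨g⟩ := hΓ.nonempty
  obtain ⟨g', hadj⟩ := connected_exists_adj hΓ hcard g
  obtain ⟨c, hbd, _⟩ := rx3_spec Γ hΓ
  have := hbd s(g, g') hadj
  omega

lemma ncard_triple_le (a b c : V) : ({a, b, c} : Set V).ncard ≤ 3 := by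
  have h1 := Set.ncard_insert_le a ({b, c} : Set V)
  have h2 := Set.ncard_insert_le b ({c} : Set V)
  rw [Set.ncard_singleton] at h2
  omega

lemma rx3_ge_two (hΓ : Γ.Connected) (hcard : 3 ≤ Fintype.card V) : 2 ≤ rx3 Γ := by
  classical
  obtain ⟨c, hbd, hrb⟩ := rx3_spec Γ hΓ
  obtain ⟨a⟩ := hΓ.nonempty
  obtain ⟨b, hba⟩ := Fintype.exists_ne_of_one_lt_card (by omega) a
  obtain ⟨d, hda, hdb⟩ := exists_third hcard a b
  obtain ⟨T, hT, hsub, hinj⟩ := hrb {a, b, d} (ncard_triple_le a b d)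
  have hmem : ∀ x ∈ ({a, b, d} : Set V), x ∈ T.verts := fun x hx => hsub hx
  have two_edges : ∃ e1 e2, e1 ∈ T.edgeSet ∧ e2 ∈ T.edgeSet ∧ e1 ≠ e2 := by
    obtain ⟨p, hp, hpe, _⟩ := exists_path_in_subgraph hT
      (hmem b (by simp)) (hmem a (by simp))
    cases p with
    | nil => exact absurd rfl hba
    | @cons _ w1 _ h q =>
      cases q with
      | nil =>
        obtain ⟨p', hp', hpe', _⟩ := exists_path_in_subgraph hT
          (hmem d (by simp)) (hmem a (by simp))
        cases p' with
        | nil => exact absurd rfl hda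
        | @cons _ w1' _ h2 q2 =>
          cases q2 with
          | nil =>
            refine ⟨s(b, a), s(d, a), hpe _ (by simp), hpe' _ (by simp), ?_⟩
            intro heq
            rw [Sym2.eq_iff] at heq
            rcases heq with ⟨h1, -⟩ | ⟨h1, -⟩
            · exact hdb h1.symm
            · exact hba h1
          | @cons _ w2' _ h3 q3 =>
            obtain ⟨e1, e2, he1, he2, hne12⟩ := two_distinct_edges_of_path hp' (by
              rw [Walk.length_cons, Walk.length_cons]; omega)
            exact ⟨e1, e2, hpe' _ he1, hpe' _ he2, hne12⟩
      | @cons _ w2 _ h' q' =>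
        obtain ⟨e1, e2, he1, he2, hne12⟩ := two_distinct_edges_of_path hp (by
          rw [Walk.length_cons, Walk.length_cons]; omega)
        exact ⟨e1, e2, hpe _ he1, hpe _ he2, hne12⟩
  obtain ⟨e1, e2, he1, he2, hne12⟩ := two_edges
  have hc12 : c e1 ≠ c e2 := fun hcc => hne12 (hinj he1 he2 hcc)
  have hb1 := hbd e1 (T.edgeSet_subset he1)
  have hb2 := hbd e2 (T.edgeSet_subset he2)
  omega

end SpecAux

section Pieces

open Rx3Aux

variable {α β : Type*} [Fintype α] [Fintype β] {G : SimpleGraph α} {H : SimpleGraph β}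
variable {nG nH : ℕ} {cG : Sym2 α → ℕ} {cH : Sym2 β → ℕ} {c : Sym2 (α × β) → ℕ}
variable {P : β → β → Prop} {Φ : Sym2 α → ℕ}

lemma succ_mod_inj {n a b : ℕ} (ha : a < n) (hb : b < n) (h : (a + 1) % n = (b + 1) % n) :
    a = b := by
  have h1 : (a + 1) % n = if a + 1 = n then 0 else a + 1 := by
    split
    · simp [*]
    · exact Nat.mod_eq_of_lt (by omega)
  have h2 : (b + 1) % n = if b + 1 = n then 0 else b + 1 := by
    split
    · simp [*]
    · exact Nat.mod_eq_of_lt (by omega)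
  rw [h1, h2] at h
  split at h <;> split at h <;> omega

lemma succ_mod_ne {n a : ℕ} (h2 : 2 ≤ n) (ha : a < n) : (a + 1) % n ≠ a := by
  have h1 : (a + 1) % n = if a + 1 = n then 0 else a + 1 := by
    split
    · simp [*]
    · exact Nat.mod_eq_of_lt (by omega)
  rw [h1]
  split <;> omega

lemma succ_mod_lt {n a : ℕ} (h1 : 1 ≤ n) : (a + 1) % n < n := Nat.mod_lt _ (by omega)

lemma tree_triple (hcGr : IsRainbowColoring3 G cG) (p q r : α) :
    ∃ T : G.Subgraph, T.Connected ∧ p ∈ T.verts ∧ q ∈ T.verts ∧ r ∈ T.verts ∧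
      Set.InjOn cG T.edgeSet := by
  obtain ⟨T, h1, h2, h3⟩ := hcGr {p, q, r} (ncard_triple_le p q r)
  exact ⟨T, h1, h2 (by simp), h2 (by simp), h2 (by simp), h3⟩

/-- A rainbow fiber path as a subgraph piece. -/
lemma fiber_piece (hfib : ∀ (g : α) (a b : β), c s((g, a), (g, b)) = nG + cH s(a, b))
    (hcHp : ∀ u v : β, ∃ p : H.Walk u v, p.IsPath ∧ (p.edges.map cH).Nodup)
    (g : α) (a b : β) :
    ∃ U : (lexProd G H).Subgraph, U.Connected ∧ (g, a) ∈ U.verts ∧ (g, b) ∈ U.verts ∧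
      (∀ e ∈ U.edgeSet, nG ≤ c e) ∧ Set.InjOn c U.edgeSet := by
  obtain ⟨p, hp, hnd⟩ := hcHp a b
  have hcolors : (p.map (fiberHom G H g)).edges.map c = p.edges.map (fun e => nG + cH e) :=
    fiber_walk_colors g (fun u v => hfib g u v) p
  refine ⟨(p.map (fiberHom G H g)).toSubgraph, Walk.toSubgraph_connected _, ?_, ?_, ?_, ?_⟩
  · exact (p.map (fiberHom G H g)).start_mem_verts_toSubgraph
  · exact (p.map (fiberHom G H g)).end_mem_verts_toSubgraph
  · intro e he
    rw [Walk.edgeSet_toSubgraph] at he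
    obtain ⟨f, _, hcf⟩ := exists_of_map_eq_map _ _ hcolors e he
    omega
  · apply injOn_toSubgraph
    rw [hcolors]
    have : (fun e => nG + cH e) = (fun t => nG + t) ∘ cH := rfl
    rw [this, ← List.map_map]
    exact hnd.map (fun t1 t2 ht => by omega)

/-- A lifted walk as a subgraph piece. -/
lemma lift_piece
    (hc : ∀ (x y : α) (lx ly : β), G.Adj x y → P lx ly → c s((x, lx), (y, ly)) = Φ s(x, y))
    {T : G.Subgraph} (hTinj : Set.InjOn cG T.edgeSet)
    (hΦc : ∀ e f : Sym2 α, e ∈ G.edgeSet → f ∈ G.edgeSet → Φ e = Φ f → cG e = cG f)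
    {gs ge : α} (w : G.Walk gs ge) (hwp : w.IsPath)
    (hwe : ∀ e ∈ w.edges, e ∈ T.edgeSet) (l : ℕ → β)
    (hl : ∀ i < w.length, P (l i) (l (i + 1))) :
    ∃ U : (lexProd G H).Subgraph, U.Connected ∧ (gs, l 0) ∈ U.verts ∧
      (ge, l w.length) ∈ U.verts ∧
      (∀ j ≤ w.length, (w.getVert j, l j) ∈ U.verts) ∧
      (∀ e' ∈ U.edgeSet, ∃ f ∈ w.edges, c e' = Φ f) ∧ Set.InjOn c U.edgeSet := by
  obtain ⟨W, hWc, hWs⟩ := lift_walk hc w l hl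
  refine ⟨W.toSubgraph, Walk.toSubgraph_connected _, W.start_mem_verts_toSubgraph,
    W.end_mem_verts_toSubgraph, ?_, ?_, ?_⟩
  · intro j hj
    rw [Walk.mem_verts_toSubgraph]
    exact hWs j hj
  · intro e' he'
    rw [Walk.edgeSet_toSubgraph] at he'
    exact exists_of_map_eq_map _ _ hWc e' he'
  · apply injOn_toSubgraph
    rw [hWc]
    refine List.Nodup.map_on ?_ hwp.edges_nodup
    intro e he f hf hef
    exact hTinj (hwe e he) (hwe f hf)
      (hΦc e f (w.edges_subset_edgeSet he) (w.edges_subset_edgeSet hf) hef)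

lemma prefix_edge_disjoint {V' : Type*} {Γ : SimpleGraph V'} {d c0 a b : V'}
    (w' : Γ.Walk d c0) (w1 : Γ.Walk a b)
    (hlate : ∀ v ∈ w'.support, v ≠ c0 → v ∉ {t | t ∈ w1.support}) :
    ∀ f ∈ w'.edges, f ∉ w1.edges := by
  intro f hf hf1
  induction f with
  | _ p q =>
    have hadj : Γ.Adj p q := w'.adj_of_mem_edges hf
    have hp : p ∈ w'.support := w'.fst_mem_support_of_mem_edges hf
    have hq : q ∈ w'.support := w'.snd_mem_support_of_mem_edges hf
    have hp1 : p ∈ w1.support := w1.fst_mem_support_of_mem_edges hf1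
    have hq1 : q ∈ w1.support := w1.snd_mem_support_of_mem_edges hf1
    by_cases hpc : p = c0
    · have hqc : q ≠ c0 := fun h => hadj.ne (hpc.trans h.symm)
      exact hlate q hq hqc hq1
    · exact hlate p hp hpc hp1

end Pieces

section Patterns

variable {β : Type*} [DecidableEq β]

def lvlPat (m : ℕ) (h h' u w : β) : ℕ → β := fun i =>
  if i = 0 then h else if m ≤ i then h'
  else if h = h' ∧ i = m - 1 then w
  else if i % 2 = 1 then u else h

lemma lvlPat_zero (m : ℕ) (h h' u w : β) : lvlPat m h h' u w 0 = h := by simp [lvlPat]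

lemma lvlPat_last {m : ℕ} (hm : 1 ≤ m) (h h' u w : β) : lvlPat m h h' u w m = h' := by
  simp only [lvlPat]
  rw [if_neg (by omega : ¬ m = 0), if_pos le_rfl]

lemma lvlPat_valid {m : ℕ} {h h' u w : β} (hm : 1 ≤ m) (hmx : ¬(m = 1 ∧ h = h'))
    (hu : u ≠ h) (hu' : u ≠ h') (hw : w ≠ h) (hwu : w ≠ u) :
    ∀ i < m, lvlPat m h h' u w i ≠ lvlPat m h h' u w (i + 1) := by
  intro i hi
  by_cases hi0 : i = 0
  · subst hi0
    rw [lvlPat_zero]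
    by_cases hm1 : m = 1
    · subst hm1
      rw [lvlPat_last le_rfl]
      exact fun hh => hmx ⟨rfl, hh⟩
    · have hv1 : lvlPat m h h' u w 1 =
          if h = h' ∧ 1 = m - 1 then w else u := by
        simp only [lvlPat]
        rw [if_neg (by omega : ¬ (1 : ℕ) = 0), if_neg (by omega : ¬ m ≤ 1)]
        norm_num
      rw [hv1]
      by_cases hsp : h = h' ∧ 1 = m - 1
      · rw [if_pos hsp]; exact Ne.symm hw
      · rw [if_neg hsp]; exact Ne.symm hu
  · have hvi : lvlPat m h h' u w i =
        if h = h' ∧ i = m - 1 then w else if i % 2 = 1 then u else h := by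
      simp only [lvlPat]
      rw [if_neg hi0, if_neg (by omega : ¬ m ≤ i)]
    by_cases him : i + 1 = m
    · have hvn : lvlPat m h h' u w (i + 1) = h' := by
        simp only [lvlPat]
        rw [if_neg (by omega : ¬ i + 1 = 0), if_pos (by omega : m ≤ i + 1)]
      rw [hvi, hvn]
      by_cases hsp : h = h' ∧ i = m - 1
      · rw [if_pos hsp]
        exact fun hh => hw (hh.trans hsp.1.symm)
      · have hne : h ≠ h' := fun hh => hsp ⟨hh, by omega⟩
        rw [if_neg hsp]
        by_cases hp : i % 2 = 1 <;> simp [hp, hu', hne]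
    · have hvn : lvlPat m h h' u w (i + 1) =
          if h = h' ∧ i + 1 = m - 1 then w else if (i + 1) % 2 = 1 then u else h := by
        simp only [lvlPat]
        rw [if_neg (by omega : ¬ i + 1 = 0), if_neg (by omega : ¬ m ≤ i + 1)]
      rw [hvi, hvn]
      have hspf : ¬(h = h' ∧ i = m - 1) := fun hx => by omega
      rw [if_neg hspf]
      by_cases hsp : h = h' ∧ i + 1 = m - 1
      · rw [if_pos hsp]
        by_cases hp : i % 2 = 1 <;> simp [hp, Ne.symm hwu, Ne.symm hw]
      · rw [if_neg hsp]
        by_cases hp : i % 2 = 1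
        · rw [if_pos hp, if_neg (by omega : ¬ (i + 1) % 2 = 1)]; exact hu
        · rw [if_neg hp, if_pos (by omega : (i + 1) % 2 = 1)]; exact Ne.symm hu

end Patterns

section Recipes

open Rx3Aux

variable {α β : Type*} [Fintype α] [Fintype β] {G : SimpleGraph α} {H : SimpleGraph β}
variable {nG nH : ℕ} {cG : Sym2 α → ℕ} {cH : Sym2 β → ℕ} {c : Sym2 (α × β) → ℕ}
variable {P : β → β → Prop} {Φ : Sym2 α → ℕ}

lemma walk_length_pos {gs ge : α} (w : G.Walk gs ge) (h : gs ≠ ge) : 1 ≤ w.length := by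
  rcases Nat.eq_zero_or_pos w.length with h0 | h1
  · exact absurd (Walk.eq_of_length_eq_zero h0) h
  · exact h1

/-- Recipe for a singleton. -/
lemma recipeSingle (x : α × β) :
    ∃ T : (lexProd G H).Subgraph, T.Connected ∧ x ∈ T.verts ∧ Set.InjOn c T.edgeSet := by
  refine ⟨(lexProd G H).singletonSubgraph x, Subgraph.singletonSubgraph_connected, by simp, ?_⟩
  rw [edgeSet_singletonSubgraph]
  exact Set.injOn_empty c

/-- Recipe for a pair in the same fiber. -/
lemma recipePairSame
    (hfib : ∀ (g : α) (a b : β), c s((g, a), (g, b)) = nG + cH s(a, b))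
    (hcHp : ∀ u v : β, ∃ p : H.Walk u v, p.IsPath ∧ (p.edges.map cH).Nodup)
    (x y : α × β) (h1 : x.1 = y.1) :
    ∃ T : (lexProd G H).Subgraph, T.Connected ∧ x ∈ T.verts ∧ y ∈ T.verts ∧
      Set.InjOn c T.edgeSet := by
  obtain ⟨U, hUc, hUa, hUb, _, hUinj⟩ := fiber_piece hfib hcHp x.1 x.2 y.2
  refine ⟨U, hUc, by simpa using hUa, ?_, hUinj⟩
  rw [h1] at hUb
  simpa using hUb

/-- Recipe for a pair in distinct fibers. -/
lemma recipePairDiff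
    (hc : ∀ (x y : α) (lx ly : β), G.Adj x y → P lx ly → c s((x, lx), (y, ly)) = Φ s(x, y))
    (hcGr : IsRainbowColoring3 G cG)
    (hΦc : ∀ e f : Sym2 α, e ∈ G.edgeSet → f ∈ G.edgeSet → Φ e = Φ f → cG e = cG f)
    (x z : α × β) (hxz : x.1 ≠ z.1)
    (l1 : ℕ → ℕ → β)
    (hl1 : ∀ m, 1 ≤ m → l1 m 0 = x.2 ∧ l1 m m = z.2 ∧
      ∀ i < m, P (l1 m i) (l1 m (i + 1))) :
    ∃ T : (lexProd G H).Subgraph, T.Connected ∧ x ∈ T.verts ∧ z ∈ T.verts ∧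
      Set.InjOn c T.edgeSet := by
  obtain ⟨TG, hTGc, hpx, hpz, _, hTGinj⟩ := tree_triple hcGr x.1 z.1 z.1
  obtain ⟨w1, hw1p, hw1e, _⟩ := exists_path_in_subgraph hTGc hpx hpz
  have hm1 : 1 ≤ w1.length := walk_length_pos w1 hxz
  obtain ⟨hl10, hl1m, hl1v⟩ := hl1 w1.length hm1
  obtain ⟨U1, hU1c, hU1s, hU1e, _, _, hU1inj⟩ :=
    lift_piece hc hTGinj hΦc w1 hw1p hw1e (l1 w1.length) hl1v
  refine ⟨U1, hU1c, ?_, ?_, hU1inj⟩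
  · rw [hl10] at hU1s; simpa using hU1s
  · rw [hl1m] at hU1e; simpa using hU1e

/-- Recipe for a triple with two vertices in one fiber and one in another. -/
lemma recipeB
    (hc : ∀ (x y : α) (lx ly : β), G.Adj x y → P lx ly → c s((x, lx), (y, ly)) = Φ s(x, y))
    (hfib : ∀ (g : α) (a b : β), c s((g, a), (g, b)) = nG + cH s(a, b))
    (hcHp : ∀ u v : β, ∃ p : H.Walk u v, p.IsPath ∧ (p.edges.map cH).Nodup)
    (hcGr : IsRainbowColoring3 G cG)
    (hΦc : ∀ e f : Sym2 α, e ∈ G.edgeSet → f ∈ G.edgeSet → Φ e = Φ f → cG e = cG f)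
    (hΦlt : ∀ e ∈ G.edgeSet, Φ e < nG)
    (x y z : α × β) (hxy1 : x.1 = y.1) (hxz : x.1 ≠ z.1)
    (l1 : ℕ → ℕ → β)
    (hl1 : ∀ m, 1 ≤ m → l1 m 0 = x.2 ∧ l1 m m = z.2 ∧
      ∀ i < m, P (l1 m i) (l1 m (i + 1))) :
    ∃ T : (lexProd G H).Subgraph, T.Connected ∧ x ∈ T.verts ∧ y ∈ T.verts ∧ z ∈ T.verts ∧
      Set.InjOn c T.edgeSet := by
  obtain ⟨TG, hTGc, hpx, hpz, _, hTGinj⟩ := tree_triple hcGr x.1 z.1 z.1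
  obtain ⟨w1, hw1p, hw1e, _⟩ := exists_path_in_subgraph hTGc hpx hpz
  have hm1 : 1 ≤ w1.length := walk_length_pos w1 hxz
  obtain ⟨hl10, hl1m, hl1v⟩ := hl1 w1.length hm1
  obtain ⟨U1, hU1c, hU1s, hU1e, _, hU1col, hU1inj⟩ :=
    lift_piece hc hTGinj hΦc w1 hw1p hw1e (l1 w1.length) hl1v
  obtain ⟨U3, hU3c, hU3a, hU3b, hU3ge, hU3inj⟩ := fiber_piece hfib hcHp x.1 y.2 x.2
  refine ⟨U1 ⊔ U3, ?_, ?_, ?_, ?_, ?_⟩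
  · apply hU1c.sup hU3c
    refine ⟨(x.1, x.2), ?_⟩
    rw [Subgraph.verts_inf]
    exact ⟨by rw [hl10] at hU1s; exact hU1s, hU3b⟩
  · rw [Subgraph.verts_sup]
    left; rw [hl10] at hU1s; simpa using hU1s
  · rw [Subgraph.verts_sup]
    right
    have : (x.1, y.2) = y := by rw [hxy1]
    rwa [this] at hU3a
  · rw [Subgraph.verts_sup]
    left; rw [hl1m] at hU1e; simpa using hU1e
  · rw [Subgraph.edgeSet_sup]
    refine injOn_union hU1inj hU3inj ?_
    intro e1 he1 e3 he3
    obtain ⟨f, hf, hcf⟩ := hU1col e1 he1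
    have := hΦlt f (w1.edges_subset_edgeSet hf)
    have := hU3ge e3 he3
    omega

/-- Recipe for a triple with three distinct fibers. -/
lemma recipeA
    (hc : ∀ (x y : α) (lx ly : β), G.Adj x y → P lx ly → c s((x, lx), (y, ly)) = Φ s(x, y))
    (hfib : ∀ (g : α) (a b : β), c s((g, a), (g, b)) = nG + cH s(a, b))
    (hcHp : ∀ u v : β, ∃ p : H.Walk u v, p.IsPath ∧ (p.edges.map cH).Nodup)
    (hcGr : IsRainbowColoring3 G cG)
    (hΦc : ∀ e f : Sym2 α, e ∈ G.edgeSet → f ∈ G.edgeSet → Φ e = Φ f → cG e = cG f)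
    (hΦlt : ∀ e ∈ G.edgeSet, Φ e < nG)
    (x y z : α × β) (hxy : x.1 ≠ y.1) (hxz : x.1 ≠ z.1) (hyz : y.1 ≠ z.1)
    (l1 : ℕ → ℕ → β)
    (hl1 : ∀ m, 1 ≤ m → l1 m 0 = x.2 ∧ l1 m m = y.2 ∧
      ∀ i < m, P (l1 m i) (l1 m (i + 1)))
    (l2 : ℕ → β) (hl20 : l2 0 = z.2) (hl2v : ∀ i, P (l2 i) (l2 (i + 1))) :
    ∃ T : (lexProd G H).Subgraph, T.Connected ∧ x ∈ T.verts ∧ y ∈ T.verts ∧ z ∈ T.verts ∧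
      Set.InjOn c T.edgeSet := by
  classical
  obtain ⟨TG, hTGc, hpx, hpy, hpz, hTGinj⟩ := tree_triple hcGr x.1 y.1 z.1
  obtain ⟨w1, hw1p, hw1e, _⟩ := exists_path_in_subgraph hTGc hpx hpy
  have hm1 : 1 ≤ w1.length := walk_length_pos w1 hxy
  obtain ⟨hl10, hl1m, hl1v⟩ := hl1 w1.length hm1
  obtain ⟨U1, hU1c, hU1s, hU1e, hU1j, hU1col, hU1inj⟩ :=
    lift_piece hc hTGinj hΦc w1 hw1p hw1e (l1 w1.length) hl1v
  obtain ⟨wz, hwzp, hwze, _⟩ := exists_path_in_subgraph hTGc hpz hpy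
  obtain ⟨c0, w', hc0, hw'p, hw'edges, _, hw'late⟩ :=
    exists_prefix_until {t | t ∈ w1.support} wz hwzp (by simp)
  have hc0' : c0 ∈ w1.support := hc0
  obtain ⟨j, hjv, hjle⟩ := Walk.mem_support_iff_exists_getVert.mp hc0'
  obtain ⟨U2, hU2c, hU2s, hU2e, _, hU2col, hU2inj⟩ :=
    lift_piece hc hTGinj hΦc w' hw'p (fun e he => hwze e (hw'edges e he)) l2
      (fun i _ => hl2v i)
  obtain ⟨U3, hU3c, hU3s, hU3e, hU3ge, hU3inj⟩ :=
    fiber_piece hfib hcHp c0 (l2 w'.length) (l1 w1.length j)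
  have hedge_disj : ∀ f ∈ w'.edges, f ∉ w1.edges := prefix_edge_disjoint w' w1 hw'late
  refine ⟨(U1 ⊔ U3) ⊔ U2, ?_, ?_, ?_, ?_, ?_⟩
  · refine Subgraph.Connected.sup ?_ hU2c ?_
    · refine Subgraph.Connected.sup hU1c hU3c ?_
      refine ⟨(c0, l1 w1.length j), ?_⟩
      rw [Subgraph.verts_inf]
      exact ⟨hjv ▸ hU1j j hjle, hU3e⟩
    · refine ⟨(c0, l2 w'.length), ?_⟩
      rw [Subgraph.verts_inf, Subgraph.verts_sup]
      exact ⟨Or.inr hU3s, hU2e⟩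
  · rw [Subgraph.verts_sup, Subgraph.verts_sup]
    left; left; rw [hl10] at hU1s; simpa using hU1s
  · rw [Subgraph.verts_sup, Subgraph.verts_sup]
    left; left; rw [hl1m] at hU1e; simpa using hU1e
  · rw [Subgraph.verts_sup]
    right; rw [hl20] at hU2s; simpa using hU2s
  · rw [Subgraph.edgeSet_sup, Subgraph.edgeSet_sup]
    refine injOn_union (injOn_union hU1inj hU3inj ?_) hU2inj ?_
    · intro e1 he1 e3 he3
      obtain ⟨f, hf, hcf⟩ := hU1col e1 he1
      have := hΦlt f (w1.edges_subset_edgeSet hf)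
      have := hU3ge e3 he3
      omega
    · rintro e (he1 | he3) e2 he2
      · obtain ⟨f1, hf1, hcf1⟩ := hU1col e he1
        obtain ⟨f2, hf2, hcf2⟩ := hU2col e2 he2
        intro hcc
        have hΦeq : Φ f1 = Φ f2 := by rw [← hcf1, ← hcf2, hcc]
        have hGf1 : f1 ∈ G.edgeSet := w1.edges_subset_edgeSet hf1
        have hGf2 : f2 ∈ G.edgeSet := w'.edges_subset_edgeSet hf2
        have hceq := hΦc f1 f2 hGf1 hGf2 hΦeq
        have hfeq : f1 = f2 := hTGinj (hw1e f1 hf1)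
          (hwze f2 (hw'edges f2 hf2)) hceq
        exact hedge_disj f2 hf2 (hfeq ▸ hf1)
      · obtain ⟨f2, hf2, hcf2⟩ := hU2col e2 he2
        have := hΦlt f2 (w'.edges_subset_edgeSet hf2)
        have := hU3ge e he3
        omega

/-- Recipe for a triple inside one fiber (case `nG ≥ 2`). -/
lemma recipeC
    (hG : G.Connected) (hα : 2 ≤ Fintype.card α)
    (hfib : ∀ (g : α) (a b : β), c s((g, a), (g, b)) = nG + cH s(a, b))
    (hcHp : ∀ u v : β, ∃ p : H.Walk u v, p.IsPath ∧ (p.edges.map cH).Nodup)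
    (hsame : ∀ (g g' : α) (a : β), g ≠ g' → c s((g, a), (g', a)) = cG s(g, g'))
    (hdiff : ∀ (g g' : α) (a b : β), g ≠ g' → a ≠ b →
      c s((g, a), (g', b)) = (cG s(g, g') + 1) % nG)
    (hcGb : ∀ e ∈ G.edgeSet, cG e < nG) (hnG2 : 2 ≤ nG)
    (g : α) (a b d : β) (hda : d ≠ a) :
    ∃ T : (lexProd G H).Subgraph, T.Connected ∧ (g, a) ∈ T.verts ∧ (g, b) ∈ T.verts ∧
      (g, d) ∈ T.verts ∧ Set.InjOn c T.edgeSet := by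
  obtain ⟨g', hadj⟩ := connected_exists_adj hG hα g
  obtain ⟨U1, hU1c, hU1a, hU1b, hU1ge, hU1inj⟩ := fiber_piece hfib hcHp g a b
  have hE1 : (lexProd G H).Adj (g, d) (g', d) := Or.inl hadj
  have hE2 : (lexProd G H).Adj (g', d) (g, a) := Or.inl hadj.symm
  have hcE1 : c s((g, d), (g', d)) = cG s(g, g') := hsame g g' d hadj.ne
  have hcE2 : c s((g', d), (g, a)) = (cG s(g, g') + 1) % nG := by
    rw [hdiff g' g d a hadj.ne' hda, Sym2.eq_swap]
  have hgG : s(g, g') ∈ G.edgeSet := hadj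
  have hblt := hcGb _ hgG
  refine ⟨(U1 ⊔ (lexProd G H).subgraphOfAdj hE2) ⊔ (lexProd G H).subgraphOfAdj hE1,
    ?_, ?_, ?_, ?_, ?_⟩
  · refine Subgraph.Connected.sup ?_ (Subgraph.subgraphOfAdj_connected hE1) ?_
    · refine Subgraph.Connected.sup hU1c (Subgraph.subgraphOfAdj_connected hE2) ?_
      exact ⟨(g, a), by rw [Subgraph.verts_inf]; exact ⟨hU1a, by simp⟩⟩
    · exact ⟨(g', d), by rw [Subgraph.verts_inf, Subgraph.verts_sup]; exact ⟨Or.inr (by simp), by simp⟩⟩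
  · rw [Subgraph.verts_sup, Subgraph.verts_sup]; left; left; exact hU1a
  · rw [Subgraph.verts_sup, Subgraph.verts_sup]; left; left; exact hU1b
  · rw [Subgraph.verts_sup]; right; simp
  · rw [Subgraph.edgeSet_sup, Subgraph.edgeSet_sup, edgeSet_subgraphOfAdj,
      edgeSet_subgraphOfAdj]
    refine injOn_union (injOn_union hU1inj (Set.injOn_singleton _ _) ?_) (Set.injOn_singleton _ _) ?_
    · intro e1 he1 e2 he2
      rw [Set.mem_singleton_iff] at he2
      subst he2
      have := hU1ge e1 he1
      rw [hcE2]
      have := succ_mod_lt (n := nG) (a := cG s(g, g')) (by omega)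
      omega
    · rintro e (he1 | he2) e3 he3
      · rw [Set.mem_singleton_iff] at he3
        subst he3
        have := hU1ge e he1
        rw [hcE1]
        omega
      · rw [Set.mem_singleton_iff] at he2 he3
        subst he2; subst he3
        rw [hcE1, hcE2]
        exact succ_mod_ne hnG2 hblt
    
end Recipes

section CaseIII

open Rx3Aux

variable {α β : Type*} [Fintype α] [Fintype β] {G : SimpleGraph α} {H : SimpleGraph β}
variable {nG nH : ℕ} {cG : Sym2 α → ℕ} {cH : Sym2 β → ℕ} {c : Sym2 (α × β) → ℕ}

lemma parityPat_valid {β' : Type*} [DecidableEq β'] {d u2 : β'} (hud : u2 ≠ d) :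
    ∀ i : ℕ, (if i % 2 = 0 then d else u2) ≠ (if (i + 1) % 2 = 0 then d else u2) := by
  intro i
  by_cases hp : i % 2 = 0
  · rw [if_pos hp, if_neg (by omega)]
    exact Ne.symm hud
  · rw [if_neg hp, if_pos (by omega)]
    exact hud

/-- Case-B dispatcher for case III. -/
lemma dispatchB_III [DecidableEq β]
    (hG : G.Connected) (hβ : 3 ≤ Fintype.card β) (hnG2 : 2 ≤ nG)
    (hcGb : ∀ e ∈ G.edgeSet, cG e < nG) (hcGr : IsRainbowColoring3 G cG)
    (hcHp : ∀ u v : β, ∃ p : H.Walk u v, p.IsPath ∧ (p.edges.map cH).Nodup)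
    (hfib : ∀ (g : α) (a b : β), c s((g, a), (g, b)) = nG + cH s(a, b))
    (hsame : ∀ (g g' : α) (a : β), g ≠ g' → c s((g, a), (g', a)) = cG s(g, g'))
    (hdiff : ∀ (g g' : α) (a b : β), g ≠ g' → a ≠ b →
      c s((g, a), (g', b)) = (cG s(g, g') + 1) % nG)
    (x y z : α × β) (h1 : x.1 = y.1) (h2 : x.1 ≠ z.1) :
    ∃ T : (lexProd G H).Subgraph, T.Connected ∧ x ∈ T.verts ∧ y ∈ T.verts ∧ z ∈ T.verts ∧
      Set.InjOn c T.edgeSet := by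
  classical
  have hcNe : ∀ (p q : α) (lx ly : β), G.Adj p q → lx ≠ ly →
      c s((p, lx), (q, ly)) = (cG s(p, q) + 1) % nG :=
    fun p q lx ly ha hl => hdiff p q lx ly ha.ne hl
  have hcEq : ∀ (p q : α) (lx ly : β), G.Adj p q → lx = ly →
      c s((p, lx), (q, ly)) = cG s(p, q) :=
    fun p q lx ly ha hl => by subst hl; exact hsame p q lx ha.ne
  have hΦcNe : ∀ e f : Sym2 α, e ∈ G.edgeSet → f ∈ G.edgeSet →
      (cG e + 1) % nG = (cG f + 1) % nG → cG e = cG f :=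
    fun e f he hf hh => succ_mod_inj (hcGb e he) (hcGb f hf) hh
  have hΦltNe : ∀ e ∈ G.edgeSet, (cG e + 1) % nG < nG :=
    fun e _ => succ_mod_lt (by omega)
  by_cases hxz2 : x.2 ≠ z.2
  · obtain ⟨u, hu1, hu2⟩ := exists_third hβ x.2 z.2
    obtain ⟨w, hw1, hw2⟩ := exists_third hβ x.2 u
    exact recipeB hcNe hfib hcHp hcGr hΦcNe hΦltNe x y z h1 h2
      (fun m => lvlPat m x.2 z.2 u w)
      (fun m hm => ⟨lvlPat_zero _ _ _ _ _, lvlPat_last hm _ _ _ _,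
        lvlPat_valid hm (fun hx => hxz2 hx.2) hu1 hu2 hw1 hw2⟩)
  · push_neg at hxz2
    by_cases hyz2 : y.2 ≠ z.2
    · obtain ⟨u, hu1, hu2⟩ := exists_third hβ y.2 z.2
      obtain ⟨w, hw1, hw2⟩ := exists_third hβ y.2 u
      obtain ⟨T, hT, hy, hx, hz, hinj⟩ := recipeB hcNe hfib hcHp hcGr hΦcNe hΦltNe y x z
        h1.symm (h1 ▸ h2)
        (fun m => lvlPat m y.2 z.2 u w)
        (fun m hm => ⟨lvlPat_zero _ _ _ _ _, lvlPat_last hm _ _ _ _,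
          lvlPat_valid hm (fun hx => hyz2 hx.2) hu1 hu2 hw1 hw2⟩)
      exact ⟨T, hT, hx, hy, hz, hinj⟩
    · push_neg at hyz2
      -- x.2 = z.2 and y.2 = z.2, so x = y
      have hxy : x = y := Prod.ext h1 (hxz2.trans hyz2.symm)
      obtain ⟨T, hT, hx, hz, hinj⟩ := recipePairDiff hcEq hcGr (fun _ _ _ _ => id) x z h2
        (fun m i => x.2)
        (fun m hm => ⟨rfl, hxz2, fun i _ => rfl⟩)
      exact ⟨T, hT, hx, hxy ▸ hx, hz, hinj⟩

/-- Main triple lemma for case III. -/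
lemma tripleIII [DecidableEq β]
    (hG : G.Connected) (hα : 2 ≤ Fintype.card α) (hβ : 3 ≤ Fintype.card β) (hnG2 : 2 ≤ nG)
    (hcGb : ∀ e ∈ G.edgeSet, cG e < nG) (hcGr : IsRainbowColoring3 G cG)
    (hcHp : ∀ u v : β, ∃ p : H.Walk u v, p.IsPath ∧ (p.edges.map cH).Nodup)
    (hfib : ∀ (g : α) (a b : β), c s((g, a), (g, b)) = nG + cH s(a, b))
    (hsame : ∀ (g g' : α) (a : β), g ≠ g' → c s((g, a), (g', a)) = cG s(g, g'))
    (hdiff : ∀ (g g' : α) (a b : β), g ≠ g' → a ≠ b →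
      c s((g, a), (g', b)) = (cG s(g, g') + 1) % nG)
    (x y z : α × β) :
    ∃ T : (lexProd G H).Subgraph, T.Connected ∧ x ∈ T.verts ∧ y ∈ T.verts ∧ z ∈ T.verts ∧
      Set.InjOn c T.edgeSet := by
  classical
  have hcNe : ∀ (p q : α) (lx ly : β), G.Adj p q → lx ≠ ly →
      c s((p, lx), (q, ly)) = (cG s(p, q) + 1) % nG :=
    fun p q lx ly ha hl => hdiff p q lx ly ha.ne hl
  have hcEq : ∀ (p q : α) (lx ly : β), G.Adj p q → lx = ly →
      c s((p, lx), (q, ly)) = cG s(p, q) :=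
    fun p q lx ly ha hl => by subst hl; exact hsame p q lx ha.ne
  have hΦcNe : ∀ e f : Sym2 α, e ∈ G.edgeSet → f ∈ G.edgeSet →
      (cG e + 1) % nG = (cG f + 1) % nG → cG e = cG f :=
    fun e f he hf hh => succ_mod_inj (hcGb e he) (hcGb f hf) hh
  have hΦltNe : ∀ e ∈ G.edgeSet, (cG e + 1) % nG < nG :=
    fun e _ => succ_mod_lt (by omega)
  by_cases h1 : x.1 = y.1
  · by_cases h2 : x.1 = z.1
    · -- all in one fiber
      by_cases hz2 : z.2 ≠ x.2
      · obtain ⟨T, hT, ha, hb, hd, hinj⟩ := recipeC hG hα hfib hcHp hsame hdiff hcGb hnG2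
          x.1 x.2 y.2 z.2 hz2
        refine ⟨T, hT, by simpa using ha, ?_, ?_, hinj⟩
        · rw [h1] at hb; simpa using hb
        · rw [h2] at hd; simpa using hd
      · push_neg at hz2
        have hzx : z = x := Prod.ext h2.symm hz2
        obtain ⟨T, hT, hx, hy, hinj⟩ := recipePairSame hfib hcHp x y h1
        exact ⟨T, hT, hx, hy, hzx ▸ hx, hinj⟩
    · exact dispatchB_III hG hβ hnG2 hcGb hcGr hcHp hfib hsame hdiff x y z h1 h2
  · by_cases h2 : x.1 = z.1
    · obtain ⟨T, hT, hx, hz, hy, hinj⟩ :=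
        dispatchB_III hG hβ hnG2 hcGb hcGr hcHp hfib hsame hdiff x z y h2
          (fun hh => h1 hh)
      exact ⟨T, hT, hx, hy, hz, hinj⟩
    · by_cases h3 : y.1 = z.1
      · obtain ⟨T, hT, hy, hz, hx, hinj⟩ :=
          dispatchB_III hG hβ hnG2 hcGb hcGr hcHp hfib hsame hdiff y z x h3
            (fun hh => h1 hh.symm)
        exact ⟨T, hT, hx, hy, hz, hinj⟩
      · -- three distinct fibers
        by_cases hxy2 : x.2 ≠ y.2
        · obtain ⟨u, hu1, hu2⟩ := exists_third hβ x.2 y.2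
          obtain ⟨w, hw1, hw2⟩ := exists_third hβ x.2 u
          obtain ⟨u2, hu21⟩ := Fintype.exists_ne_of_one_lt_card (by omega) z.2
          exact recipeA hcNe hfib hcHp hcGr hΦcNe hΦltNe x y z h1 h2 h3
            (fun m => lvlPat m x.2 y.2 u w)
            (fun m hm => ⟨lvlPat_zero _ _ _ _ _, lvlPat_last hm _ _ _ _,
              lvlPat_valid hm (fun hx => hxy2 hx.2) hu1 hu2 hw1 hw2⟩)
            (fun i => if i % 2 = 0 then z.2 else u2)
            (by simp)
            (parityPat_valid hu21)
        · push_neg at hxy2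
          by_cases hxz2 : x.2 ≠ z.2
          · obtain ⟨u, hu1, hu2⟩ := exists_third hβ x.2 z.2
            obtain ⟨w, hw1, hw2⟩ := exists_third hβ x.2 u
            obtain ⟨u2, hu21⟩ := Fintype.exists_ne_of_one_lt_card (by omega) y.2
            obtain ⟨T, hT, hx, hz, hy, hinj⟩ := recipeA hcNe hfib hcHp hcGr hΦcNe hΦltNe
              x z y h2 h1 (fun hh => h3 hh.symm)
              (fun m => lvlPat m x.2 z.2 u w)
              (fun m hm => ⟨lvlPat_zero _ _ _ _ _, lvlPat_last hm _ _ _ _,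
                lvlPat_valid hm (fun hx => hxz2 hx.2) hu1 hu2 hw1 hw2⟩)
              (fun i => if i % 2 = 0 then y.2 else u2)
              (by simp)
              (parityPat_valid hu21)
            exact ⟨T, hT, hx, hy, hz, hinj⟩
          · push_neg at hxz2
            -- all levels equal
            exact recipeA hcEq hfib hcHp hcGr (fun _ _ _ _ => id) hcGb x y z h1 h2 h3
              (fun m i => x.2)
              (fun m hm => ⟨rfl, hxy2, fun i _ => rfl⟩)
              (fun i => x.2)
              hxz2
              (fun i => rfl)

end CaseIII

section Colorings

open Rx3Aux

variable {α β : Type*} [Fintype α] [Fintype β] {G : SimpleGraph α} {H : SimpleGraph β}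
variable {nG nH : ℕ}

/-- The coloring for case III. -/
noncomputable def colIII [DecidableEq α] [DecidableEq β]
    (cG : Sym2 α → ℕ) (cH : Sym2 β → ℕ) (nG : ℕ) : Sym2 (α × β) → ℕ :=
  Sym2.lift ⟨fun u v =>
    if u.1 = v.1 then nG + cH s(u.2, v.2)
    else if u.2 = v.2 then cG s(u.1, v.1)
    else (cG s(u.1, v.1) + 1) % nG, by
    intro u v
    dsimp only
    by_cases h1 : u.1 = v.1
    · rw [if_pos h1, if_pos h1.symm, Sym2.eq_swap]
    · rw [if_neg h1, if_neg (Ne.symm h1)]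
      by_cases h2 : u.2 = v.2
      · rw [if_pos h2, if_pos h2.symm, Sym2.eq_swap]
      · rw [if_neg h2, if_neg (Ne.symm h2), Sym2.eq_swap]⟩

variable [DecidableEq α] [DecidableEq β] {cG : Sym2 α → ℕ} {cH : Sym2 β → ℕ}

lemma colIII_eval_fib (u v : α × β) (h : u.1 = v.1) :
    colIII cG cH nG s(u, v) = nG + cH s(u.2, v.2) := by
  simp only [colIII, Sym2.lift_mk]
  rw [if_pos h]

lemma colIII_eval_same (u v : α × β) (h1 : u.1 ≠ v.1) (h2 : u.2 = v.2) :
    colIII cG cH nG s(u, v) = cG s(u.1, v.1) := by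
  simp only [colIII, Sym2.lift_mk]
  rw [if_neg h1, if_pos h2]

lemma colIII_eval_diff (u v : α × β) (h1 : u.1 ≠ v.1) (h2 : u.2 ≠ v.2) :
    colIII cG cH nG s(u, v) = (cG s(u.1, v.1) + 1) % nG := by
  simp only [colIII, Sym2.lift_mk]
  rw [if_neg h1, if_neg h2]

lemma colIII_bound (hcGb : ∀ e ∈ G.edgeSet, cG e < nG) (hcHb : ∀ e ∈ H.edgeSet, cH e < nH)
    (hnG1 : 1 ≤ nG) (hnH1 : 1 ≤ nH) :
    ∀ e ∈ (lexProd G H).edgeSet, colIII cG cH nG e < nG + nH := by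
  intro e he
  induction e with
  | _ u v =>
    have hadj : (lexProd G H).Adj u v := he
    rcases hadj with hg | ⟨h1, hh⟩
    · by_cases h2 : u.2 = v.2
      · rw [colIII_eval_same u v hg.ne h2]
        have := hcGb s(u.1, v.1) hg
        omega
      · rw [colIII_eval_diff u v hg.ne h2]
        have := succ_mod_lt (n := nG) (a := cG s(u.1, v.1)) hnG1
        omega
    · rw [colIII_eval_fib u v h1]
      have := hcHb s(u.2, v.2) hh
      omega

/-- The coloring for case II. -/
noncomputable def colII (cG : Sym2 α → ℕ) (cH : Sym2 β → ℕ) (nG : ℕ) :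
    Sym2 (α × β) → ℕ :=
  Sym2.lift ⟨fun u v =>
    if u.1 = v.1 then nG + cH s(u.2, v.2) else cG s(u.1, v.1), by
    intro u v
    dsimp only
    by_cases h1 : u.1 = v.1
    · rw [if_pos h1, if_pos h1.symm, Sym2.eq_swap]
    · rw [if_neg h1, if_neg (Ne.symm h1), Sym2.eq_swap]⟩

lemma colII_eval_fib (u v : α × β) (h : u.1 = v.1) :
    colII cG cH nG s(u, v) = nG + cH s(u.2, v.2) := by
  simp only [colII, Sym2.lift_mk]
  rw [if_pos h]

lemma colII_eval_cross (u v : α × β) (h : u.1 ≠ v.1) :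
    colII cG cH nG s(u, v) = cG s(u.1, v.1) := by
  simp only [colII, Sym2.lift_mk]
  rw [if_neg h]

lemma colII_bound (hcGb : ∀ e ∈ G.edgeSet, cG e < nG) (hcHb : ∀ e ∈ H.edgeSet, cH e < nH)
    (hnH1 : 1 ≤ nH) :
    ∀ e ∈ (lexProd G H).edgeSet, colII cG cH nG e < nG + nH := by
  intro e he
  induction e with
  | _ u v =>
    have hadj : (lexProd G H).Adj u v := he
    rcases hadj with hg | ⟨h1, hh⟩
    · rw [colII_eval_cross u v hg.ne]
      have := hcGb s(u.1, v.1) hg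
      omega
    · rw [colII_eval_fib u v h1]
      have := hcHb s(u.2, v.2) hh
      omega

lemma rainbow_of_triples {c : Sym2 (α × β) → ℕ} (hN : Nonempty (α × β))
    (htrip : ∀ x y z : α × β, ∃ T : (lexProd G H).Subgraph, T.Connected ∧ x ∈ T.verts ∧
      y ∈ T.verts ∧ z ∈ T.verts ∧ Set.InjOn c T.edgeSet) :
    IsRainbowColoring3 (lexProd G H) c := by
  intro S hS
  obtain ⟨x, y, z, hsub⟩ := subset_three hS hN.some
  obtain ⟨T, h1, h2, h3, h4, h5⟩ := htrip x y z
  refine ⟨T, h1, fun t ht => ?_, h5⟩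
  have h := hsub ht
  simp only [Set.mem_insert_iff, Set.mem_singleton_iff] at h
  rcases h with rfl | rfl | rfl <;> assumption

/-- Main triple lemma for case II. -/
lemma tripleII {c : Sym2 (α × β) → ℕ}
    (hG : G.Connected) (hβ2 : Fintype.card β = 2)
    (hcGb : ∀ e ∈ G.edgeSet, cG e < nG) (hcGr : IsRainbowColoring3 G cG)
    (hcHp : ∀ u v : β, ∃ p : H.Walk u v, p.IsPath ∧ (p.edges.map cH).Nodup)
    (hfib : ∀ (g : α) (a b : β), c s((g, a), (g, b)) = nG + cH s(a, b))
    (hcross : ∀ (g g' : α) (a b : β), g ≠ g' → c s((g, a), (g', b)) = cG s(g, g'))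
    (x y z : α × β) :
    ∃ T : (lexProd G H).Subgraph, T.Connected ∧ x ∈ T.verts ∧ y ∈ T.verts ∧ z ∈ T.verts ∧
      Set.InjOn c T.edgeSet := by
  classical
  have hcT : ∀ (p q : α) (lx ly : β), G.Adj p q → (fun _ _ : β => True) lx ly →
      c s((p, lx), (q, ly)) = cG s(p, q) :=
    fun p q lx ly ha _ => hcross p q lx ly ha.ne
  have hΦc : ∀ e f : Sym2 α, e ∈ G.edgeSet → f ∈ G.edgeSet → cG e = cG f → cG e = cG f :=
    fun _ _ _ _ => id
  have pat : ∀ (a b : β), ∀ m, 1 ≤ m →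
      (fun i => if i = 0 then a else b) 0 = a ∧
      (fun i => if i = 0 then a else b) m = b ∧
      ∀ i < m, (fun _ _ : β => True) ((fun i => if i = 0 then a else b) i)
        ((fun i => if i = 0 then a else b) (i + 1)) :=
    fun a b m hm => ⟨by simp, by simp only []; rw [if_neg (by omega : ¬ m = 0)], fun _ _ => trivial⟩
  by_cases h1 : x.1 = y.1
  · by_cases h2 : x.1 = z.1
    · -- all in one fiber; at most two distinct levels since |β| = 2
      by_cases hzx : z.2 = x.2
      · have hzx' : z = x := Prod.ext h2.symm hzx
        obtain ⟨T, hT, hx, hy, hinj⟩ := recipePairSame hfib hcHp x y h1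
        exact ⟨T, hT, hx, hy, hzx' ▸ hx, hinj⟩
      · by_cases hzy : z.2 = y.2
        · have hzy' : z = y := Prod.ext (h2.symm.trans h1) hzy
          obtain ⟨T, hT, hx, hy, hinj⟩ := recipePairSame hfib hcHp x y h1
          exact ⟨T, hT, hx, hy, hzy' ▸ hy, hinj⟩
        · by_cases hxy : x.2 = y.2
          · have hxy' : y = x := Prod.ext h1.symm hxy.symm
            obtain ⟨T, hT, hx, hz, hinj⟩ := recipePairSame hfib hcHp x z h2
            exact ⟨T, hT, hx, hxy' ▸ hx, hz, hinj⟩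
          · exfalso
            have h3 : ({x.2, y.2, z.2} : Finset β).card = 3 := by
              rw [Finset.card_insert_of_notMem (by simp [hxy, Ne.symm hzx]),
                Finset.card_insert_of_notMem (by simp [Ne.symm hzy]),
                Finset.card_singleton]
            have hle := Finset.card_le_univ ({x.2, y.2, z.2} : Finset β)
            rw [h3] at hle
            omega
    · exact recipeB hcT hfib hcHp hcGr hΦc hcGb x y z h1 h2
        (fun m i => if i = 0 then x.2 else z.2) (pat x.2 z.2)
  · by_cases h2 : x.1 = z.1
    · obtain ⟨T, hT, hx, hz, hy, hinj⟩ := recipeB hcT hfib hcHp hcGr hΦc hcGb x z y h2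
        (fun hh => h1 hh) (fun m i => if i = 0 then x.2 else y.2) (pat x.2 y.2)
      exact ⟨T, hT, hx, hy, hz, hinj⟩
    · by_cases h3 : y.1 = z.1
      · obtain ⟨T, hT, hy, hz, hx, hinj⟩ := recipeB hcT hfib hcHp hcGr hΦc hcGb y z x h3
          (fun hh => h1 hh.symm) (fun m i => if i = 0 then y.2 else x.2) (pat y.2 x.2)
        exact ⟨T, hT, hx, hy, hz, hinj⟩
      · exact recipeA hcT hfib hcHp hcGr hΦc hcGb x y z h1 h2 h3
          (fun m i => if i = 0 then x.2 else y.2) (pat x.2 y.2)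
          (fun _ => z.2) rfl (fun _ => trivial)

end Colorings

section CaseI

open Rx3Aux

variable {α β : Type*} [Fintype α] [Fintype β] {G : SimpleGraph α} {H : SimpleGraph β}

/-- The coloring for case I (`|α| = 2`). -/
noncomputable def colI [DecidableEq α] [DecidableEq β] (g0 : α) (rk : β → ℕ)
    (hrk : Function.Injective rk) : Sym2 (α × β) → ℕ :=
  Sym2.lift ⟨fun u v =>
    if u.1 = v.1 then 0
    else if u.2 = v.2 then 0
    else if (if rk u.2 < rk v.2 then u.1 else v.1) = g0 then 1 else 2, by
    intro u v
    dsimp only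
    by_cases h1 : u.1 = v.1
    · rw [if_pos h1, if_pos h1.symm]
    · rw [if_neg h1, if_neg (Ne.symm h1)]
      by_cases h2 : u.2 = v.2
      · rw [if_pos h2, if_pos h2.symm]
      · rw [if_neg h2, if_neg (Ne.symm h2)]
        have hne : rk u.2 ≠ rk v.2 := fun hh => h2 (hrk hh)
        have hsel : (if rk u.2 < rk v.2 then u.1 else v.1) =
            (if rk v.2 < rk u.2 then v.1 else u.1) := by
          rcases lt_or_gt_of_ne hne with hlt | hgt
          · rw [if_pos hlt, if_neg (by omega)]
          · rw [if_neg (by omega : ¬ rk u.2 < rk v.2), if_pos hgt]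
        rw [hsel]⟩

variable [DecidableEq α] [DecidableEq β] {g0 g1 : α} {rk : β → ℕ}
    {hrk : Function.Injective rk}

lemma colI_zero (u v : α × β) (h : u.1 = v.1 ∨ u.2 = v.2) :
    colI g0 rk hrk s(u, v) = 0 := by
  simp only [colI, Sym2.lift_mk]
  rcases h with h | h
  · rw [if_pos h]
  · by_cases h1 : u.1 = v.1
    · rw [if_pos h1]
    · rw [if_neg h1, if_pos h]

lemma colI_cross (u v : α × β) (h1 : u.1 ≠ v.1) (h2 : rk u.2 < rk v.2) :
    colI g0 rk hrk s(u, v) = if u.1 = g0 then 1 else 2 := by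
  simp only [colI, Sym2.lift_mk]
  rw [if_neg h1, if_neg (fun hh : u.2 = v.2 => by rw [hh] at h2; omega), if_pos h2]

lemma colI_bound3 (e : Sym2 (α × β)) : colI g0 rk hrk e < 3 := by
  induction e with
  | _ u v =>
    simp only [colI, Sym2.lift_mk]
    split
    · omega
    · split
      · omega
      · split <;> split <;> omega

lemma valNe (hg01 : g0 ≠ g1) (huniv : ∀ g : α, g = g0 ∨ g = g1) {g g' : α} (h : g ≠ g') :
    (if g = g0 then (1 : ℕ) else 2) ≠ (if g' = g0 then (1 : ℕ) else 2) := by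
  rcases huniv g with rfl | rfl <;> rcases huniv g' with rfl | rfl
  · exact absurd rfl h
  · rw [if_pos rfl, if_neg (Ne.symm hg01)]; omega
  · rw [if_neg (Ne.symm hg01), if_pos rfl]; omega
  · exact absurd rfl h

lemma valPos (g : α) : 0 < if g = g0 then (1 : ℕ) else 2 := by split <;> omega

section Trees

variable {c : Sym2 (α × β) → ℕ}

lemma treeOne {u v : α × β} (h : (lexProd G H).Adj u v) :
    ∃ T : (lexProd G H).Subgraph, T.Connected ∧ u ∈ T.verts ∧ v ∈ T.verts ∧
      Set.InjOn c T.edgeSet := by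
  refine ⟨(lexProd G H).subgraphOfAdj h, Subgraph.subgraphOfAdj_connected h, by simp, by simp, ?_⟩
  rw [edgeSet_subgraphOfAdj]
  exact Set.injOn_singleton _ _

lemma treeTwo {u v w : α × β} (h1 : (lexProd G H).Adj u v) (h2 : (lexProd G H).Adj v w)
    (hc : c s(u, v) ≠ c s(v, w)) :
    ∃ T : (lexProd G H).Subgraph, T.Connected ∧ u ∈ T.verts ∧ v ∈ T.verts ∧ w ∈ T.verts ∧
      Set.InjOn c T.edgeSet := by
  refine ⟨(lexProd G H).subgraphOfAdj h1 ⊔ (lexProd G H).subgraphOfAdj h2, ?_, ?_, ?_, ?_, ?_⟩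
  · refine Subgraph.Connected.sup (Subgraph.subgraphOfAdj_connected h1)
      (Subgraph.subgraphOfAdj_connected h2) ⟨v, ?_⟩
    rw [Subgraph.verts_inf]
    constructor <;> simp
  · rw [Subgraph.verts_sup]; left; simp
  · rw [Subgraph.verts_sup]; left; simp
  · rw [Subgraph.verts_sup]; right; simp
  · rw [Subgraph.edgeSet_sup, edgeSet_subgraphOfAdj, edgeSet_subgraphOfAdj]
    refine injOn_union (Set.injOn_singleton _ _) (Set.injOn_singleton _ _) ?_
    rintro e1 rfl e2 rfl
    exact hc

lemma treeStar3 {u v w t : α × β} (h1 : (lexProd G H).Adj u v) (h2 : (lexProd G H).Adj v w)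
    (h3 : (lexProd G H).Adj v t)
    (hc1 : c s(u, v) ≠ c s(v, w)) (hc2 : c s(u, v) ≠ c s(v, t)) (hc3 : c s(v, w) ≠ c s(v, t)) :
    ∃ T : (lexProd G H).Subgraph, T.Connected ∧ u ∈ T.verts ∧ v ∈ T.verts ∧ w ∈ T.verts ∧
      t ∈ T.verts ∧ Set.InjOn c T.edgeSet := by
  refine ⟨((lexProd G H).subgraphOfAdj h1 ⊔ (lexProd G H).subgraphOfAdj h2) ⊔
    (lexProd G H).subgraphOfAdj h3, ?_, ?_, ?_, ?_, ?_, ?_⟩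
  · refine Subgraph.Connected.sup ?_ (Subgraph.subgraphOfAdj_connected h3) ⟨v, ?_⟩
    · refine Subgraph.Connected.sup (Subgraph.subgraphOfAdj_connected h1)
        (Subgraph.subgraphOfAdj_connected h2) ⟨v, ?_⟩
      rw [Subgraph.verts_inf]
      constructor <;> simp
    · rw [Subgraph.verts_inf, Subgraph.verts_sup]
      exact ⟨Or.inl (by simp), by simp⟩
  · rw [Subgraph.verts_sup, Subgraph.verts_sup]; left; left; simp
  · rw [Subgraph.verts_sup, Subgraph.verts_sup]; left; left; simp
  · rw [Subgraph.verts_sup, Subgraph.verts_sup]; left; right; simp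
  · rw [Subgraph.verts_sup]; right; simp
  · rw [Subgraph.edgeSet_sup, Subgraph.edgeSet_sup, edgeSet_subgraphOfAdj,
      edgeSet_subgraphOfAdj, edgeSet_subgraphOfAdj]
    refine injOn_union (injOn_union (Set.injOn_singleton _ _) (Set.injOn_singleton _ _) ?_)
      (Set.injOn_singleton _ _) ?_
    · rintro e1 rfl e2 rfl; exact hc1
    · rintro e1 (rfl | rfl) e2 rfl
      · exact hc2
      · exact hc3

lemma treePath3 {u v w t : α × β} (h1 : (lexProd G H).Adj u v) (h2 : (lexProd G H).Adj v w)
    (h3 : (lexProd G H).Adj w t)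
    (hc1 : c s(u, v) ≠ c s(v, w)) (hc2 : c s(u, v) ≠ c s(w, t)) (hc3 : c s(v, w) ≠ c s(w, t)) :
    ∃ T : (lexProd G H).Subgraph, T.Connected ∧ u ∈ T.verts ∧ v ∈ T.verts ∧ w ∈ T.verts ∧
      t ∈ T.verts ∧ Set.InjOn c T.edgeSet := by
  refine ⟨((lexProd G H).subgraphOfAdj h1 ⊔ (lexProd G H).subgraphOfAdj h2) ⊔
    (lexProd G H).subgraphOfAdj h3, ?_, ?_, ?_, ?_, ?_, ?_⟩
  · refine Subgraph.Connected.sup ?_ (Subgraph.subgraphOfAdj_connected h3) ⟨w, ?_⟩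
    · refine Subgraph.Connected.sup (Subgraph.subgraphOfAdj_connected h1)
        (Subgraph.subgraphOfAdj_connected h2) ⟨v, ?_⟩
      rw [Subgraph.verts_inf]
      constructor <;> simp
    · rw [Subgraph.verts_inf, Subgraph.verts_sup]
      exact ⟨Or.inr (by simp), by simp⟩
  · rw [Subgraph.verts_sup, Subgraph.verts_sup]; left; left; simp
  · rw [Subgraph.verts_sup, Subgraph.verts_sup]; left; left; simp
  · rw [Subgraph.verts_sup, Subgraph.verts_sup]; left; right; simp
  · rw [Subgraph.verts_sup]; right; simp
  · rw [Subgraph.edgeSet_sup, Subgraph.edgeSet_sup, edgeSet_subgraphOfAdj,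
      edgeSet_subgraphOfAdj, edgeSet_subgraphOfAdj]
    refine injOn_union (injOn_union (Set.injOn_singleton _ _) (Set.injOn_singleton _ _) ?_)
      (Set.injOn_singleton _ _) ?_
    · rintro e1 rfl e2 rfl; exact hc1
    · rintro e1 (rfl | rfl) e2 rfl
      · exact hc2
      · exact hc3

end Trees

end CaseI

section CaseIDispatch

open Rx3Aux

variable {α β : Type*} [Fintype α] [Fintype β] {G : SimpleGraph α} {H : SimpleGraph β}
variable [DecidableEq α] [DecidableEq β] {g0 g1 : α} {rk : β → ℕ}
    {hrk : Function.Injective rk}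

lemma colI_cross' (u v : α × β) (h1 : u.1 ≠ v.1) (h2 : rk v.2 < rk u.2) :
    colI g0 rk hrk s(u, v) = if v.1 = g0 then 1 else 2 := by
  rw [Sym2.eq_swap]
  exact colI_cross v u (Ne.symm h1) h2

lemma colI_cross_ne_zero (u v : α × β) (h1 : u.1 ≠ v.1) (h2 : u.2 ≠ v.2) :
    colI g0 rk hrk s(u, v) ≠ 0 := by
  have hne : rk u.2 ≠ rk v.2 := fun hh => h2 (hrk hh)
  rcases lt_or_gt_of_ne hne with hlt | hgt
  · rw [colI_cross u v h1 hlt]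
    exact (valPos u.1).ne'
  · rw [colI_cross' u v h1 hgt]
    exact (valPos v.1).ne'

variable (hg01 : g0 ≠ g1) (huniv : ∀ g : α, g = g0 ∨ g = g1)
    (hGadj : ∀ g g' : α, g ≠ g' → G.Adj g g')

include hg01 huniv hGadj

lemma starSameCopy (g g' : α) (hgg' : g ≠ g') (p q r : β) (hpq : rk p < rk q)
    (hqr : rk q < rk r) :
    ∃ T : (lexProd G H).Subgraph, T.Connected ∧ (g, p) ∈ T.verts ∧ (g, q) ∈ T.verts ∧
      (g, r) ∈ T.verts ∧ Set.InjOn (colI g0 rk hrk) T.edgeSet := by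
  have h1 : (lexProd G H).Adj (g, p) (g', q) := Or.inl (hGadj g g' hgg')
  have h2 : (lexProd G H).Adj (g', q) (g, q) := Or.inl (hGadj g' g (Ne.symm hgg'))
  have h3 : (lexProd G H).Adj (g', q) (g, r) := Or.inl (hGadj g' g (Ne.symm hgg'))
  have hc1 : colI g0 rk hrk s((g, p), (g', q)) = if g = g0 then 1 else 2 :=
    colI_cross (g, p) (g', q) hgg' hpq
  have hc2 : colI g0 rk hrk s((g', q), (g, q)) = 0 := colI_zero _ _ (Or.inr rfl)
  have hc3 : colI g0 rk hrk s((g', q), (g, r)) = if g' = g0 then 1 else 2 :=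
    colI_cross (g', q) (g, r) (Ne.symm hgg') hqr
  obtain ⟨T, hT, hu, _, hw, ht, hinj⟩ := treeStar3 (c := colI g0 rk hrk) h1 h2 h3
    (by rw [hc1, hc2]; exact (valPos g).ne')
    (by rw [hc1, hc3]; exact valNe hg01 huniv hgg')
    (by rw [hc2, hc3]; exact (valPos g').ne)
  exact ⟨T, hT, hu, hw, ht, hinj⟩

lemma pairSameCopy (g g' : α) (hgg' : g ≠ g') (a d : β) (had : a ≠ d) :
    ∃ T : (lexProd G H).Subgraph, T.Connected ∧ (g, a) ∈ T.verts ∧ (g, d) ∈ T.verts ∧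
      Set.InjOn (colI g0 rk hrk) T.edgeSet := by
  have h1 : (lexProd G H).Adj (g, a) (g', a) := Or.inl (hGadj g g' hgg')
  have h2 : (lexProd G H).Adj (g', a) (g, d) := Or.inl (hGadj g' g (Ne.symm hgg'))
  obtain ⟨T, hT, hu, _, hw, hinj⟩ := treeTwo (c := colI g0 rk hrk) h1 h2 (by
    rw [colI_zero (g, a) (g', a) (Or.inr rfl)]
    exact (colI_cross_ne_zero (hrk := hrk) (g', a) (g, d) (Ne.symm hgg') had).symm)
  exact ⟨T, hT, hu, hw, hinj⟩

lemma twoOneI (g g' : α) (hgg' : g ≠ g') (a b w : β) (hab : a ≠ b) :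
    ∃ T : (lexProd G H).Subgraph, T.Connected ∧ (g, a) ∈ T.verts ∧ (g, b) ∈ T.verts ∧
      (g', w) ∈ T.verts ∧ Set.InjOn (colI g0 rk hrk) T.edgeSet := by
  by_cases hwa : w = a
  · subst hwa
    have h1 : (lexProd G H).Adj (g, b) (g', w) := Or.inl (hGadj g g' hgg')
    have h2 : (lexProd G H).Adj (g', w) (g, w) := Or.inl (hGadj g' g (Ne.symm hgg'))
    obtain ⟨T, hT, hu, hv, hw2, hinj⟩ := treeTwo (c := colI g0 rk hrk) h1 h2 (by
      rw [colI_zero (g', w) (g, w) (Or.inr rfl)]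
      exact colI_cross_ne_zero (hrk := hrk) (g, b) (g', w) hgg' (Ne.symm hab))
    exact ⟨T, hT, hw2, hu, hv, hinj⟩
  · by_cases hwb : w = b
    · subst hwb
      have h1 : (lexProd G H).Adj (g, a) (g', w) := Or.inl (hGadj g g' hgg')
      have h2 : (lexProd G H).Adj (g', w) (g, w) := Or.inl (hGadj g' g (Ne.symm hgg'))
      obtain ⟨T, hT, hu, hv, hw2, hinj⟩ := treeTwo (c := colI g0 rk hrk) h1 h2 (by
        rw [colI_zero (g', w) (g, w) (Or.inr rfl)]
        exact colI_cross_ne_zero (hrk := hrk) (g, a) (g', w) hgg' (Ne.symm hwa))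
      exact ⟨T, hT, hu, hw2, hv, hinj⟩
    · have hrwa : rk w ≠ rk a := fun h => hwa (hrk h)
      have hrwb : rk w ≠ rk b := fun h => hwb (hrk h)
      have hrab : rk a ≠ rk b := fun h => hab (hrk h)
      have hAgg' : G.Adj g g' := hGadj g g' hgg'
      have hAg'g : G.Adj g' g := hGadj g' g (Ne.symm hgg')
      rcases lt_trichotomy (rk a) (rk w) with h1 | h1 | h1
      · rcases lt_trichotomy (rk w) (rk b) with h2 | h2 | h2
        · -- a < w < b : 2-edge path through (g', w)
          obtain ⟨T, hT, hu, hv, hw2, hinj⟩ := treeTwo (c := colI g0 rk hrk)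
            (Or.inl hAgg' : (lexProd G H).Adj (g, a) (g', w))
            (Or.inl hAg'g : (lexProd G H).Adj (g', w) (g, b)) (by
              rw [colI_cross (g, a) (g', w) hgg' h1,
                colI_cross (g', w) (g, b) (Ne.symm hgg') h2]
              exact valNe hg01 huniv hgg')
          exact ⟨T, hT, hu, hw2, hv, hinj⟩
        · exact absurd h2 hrwb
        · -- a < w, b < w : w above both
          rcases lt_trichotomy (rk a) (rk b) with h3 | h3 | h3
          · -- a < b < w : path (g',w)-(g,a)-(g',a)-(g,b)
            obtain ⟨T, hT, hu, hv, _, ht, hinj⟩ := treePath3 (c := colI g0 rk hrk)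
              (Or.inl hAg'g : (lexProd G H).Adj (g', w) (g, a))
              (Or.inl hAgg' : (lexProd G H).Adj (g, a) (g', a))
              (Or.inl hAg'g : (lexProd G H).Adj (g', a) (g, b))
              (by
                rw [colI_cross' (g', w) (g, a) (Ne.symm hgg') h1,
                  colI_zero (g, a) (g', a) (Or.inr rfl)]
                exact (valPos g).ne')
              (by
                rw [colI_cross' (g', w) (g, a) (Ne.symm hgg') h1,
                  colI_cross (g', a) (g, b) (Ne.symm hgg') h3]
                exact valNe hg01 huniv hgg')
              (by
                rw [colI_zero (g, a) (g', a) (Or.inr rfl),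
                  colI_cross (g', a) (g, b) (Ne.symm hgg') h3]
                exact (valPos g').ne)
            exact ⟨T, hT, hv, ht, hu, hinj⟩
          · exact absurd h3 hrab
          · -- b < a < w : path (g',w)-(g,b)-(g',b)-(g,a)
            obtain ⟨T, hT, hu, hv, _, ht, hinj⟩ := treePath3 (c := colI g0 rk hrk)
              (Or.inl hAg'g : (lexProd G H).Adj (g', w) (g, b))
              (Or.inl hAgg' : (lexProd G H).Adj (g, b) (g', b))
              (Or.inl hAg'g : (lexProd G H).Adj (g', b) (g, a))
              (by
                rw [colI_cross' (g', w) (g, b) (Ne.symm hgg') h2,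
                  colI_zero (g, b) (g', b) (Or.inr rfl)]
                exact (valPos g).ne')
              (by
                rw [colI_cross' (g', w) (g, b) (Ne.symm hgg') h2,
                  colI_cross (g', b) (g, a) (Ne.symm hgg') h3]
                exact valNe hg01 huniv hgg')
              (by
                rw [colI_zero (g, b) (g', b) (Or.inr rfl),
                  colI_cross (g', b) (g, a) (Ne.symm hgg') h3]
                exact (valPos g').ne)
            exact ⟨T, hT, ht, hv, hu, hinj⟩
      · exact absurd h1 hrwa.symm
      · -- w < a
        rcases lt_trichotomy (rk w) (rk b) with h2 | h2 | h2
        ·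
          rcases lt_trichotomy (rk a) (rk b) with h3 | h3 | h3
          · -- w < a < b : path (g',w)-(g,b)-(g',b)... use t = b (max)
            obtain ⟨T, hT, hu, hv, _, ht, hinj⟩ := treePath3 (c := colI g0 rk hrk)
              (Or.inl hAg'g : (lexProd G H).Adj (g', w) (g, b))
              (Or.inl hAgg' : (lexProd G H).Adj (g, b) (g', b))
              (Or.inl hAg'g : (lexProd G H).Adj (g', b) (g, a))
              (by
                rw [colI_cross (g', w) (g, b) (Ne.symm hgg') h2,
                  colI_zero (g, b) (g', b) (Or.inr rfl)]
                exact (valPos g').ne')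
              (by
                rw [colI_cross (g', w) (g, b) (Ne.symm hgg') h2,
                  colI_cross' (g', b) (g, a) (Ne.symm hgg') h3]
                exact valNe hg01 huniv (Ne.symm hgg')
                )
              (by
                rw [colI_zero (g, b) (g', b) (Or.inr rfl),
                  colI_cross' (g', b) (g, a) (Ne.symm hgg') h3]
                exact (valPos g).ne)
            exact ⟨T, hT, ht, hv, hu, hinj⟩
          · exact absurd h3 hrab
          · -- w < b < a : t = a
            obtain ⟨T, hT, hu, hv, _, ht, hinj⟩ := treePath3 (c := colI g0 rk hrk)
              (Or.inl hAg'g : (lexProd G H).Adj (g', w) (g, a))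
              (Or.inl hAgg' : (lexProd G H).Adj (g, a) (g', a))
              (Or.inl hAg'g : (lexProd G H).Adj (g', a) (g, b))
              (by
                rw [colI_cross (g', w) (g, a) (Ne.symm hgg') h1,
                  colI_zero (g, a) (g', a) (Or.inr rfl)]
                exact (valPos g').ne')
              (by
                rw [colI_cross (g', w) (g, a) (Ne.symm hgg') h1,
                  colI_cross' (g', a) (g, b) (Ne.symm hgg') h3]
                exact valNe hg01 huniv (Ne.symm hgg'))
              (by
                rw [colI_zero (g, a) (g', a) (Or.inr rfl),
                  colI_cross' (g', a) (g, b) (Ne.symm hgg') h3]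
                exact (valPos g).ne)
            exact ⟨T, hT, hv, ht, hu, hinj⟩
        · exact absurd h2 hrwb
        · -- b < w < a : 2-edge path through (g', w)
          obtain ⟨T, hT, hu, hv, hw2, hinj⟩ := treeTwo (c := colI g0 rk hrk)
            (Or.inl hAgg' : (lexProd G H).Adj (g, b) (g', w))
            (Or.inl hAg'g : (lexProd G H).Adj (g', w) (g, a)) (by
              rw [colI_cross (g, b) (g', w) hgg' h2,
                colI_cross (g', w) (g, a) (Ne.symm hgg') h1]
              exact valNe hg01 huniv hgg')
          exact ⟨T, hT, hw2, hu, hv, hinj⟩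

lemma sameCopyI (g g' : α) (hgg' : g ≠ g') (a b d : β) :
    ∃ T : (lexProd G H).Subgraph, T.Connected ∧ (g, a) ∈ T.verts ∧ (g, b) ∈ T.verts ∧
      (g, d) ∈ T.verts ∧ Set.InjOn (colI g0 rk hrk) T.edgeSet := by
  by_cases hab : a = b
  · subst hab
    by_cases had : a = d
    · subst had
      obtain ⟨T, hT, hu, hinj⟩ := recipeSingle (c := colI g0 rk hrk) (G := G) (H := H) (g, a)
      exact ⟨T, hT, hu, hu, hu, hinj⟩
    · obtain ⟨T, hT, hu, hv, hinj⟩ := pairSameCopy hg01 huniv hGadj g g' hgg' a d had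
      exact ⟨T, hT, hu, hu, hv, hinj⟩
  · by_cases hda : d = a
    · subst hda
      obtain ⟨T, hT, hu, hv, hinj⟩ := pairSameCopy hg01 huniv hGadj g g' hgg' d b hab
      exact ⟨T, hT, hu, hv, hu, hinj⟩
    · by_cases hdb : d = b
      · subst hdb
        obtain ⟨T, hT, hu, hv, hinj⟩ := pairSameCopy hg01 huniv hGadj g g' hgg' a d hab
        exact ⟨T, hT, hu, hv, hv, hinj⟩
      · -- a, b, d pairwise distinct
        have hrab : rk a ≠ rk b := fun h => hab (hrk h)
        have hrda : rk d ≠ rk a := fun h => hda (hrk h)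
        have hrdb : rk d ≠ rk b := fun h => hdb (hrk h)
        rcases lt_trichotomy (rk a) (rk b) with h1 | h1 | h1
        · rcases lt_trichotomy (rk d) (rk a) with h2 | h2 | h2
          · obtain ⟨T, hT, hp, hq, hr, hinj⟩ :=
              starSameCopy hg01 huniv hGadj g g' hgg' d a b h2 h1
            exact ⟨T, hT, hq, hr, hp, hinj⟩
          · exact absurd h2 hrda
          · rcases lt_trichotomy (rk d) (rk b) with h3 | h3 | h3
            · obtain ⟨T, hT, hp, hq, hr, hinj⟩ :=
                starSameCopy hg01 huniv hGadj g g' hgg' a d b h2 h3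
              exact ⟨T, hT, hp, hr, hq, hinj⟩
            · exact absurd h3 hrdb
            · obtain ⟨T, hT, hp, hq, hr, hinj⟩ :=
                starSameCopy hg01 huniv hGadj g g' hgg' a b d h1 h3
              exact ⟨T, hT, hp, hq, hr, hinj⟩
        · exact absurd h1 hrab
        · rcases lt_trichotomy (rk d) (rk b) with h2 | h2 | h2
          · obtain ⟨T, hT, hp, hq, hr, hinj⟩ :=
              starSameCopy hg01 huniv hGadj g g' hgg' d b a h2 h1
            exact ⟨T, hT, hr, hq, hp, hinj⟩
          · exact absurd h2 hrdb
          · rcases lt_trichotomy (rk d) (rk a) with h3 | h3 | h3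
            · obtain ⟨T, hT, hp, hq, hr, hinj⟩ :=
                starSameCopy hg01 huniv hGadj g g' hgg' b d a h2 h3
              exact ⟨T, hT, hr, hp, hq, hinj⟩
            · exact absurd h3 hrda
            · obtain ⟨T, hT, hp, hq, hr, hinj⟩ :=
                starSameCopy hg01 huniv hGadj g g' hgg' b a d h1 h3
              exact ⟨T, hT, hq, hp, hr, hinj⟩

lemma pairI (x z : α × β) :
    ∃ T : (lexProd G H).Subgraph, T.Connected ∧ x ∈ T.verts ∧ z ∈ T.verts ∧
      Set.InjOn (colI g0 rk hrk) T.edgeSet := by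
  by_cases hxz : x = z
  · obtain ⟨T, hT, hu, hinj⟩ := recipeSingle (c := colI g0 rk hrk) (G := G) (H := H) x
    exact ⟨T, hT, hu, hxz ▸ hu, hinj⟩
  · by_cases h1 : x.1 = z.1
    · have h2 : x.2 ≠ z.2 := fun hh => hxz (Prod.ext h1 hh)
      obtain ⟨g', hg'⟩ : ∃ g', x.1 ≠ g' := by
        rcases huniv x.1 with h | h
        · exact ⟨g1, h ▸ hg01⟩
        · exact ⟨g0, h ▸ (Ne.symm hg01)⟩
      obtain ⟨T, hT, hu, hv, hinj⟩ := pairSameCopy hg01 huniv hGadj x.1 g' hg' x.2 z.2 h2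
      exact ⟨T, hT, hu, (show ((x.1 : α), z.2) = z by rw [h1]) ▸ hv, hinj⟩
    · obtain ⟨T, hT, hu, hv, hinj⟩ := treeOne (c := colI g0 rk hrk)
        (Or.inl (hGadj x.1 z.1 h1) : (lexProd G H).Adj (x.1, x.2) (z.1, z.2))
      exact ⟨T, hT, hu, hv, hinj⟩

lemma tripleI (x y z : α × β) :
    ∃ T : (lexProd G H).Subgraph, T.Connected ∧ x ∈ T.verts ∧ y ∈ T.verts ∧ z ∈ T.verts ∧
      Set.InjOn (colI g0 rk hrk) T.edgeSet := by
  have hother : ∀ g : α, ∃ g', g ≠ g' := fun g => by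
    rcases huniv g with h | h
    · exact ⟨g1, h ▸ hg01⟩
    · exact ⟨g0, h ▸ (Ne.symm hg01)⟩
  by_cases h1 : x.1 = y.1
  · by_cases h2 : x.1 = z.1
    · obtain ⟨g', hg'⟩ := hother x.1
      obtain ⟨T, hT, ha, hb, hd, hinj⟩ :=
        sameCopyI hg01 huniv hGadj x.1 g' hg' x.2 y.2 z.2
      exact ⟨T, hT, ha, (show ((x.1 : α), y.2) = y by rw [h1]) ▸ hb,
        (show ((x.1 : α), z.2) = z by rw [h2]) ▸ hd, hinj⟩
    · by_cases hxy : x.2 = y.2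
      · have hxy' : x = y := Prod.ext h1 hxy
        obtain ⟨T, hT, hu, hv, hinj⟩ := pairI hg01 huniv hGadj x z
        exact ⟨T, hT, hu, hxy' ▸ hu, hv, hinj⟩
      · obtain ⟨T, hT, ha, hb, hw, hinj⟩ :=
          twoOneI hg01 huniv hGadj x.1 z.1 h2 x.2 y.2 z.2 hxy
        exact ⟨T, hT, ha, (show ((x.1 : α), y.2) = y by rw [h1]) ▸ hb, hw, hinj⟩
  · by_cases h2 : x.1 = z.1
    · by_cases hxz : x.2 = z.2
      · have hxz' : x = z := Prod.ext h2 hxz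
        obtain ⟨T, hT, hu, hv, hinj⟩ := pairI hg01 huniv hGadj x y
        exact ⟨T, hT, hu, hv, hxz' ▸ hu, hinj⟩
      · obtain ⟨T, hT, ha, hb, hw, hinj⟩ :=
          twoOneI hg01 huniv hGadj x.1 y.1 h1 x.2 z.2 y.2 hxz
        exact ⟨T, hT, ha, hw, (show ((x.1 : α), z.2) = z by rw [h2]) ▸ hb, hinj⟩
    · -- x.1 ≠ y.1 and x.1 ≠ z.1, so y.1 = z.1
      have h3 : y.1 = z.1 := by
        rcases huniv x.1 with hx | hx <;> rcases huniv y.1 with hy | hy <;>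
          rcases huniv z.1 with hz | hz <;> simp_all
      by_cases hyz : y.2 = z.2
      · have hyz' : y = z := Prod.ext h3 hyz
        obtain ⟨T, hT, hu, hv, hinj⟩ := pairI hg01 huniv hGadj x y
        exact ⟨T, hT, hu, hv, hyz' ▸ hv, hinj⟩
      · obtain ⟨T, hT, ha, hb, hw, hinj⟩ :=
          twoOneI hg01 huniv hGadj y.1 x.1 (fun hh => h1 hh.symm) y.2 z.2 x.2 hyz
        exact ⟨T, hT, hw, ha, (show ((y.1 : α), z.2) = z by rw [h3]) ▸ hb, hinj⟩

end CaseIDispatch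

/-- For connected graphs `G` and `H` with at least 2 vertices each, at least one of
which is not complete, `rx₃(G[H]) ≤ rx₃(G) + rc(H)`. -/
theorem rx3_lexProd_le {α β : Type*} [Fintype α] [Fintype β]
    (G : SimpleGraph α) (H : SimpleGraph β) (hG : G.Connected) (hH : H.Connected)
    (hα : 2 ≤ Fintype.card α) (hβ : 2 ≤ Fintype.card β)
    (hnc : G ≠ ⊤ ∨ H ≠ ⊤) :
    rx3 (lexProd G H) ≤ rx3 G + rcIndex H := by
  classical
  obtain ⟨cG, hcGb, hcGr⟩ := rx3_spec G hG
  obtain ⟨cH, hcHb, hcHp⟩ := rc_spec H hH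
  have hnH1 : 1 ≤ rcIndex H := rc_ge_one H hH hβ
  have hnG1 : 1 ≤ rx3 G := rx3_ge_one G hG hα
  have hNea : Nonempty α := hG.nonempty
  have hNeb : Nonempty β := hH.nonempty
  have hN : Nonempty (α × β) := ⟨(hNea.some, hNeb.some)⟩
  rcases eq_or_lt_of_le hα with hα2 | hα3
  · -- Case I : |α| = 2
    have hcard2 : Fintype.card α = 2 := hα2.symm
    have hGtop : G = ⊤ := by
      ext u v
      rw [top_adj]
      exact ⟨Adj.ne, fun h => Rx3Aux.connected_card_two_adj hcard2 hG h⟩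
    have hHne : H ≠ ⊤ := by
      rcases hnc with h | h
      · exact absurd hGtop h
      · exact h
    have hnH2 : 2 ≤ rcIndex H := rc_ge_two H hH hHne
    have hnat : Nat.card α = 2 := by rw [Nat.card_eq_fintype_card]; exact hcard2
    obtain ⟨g0, g1, hg01, hu⟩ := Nat.card_eq_two_iff.mp hnat
    have huniv : ∀ g : α, g = g0 ∨ g = g1 := by
      intro g
      have : g ∈ ({g0, g1} : Set α) := by rw [hu]; trivial
      simpa using this
    have hGadj : ∀ g g' : α, g ≠ g' → G.Adj g g' :=
      fun g g' h => Rx3Aux.connected_card_two_adj hcard2 hG h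
    have hrk : Function.Injective (fun b => ((Fintype.equivFin β b : ℕ))) :=
      fun a b h => (Fintype.equivFin β).injective (Fin.val_injective h)
    apply rx3_le
    refine ⟨colI g0 _ hrk, fun e _ => lt_of_lt_of_le (colI_bound3 e) (by omega), ?_⟩
    exact rainbow_of_triples hN (fun x y z => tripleI hg01 huniv hGadj x y z)
  · have hnG2 : 2 ≤ rx3 G := rx3_ge_two G hG hα3
    rcases eq_or_lt_of_le hβ with hβ2 | hβ3
    · -- Case II : |β| = 2
      apply rx3_le
      refine ⟨colII cG cH (rx3 G), colII_bound hcGb hcHb hnH1, ?_⟩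
      refine rainbow_of_triples hN (fun x y z => ?_)
      exact tripleII hG hβ2.symm hcGb hcGr hcHp
        (fun g a b => colII_eval_fib (g, a) (g, b) rfl)
        (fun g g' a b h => colII_eval_cross (g, a) (g', b) h) x y z
    · -- Case III : |β| ≥ 3
      apply rx3_le
      refine ⟨colIII cG cH (rx3 G), colIII_bound hcGb hcHb (by omega) hnH1, ?_⟩
      refine rainbow_of_triples hN (fun x y z => ?_)
      exact tripleIII hG hα hβ3 hnG2 hcGb hcGr hcHp
        (fun g a b => colIII_eval_fib (g, a) (g, b) rfl)
        (fun g g' a h => colIII_eval_same (g, a) (g', a) h rfl)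
        (fun g g' a b h1 h2 => colIII_eval_diff (g, a) (g', b) h1 h2) x y z
end

section
/- Let H be a connected non-complete graph and let G be the one-vertex graph K_1. Then the join satisfies rx_3(G ∨ H) ≤ rx_3(H) + 1. -/
open SimpleGraph

section Aux

open SimpleGraph

lemma subgraph_connected_map {V V' : Type*} {G : SimpleGraph V} {G' : SimpleGraph V'}
    (f : G →g G') (T : G.Subgraph) (h : T.Connected) : (T.map f).Connected := by
  rw [Subgraph.connected_iff'] at h ⊢
  have hf : ∀ v (hv : v ∈ T.verts), f v ∈ (T.map f).verts := fun v hv => ⟨v, hv, rfl⟩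
  let g : T.coe →g (T.map f).coe :=
    { toFun := fun x => ⟨f x.1, hf x.1 x.2⟩,
      map_rel' := fun {a b} hab => ⟨a.1, b.1, hab, rfl, rfl⟩ }
  refine h.map g ?_
  rintro ⟨_, v, hv, rfl⟩
  exact ⟨⟨v, hv⟩, rfl⟩

lemma rx3_set_nonempty {β : Type*} [Fintype β] (H : SimpleGraph β) (hH : H.Connected) :
    {n | ∃ c : Sym2 β → ℕ, (∀ e ∈ H.edgeSet, c e < n) ∧ IsRainbowColoring3 H c}.Nonempty := by
  classical
  refine ⟨Fintype.card (Sym2 β), fun e => (Fintype.equivFin (Sym2 β) e : ℕ), fun e _ => Fin.is_lt _, ?_⟩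
  intro S hS
  refine ⟨⊤, ?_, by simp [Subgraph.verts_top], fun a _ b _ hab =>
    (Fintype.equivFin (Sym2 β)).injective (Fin.val_injective hab)⟩
  rw [Subgraph.connected_iff']
  exact (Subgraph.topIso (G := H)).connected_iff.mpr hH

end Aux

/-- If `H` is a connected non-complete graph and `G = K₁` is the one-vertex graph,
then `rx₃(G ∨ H) ≤ rx₃(H) + 1`. -/
theorem rx3_join_singleton_le {β : Type*} [Fintype β]
    (H : SimpleGraph β) (hH : H.Connected) (hnc : H ≠ ⊤) :
    rx3 (joinGraph (⊥ : SimpleGraph (Fin 1)) H) ≤ rx3 H + 1 := by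
  classical
  set J := joinGraph (⊥ : SimpleGraph (Fin 1)) H with hJ
  obtain ⟨c, hc, hrb⟩ := Nat.sInf_mem (rx3_set_nonempty H hH)
  set n := rx3 H with hn
  refine Nat.sInf_le ?_
  let g : (Fin 1 ⊕ β) → (Fin 1 ⊕ β) → ℕ := fun x y =>
    match x, y with
    | Sum.inr a, Sum.inr b => c s(a, b)
    | _, _ => n
  have hg : ∀ x y, g x y = g y x := by
    rintro (a | a) (b | b) <;> simp only [g] <;> rw [Sym2.eq_swap]
  let c' : Sym2 (Fin 1 ⊕ β) → ℕ := Sym2.lift ⟨g, hg⟩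
  have hc'rr : ∀ a b : β, c' s(Sum.inr a, Sum.inr b) = c s(a, b) := fun a b => rfl
  have hc'sp : ∀ (x : Fin 1) (b : β), c' s(Sum.inl x, Sum.inr b) = n := fun x b => rfl
  refine ⟨c', ?_, ?_⟩
  · intro e he
    induction e using Sym2.ind with
    | _ x y =>
      rcases x with a | a <;> rcases y with b | b
      · exact absurd he (by simp [J, joinGraph, Sym2.mem_iff])
      · exact Nat.lt_succ_of_le (le_of_eq (hc'sp a b))
      · rw [Sym2.eq_swap]; exact Nat.lt_succ_of_le (le_of_eq (hc'sp b a))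
      · have hab : H.Adj a b := he
        exact Nat.lt_succ_of_lt (lt_of_eq_of_lt (hc'rr a b) (hc s(a,b) (H.mem_edgeSet.mpr hab)))
  · intro S hS
    set S' : Set β := Sum.inr ⁻¹' S with hS'def
    have hS' : S'.ncard ≤ 3 := by
      have h1 : (Sum.inr '' S').ncard ≤ S.ncard :=
        Set.ncard_le_ncard (Set.image_preimage_subset _ _) S.toFinite
      rw [Set.ncard_image_of_injective _ Sum.inr_injective] at h1
      exact h1.trans hS
    obtain ⟨T, hTconn, hTsub, hTinj⟩ := hrb S' hS'
    let f : H →g J := ⟨Sum.inr, fun {a b} hab => hab⟩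
    have hmapconn := subgraph_connected_map f T hTconn
    have hedge : ∀ e ∈ (T.map f).edgeSet, ∃ e' ∈ T.edgeSet, e = Sym2.map Sum.inr e' := by
      intro e he
      induction e using Sym2.ind with
      | _ x y =>
        obtain ⟨a, b, hab, rfl, rfl⟩ := he
        exact ⟨s(a, b), hab, rfl⟩
    have hc'map : ∀ e' : Sym2 β, c' (Sym2.map Sum.inr e') = c e' := by
      intro e'
      induction e' using Sym2.ind with
      | _ a b => exact hc'rr a b
    have hinjmap : Set.InjOn c' (T.map f).edgeSet := by
      intro e1 h1 e2 h2 hceq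
      obtain ⟨e1', he1', rfl⟩ := hedge e1 h1
      obtain ⟨e2', he2', rfl⟩ := hedge e2 h2
      rw [hc'map, hc'map] at hceq
      rw [hTinj he1' he2' hceq]
    by_cases h0 : Sum.inl (0 : Fin 1) ∈ S
    · obtain ⟨w, hw⟩ := hTconn.nonempty
      have hadj : J.Adj (Sum.inl 0) (Sum.inr w) := trivial
      refine ⟨T.map f ⊔ J.subgraphOfAdj hadj, ?_, ?_, ?_⟩
      · refine Subgraph.connected_sup hmapconn.preconnected (Subgraph.subgraphOfAdj_connected hadj).preconnected ⟨Sum.inr w, ?_⟩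
        rw [Subgraph.verts_inf]
        exact ⟨⟨w, hw, rfl⟩, by simp⟩
      · intro x hx
        rw [Subgraph.verts_sup]
        rcases x with a | b
        · rw [Subsingleton.elim a 0] ; exact Or.inr (by simp)
        · exact Or.inl ⟨b, hTsub hx, rfl⟩
      · have hes : (T.map f ⊔ J.subgraphOfAdj hadj).edgeSet
            = (T.map f).edgeSet ∪ {s(Sum.inl 0, Sum.inr w)} := by
          rw [Subgraph.edgeSet_sup, SimpleGraph.edgeSet_subgraphOfAdj]
        have hlt : ∀ e ∈ (T.map f).edgeSet, c' e < n := by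
          intro e he
          obtain ⟨e', he', rfl⟩ := hedge e he
          rw [hc'map]
          exact hc e' (T.edgeSet_subset he')
        intro e1 h1 e2 h2 hceq
        rw [hes] at h1 h2
        rcases h1 with h1 | h1 <;> rcases h2 with h2 | h2
        · exact hinjmap h1 h2 hceq
        · rw [Set.mem_singleton_iff] at h2; subst h2
          exact absurd hceq (by rw [hc'sp]; exact (hlt e1 h1).ne)
        · rw [Set.mem_singleton_iff] at h1; subst h1
          exact absurd hceq.symm (by rw [hc'sp]; exact (hlt e2 h2).ne)
        · rw [Set.mem_singleton_iff] at h1 h2; rw [h1, h2]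
    · refine ⟨T.map f, hmapconn, ?_, hinjmap⟩
      intro x hx
      rcases x with a | b
      · exact absurd hx (by rw [Subsingleton.elim a 0]; exact h0)
      · exact ⟨b, hTsub hx, rfl⟩
end

section
/- Let G and H be connected graphs with |V(G)| = |V(H)| = s ≥ 3, and suppose at least one of G, H is not complete. Then rx_3(G ∨ H) = 3. -/
open SimpleGraph

/-! ### Auxiliary machinery for the proof -/

section LB
variable {V : Type*} {Γ : SimpleGraph V}

lemma pair_eq {S : Type*} {E : Set S} (hfin : E.Finite) (h2 : E.ncard ≤ 2)
    {e1 e2 e3 : S} (h1 : e1 ∈ E) (hm2 : e2 ∈ E) (hne : e1 ≠ e2) (h3 : e3 ∈ E) :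
    e3 = e1 ∨ e3 = e2 := by
  by_contra h
  push_neg at h
  have hsub : ({e1, e2, e3} : Set S) ⊆ E := by
    intro a ha
    rcases ha with rfl | rfl | rfl <;> assumption
  have h3' : ({e1, e2, e3} : Set S).ncard = 3 :=
    Set.ncard_eq_three.mpr ⟨e1, e2, e3, hne, (h.1).symm, (h.2).symm, rfl⟩
  have := Set.ncard_le_ncard hsub hfin
  omega

lemma walk_closed (T : Γ.Subgraph) {A : Set V}
    (hA : ∀ p q, T.Adj p q → p ∈ A → q ∈ A) {x y : T.verts}
    (w : T.coe.Walk x y) (hx : (x : V) ∈ A) : (y : V) ∈ A := by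
  induction w with
  | nil => exact hx
  | cons h _ ih => exact ih (hA _ _ ((Subgraph.coe_adj _ _ _).mp h) hx)

lemma reach_closed (T : Γ.Subgraph) (hT : T.Connected) {A : Set V}
    (hA : ∀ p q, T.Adj p q → p ∈ A → q ∈ A) {x y : V}
    (hx : x ∈ T.verts) (hy : y ∈ T.verts) (hxA : x ∈ A) : y ∈ A := by
  obtain ⟨w⟩ := hT.preconnected ⟨x, hx⟩ ⟨y, hy⟩
  exact walk_closed T hA w hxA

lemma exists_adj_of_conn (T : Γ.Subgraph) (hT : T.Connected) {x y : V}
    (hx : x ∈ T.verts) (hy : y ∈ T.verts) (hxy : x ≠ y) : ∃ z, T.Adj x z := by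
  obtain ⟨w⟩ := hT.preconnected ⟨x, hx⟩ ⟨y, hy⟩
  cases w with
  | nil => exact absurd rfl hxy
  | cons h _ => exact ⟨_, (Subgraph.coe_adj _ _ _).mp h⟩

/-- If the (≤ 2) edges of a connected subgraph are `s(p1,p2)` and `s(q1,q2)`,
with these vertex pairs disjoint, we get a contradiction. -/
lemma disconn (T : Γ.Subgraph) (hT : T.Connected)
    (hfin : T.edgeSet.Finite) (hE : T.edgeSet.ncard ≤ 2)
    {p1 p2 q1 q2 : V} (ha : s(p1, p2) ∈ T.edgeSet) (hb : s(q1, q2) ∈ T.edgeSet)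
    (h11 : p1 ≠ q1) (h12 : p1 ≠ q2) (h21 : p2 ≠ q1) (h22 : p2 ≠ q2)
    (hp : p1 ∈ T.verts) (hq : q1 ∈ T.verts) : False := by
  have hneq : s(p1, p2) ≠ s(q1, q2) := by
    intro h
    rw [Sym2.eq_iff] at h
    rcases h with ⟨rfl, rfl⟩ | ⟨rfl, rfl⟩
    · exact h11 rfl
    · exact h12 rfl
  have hclosed : ∀ p q, T.Adj p q → p ∈ ({p1, p2} : Set V) → q ∈ ({p1, p2} : Set V) := by
    intro p q hpq hpA
    have hm : s(p, q) ∈ T.edgeSet := hpq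
    rcases pair_eq hfin hE ha hb hneq hm with h | h <;>
      rw [Sym2.eq_iff] at h <;>
      rcases hpA with rfl | rfl <;>
      rcases h with ⟨h1, h2⟩ | ⟨h1, h2⟩ <;>
      simp_all
  have := reach_closed T hT hclosed hp hq (by simp)
  rcases this with h | h
  · exact h11 h.symm
  · exact h21 h.symm

lemma structure1 (T : Γ.Subgraph) (hT : T.Connected)
    (hfin : T.edgeSet.Finite) (hE : T.edgeSet.ncard ≤ 2)
    {u v w : V} (hu : u ∈ T.verts) (hv : v ∈ T.verts) (hw : w ∈ T.verts)
    (huv : u ≠ v) (huw : u ≠ w) (hvw : v ≠ w) (hnadj : ¬ T.Adj u v) :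
    s(u, w) ∈ T.edgeSet ∧ s(v, w) ∈ T.edgeSet := by
  obtain ⟨x, hx⟩ := exists_adj_of_conn T hT hu hv huv
  obtain ⟨y, hy⟩ := exists_adj_of_conn T hT hv hu huv.symm
  have hxv : x ≠ v := fun h => hnadj (h ▸ hx)
  have hyu : y ≠ u := fun h => hnadj (T.adj_symm (h ▸ hy))
  have he1 : s(u, x) ∈ T.edgeSet := hx
  have he2 : s(v, y) ∈ T.edgeSet := hy
  have hne12 : s(u, x) ≠ s(v, y) := by
    intro h
    rw [Sym2.eq_iff] at h
    rcases h with ⟨rfl, _⟩ | ⟨_, rfl⟩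
    · exact huv rfl
    · exact hxv rfl
  obtain ⟨z, hz⟩ := exists_adj_of_conn T hT hw hu huw.symm
  have hz' : s(w, z) ∈ T.edgeSet := hz
  rcases pair_eq hfin hE he1 he2 hne12 hz' with h | h
  · -- s(w,z) = s(u,x): so x = w
    rw [Sym2.eq_iff] at h
    have hxw : x = w := by
      rcases h with ⟨h1, _⟩ | ⟨h1, _⟩
      · exact absurd h1.symm huw
      · exact h1.symm
    have heuw : s(u, w) ∈ T.edgeSet := by rw [← hxw]; exact he1
    refine ⟨heuw, ?_⟩
    by_cases hyw : y = w
    · rw [← hyw]; exact he2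
    · exact (disconn T hT hfin hE he2 heuw huv.symm hvw hyu hyw hv hu).elim
  · -- s(w,z) = s(v,y): so y = w
    rw [Sym2.eq_iff] at h
    have hyw : y = w := by
      rcases h with ⟨h1, _⟩ | ⟨h1, _⟩
      · exact absurd h1.symm hvw
      · exact h1.symm
    have hevw : s(v, w) ∈ T.edgeSet := by rw [← hyw]; exact he2
    refine ⟨?_, hevw⟩
    by_cases hxw : x = w
    · rw [← hxw]; exact he1
    · exact (disconn T hT hfin hE he1 hevw huv huw hxv hxw hu hv).elim

lemma structure2 (T : Γ.Subgraph) (hT : T.Connected)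
    (hfin : T.edgeSet.Finite) (hE : T.edgeSet.ncard ≤ 2)
    {u w1 w2 : V} (hu : u ∈ T.verts) (h1 : w1 ∈ T.verts) (h2 : w2 ∈ T.verts)
    (hu1 : u ≠ w1) (hu2 : u ≠ w2) (h12 : w1 ≠ w2) :
    (s(u, w1) ∈ T.edgeSet ∧ s(u, w2) ∈ T.edgeSet) ∨
    (s(w1, w2) ∈ T.edgeSet ∧ (s(u, w1) ∈ T.edgeSet ∨ s(u, w2) ∈ T.edgeSet)) := by
  obtain ⟨x, hx⟩ := exists_adj_of_conn T hT h1 hu hu1.symm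
  obtain ⟨y, hy⟩ := exists_adj_of_conn T hT h2 hu hu2.symm
  obtain ⟨z, hz⟩ := exists_adj_of_conn T hT hu h1 hu1
  have hex : s(w1, x) ∈ T.edgeSet := hx
  have hey : s(w2, y) ∈ T.edgeSet := hy
  have hez : s(u, z) ∈ T.edgeSet := hz
  by_cases hxy : s(w1, x) = s(w2, y)
  · -- then x = w2, so s(w1,w2) ∈ E
    rw [Sym2.eq_iff] at hxy
    have hxw2 : x = w2 := by
      rcases hxy with ⟨hh, _⟩ | ⟨_, hh⟩
      · exact absurd hh h12
      · exact hh
    have he12 : s(w1, w2) ∈ T.edgeSet := by rw [← hxw2]; exact hex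
    by_cases hz1 : z = w1
    · exact Or.inr ⟨he12, Or.inl (by rw [← hz1]; exact hez)⟩
    · by_cases hz2 : z = w2
      · exact Or.inr ⟨he12, Or.inr (by rw [← hz2]; exact hez)⟩
      · exact (disconn T hT hfin hE hez he12 hu1 hu2 hz1 hz2 hu h1).elim
  · rcases pair_eq hfin hE hex hey hxy hez with h | h
    · -- s(u,z) = s(w1,x): so x = u, s(u,w1) ∈ E
      rw [Sym2.eq_iff] at h
      have hxu : x = u := by
        rcases h with ⟨hh, _⟩ | ⟨hh, _⟩
        · exact absurd hh hu1
        · exact hh.symm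
      have heu1 : s(u, w1) ∈ T.edgeSet := by
        rw [Sym2.eq_swap, ← hxu]; exact hex
      by_cases hyu : y = u
      · refine Or.inl ⟨heu1, ?_⟩
        rw [Sym2.eq_swap, ← hyu]; exact hey
      · by_cases hyw1 : y = w1
        · refine Or.inr ⟨?_, Or.inl heu1⟩
          rw [Sym2.eq_swap, ← hyw1]; exact hey
        · exact (disconn T hT hfin hE hey heu1 hu2.symm h12.symm hyu hyw1 h2 hu).elim
    · -- s(u,z) = s(w2,y): so y = u, s(u,w2) ∈ E
      rw [Sym2.eq_iff] at h
      have hyu : y = u := by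
        rcases h with ⟨hh, _⟩ | ⟨hh, _⟩
        · exact absurd hh hu2
        · exact hh.symm
      have heu2 : s(u, w2) ∈ T.edgeSet := by
        rw [Sym2.eq_swap, ← hyu]; exact hey
      by_cases hxu : x = u
      · refine Or.inl ⟨?_, heu2⟩
        rw [Sym2.eq_swap, ← hxu]; exact hex
      · by_cases hxw2 : x = w2
        · refine Or.inr ⟨?_, Or.inr heu2⟩
          rw [← hxw2]; exact hex
        · exact (disconn T hT hfin hE hex heu2 hu1.symm h12 hxu hxw2 h1 hu).elim

end LB

section LB2
variable {V : Type*} {Γ : SimpleGraph V}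

lemma ncard_triple_le_s16 {x y z : V} : ({x, y, z} : Set V).ncard ≤ 3 := by
  apply le_trans (Set.ncard_insert_le _ _)
  have := Set.ncard_insert_le y ({z} : Set V)
  simp only [Set.ncard_singleton] at this ⊢
  omega

lemma no_two_coloring [Finite V] (c : Sym2 V → ℕ)
    (hc : ∀ e ∈ Γ.edgeSet, c e < 2) (hr : IsRainbowColoring3 Γ c)
    {u v w1 w2 w3 : V} (hnadj : ¬ Γ.Adj u v) (huv : u ≠ v)
    (hw12 : w1 ≠ w2) (hw13 : w1 ≠ w3) (hw23 : w2 ≠ w3)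
    (hu1 : u ≠ w1) (hu2 : u ≠ w2) (hu3 : u ≠ w3)
    (hv1 : v ≠ w1) (hv2 : v ≠ w2) (hv3 : v ≠ w3) : False := by
  have hcard : ∀ (T : Γ.Subgraph), Set.InjOn c T.edgeSet → T.edgeSet.ncard ≤ 2 := by
    intro T hinj
    have h1 : T.edgeSet.ncard = (c '' T.edgeSet).ncard :=
      (Set.ncard_image_of_injOn hinj).symm
    have h2 : c '' T.edgeSet ⊆ {0, 1} := by
      rintro n ⟨e, he, rfl⟩
      have := hc e (T.edgeSet_subset he)
      interval_cases (c e) <;> simp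
    have h3 : (c '' T.edgeSet).ncard ≤ ({0, 1} : Set ℕ).ncard :=
      Set.ncard_le_ncard h2 (Set.toFinite _)
    have h4 : ({0, 1} : Set ℕ).ncard = 2 := Set.ncard_pair (by omega)
    omega
  -- step 1
  have step1 : ∀ w : V, u ≠ w → v ≠ w →
      c s(u, w) ≠ c s(v, w) ∧ s(u, w) ∈ Γ.edgeSet ∧ s(v, w) ∈ Γ.edgeSet := by
    intro w huw hvw
    obtain ⟨T, hT, hS, hinj⟩ := hr {u, v, w} ncard_triple_le_s16
    have hu' : u ∈ T.verts := hS (by simp)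
    have hv' : v ∈ T.verts := hS (by simp)
    have hw' : w ∈ T.verts := hS (by simp)
    have hnadj' : ¬ T.Adj u v := fun h => hnadj (T.adj_sub h)
    obtain ⟨m1, m2⟩ := structure1 T hT (Set.toFinite _) (hcard T hinj)
      hu' hv' hw' huv huw hvw hnadj'
    refine ⟨?_, T.edgeSet_subset m1, T.edgeSet_subset m2⟩
    intro hcc
    have := hinj m1 m2 hcc
    rw [Sym2.eq_iff] at this
    rcases this with ⟨hh, _⟩ | ⟨hh, _⟩
    · exact huv hh
    · exact huw hh
  -- step 2
  have step2 : ∀ x wa wb : V, x ≠ wa → x ≠ wb → wa ≠ wb →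
      c s(x, wa) = c s(x, wb) →
      s(wa, wb) ∈ Γ.edgeSet ∧ c s(wa, wb) ≠ c s(x, wa) := by
    intro x wa wb hxa hxb hab hcc
    obtain ⟨T, hT, hS, hinj⟩ := hr {x, wa, wb} ncard_triple_le_s16
    have hx' : x ∈ T.verts := hS (by simp)
    have ha' : wa ∈ T.verts := hS (by simp)
    have hb' : wb ∈ T.verts := hS (by simp)
    rcases structure2 T hT (Set.toFinite _) (hcard T hinj) hx' ha' hb' hxa hxb hab
      with ⟨m1, m2⟩ | ⟨m0, m1⟩
    · exfalso
      have := hinj m1 m2 hcc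
      rw [Sym2.eq_iff] at this
      rcases this with ⟨_, hh⟩ | ⟨hh, _⟩
      · exact hab hh
      · exact hxb hh
    · refine ⟨T.edgeSet_subset m0, ?_⟩
      rcases m1 with m1 | m1
      · intro hq
        have := hinj m0 m1 hq
        rw [Sym2.eq_iff] at this
        rcases this with ⟨hh, _⟩ | ⟨_, hh⟩
        · exact hxa hh.symm
        · exact hxb hh.symm
      · rw [hcc]
        intro hq
        have := hinj m0 m1 hq
        rw [Sym2.eq_iff] at this
        rcases this with ⟨hh, _⟩ | ⟨hh, _⟩
        · exact hxa hh.symm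
        · exact hab hh
  -- combine
  have key : ∀ wa wb : V, u ≠ wa → u ≠ wb → v ≠ wa → v ≠ wb → wa ≠ wb →
      c s(u, wa) = c s(u, wb) → False := by
    intro wa wb hua hub hva hvb hab hcc
    obtain ⟨hda, hma, hmva⟩ := step1 wa hua hva
    obtain ⟨hdb, hmb, hmvb⟩ := step1 wb hub hvb
    have ca2 := hc _ hma
    have cb2 := hc _ hmb
    have cva2 := hc _ hmva
    have cvb2 := hc _ hmvb
    have hccv : c s(v, wa) = c s(v, wb) := by omega
    obtain ⟨hm, hd⟩ := step2 u wa wb hua hub hab hcc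
    obtain ⟨_, hd'⟩ := step2 v wa wb hva hvb hab hccv
    have := hc _ hm
    omega
  obtain ⟨_, h1, _⟩ := step1 w1 hu1 hv1
  obtain ⟨_, h2, _⟩ := step1 w2 hu2 hv2
  have c1 := hc _ h1
  have c2 := hc _ h2
  by_cases h12 : c s(u, w1) = c s(u, w2)
  · exact key w1 w2 hu1 hu2 hv1 hv2 hw12 h12
  · by_cases h13 : c s(u, w1) = c s(u, w3)
    · exact key w1 w3 hu1 hu3 hv1 hv3 hw13 h13
    · refine key w2 w3 hu2 hu3 hv2 hv3 hw23 ?_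
      obtain ⟨_, h3, _⟩ := step1 w3 hu3 hv3
      have c3 := hc _ h3
      omega
end LB2



def colFun (i j : ℕ) : ℕ := if i = j then 0 else if i < j then 1 else 2

lemma colFun_self (i : ℕ) : colFun i i = 0 := by simp [colFun]
lemma colFun_lt {i j : ℕ} (h : i < j) : colFun i j = 1 := by
  simp only [colFun]; rw [if_neg (by omega), if_pos h]
lemma colFun_gt {i j : ℕ} (h : j < i) : colFun i j = 2 := by
  simp only [colFun]; rw [if_neg (by omega), if_neg (by omega)]
lemma colFun_lt_three (i j : ℕ) : colFun i j < 3 := by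
  simp only [colFun]; split_ifs <;> omega
lemma colFun_eq_zero {i j : ℕ} (h : colFun i j = 0) : i = j := by
  by_contra hne
  rcases Nat.lt_or_ge i j with hh | hh
  · rw [colFun_lt hh] at h; omega
  · rw [colFun_gt (by omega)] at h; omega

def crossCol {α β : Type*} (fα : α → ℕ) (fβ : β → ℕ) : Sym2 (α ⊕ β) → ℕ :=
  Sym2.lift ⟨fun x y => match x, y with
    | .inl a, .inr b => colFun (fα a) (fβ b)
    | .inr b, .inl a => colFun (fα a) (fβ b)
    | _, _ => 0, by rintro (a | a) (b | b) <;> rfl⟩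

@[simp] lemma crossCol_lr {α β : Type*} (fα : α → ℕ) (fβ : β → ℕ) (a : α) (b : β) :
    crossCol fα fβ s(Sum.inl a, Sum.inr b) = colFun (fα a) (fβ b) := rfl
@[simp] lemma crossCol_rl {α β : Type*} (fα : α → ℕ) (fβ : β → ℕ) (a : α) (b : β) :
    crossCol fα fβ s(Sum.inr b, Sum.inl a) = colFun (fα a) (fβ b) := rfl
lemma crossCol_lt_three {α β : Type*} (fα : α → ℕ) (fβ : β → ℕ) (e : Sym2 (α ⊕ β)) :
    crossCol fα fβ e < 3 := by
  induction e using Sym2.ind with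
  | _ x y =>
    rcases x with a | b <;> rcases y with a' | b'
    · exact (by norm_num : (0:ℕ) < 3)
    · exact colFun_lt_three _ _
    · exact colFun_lt_three _ _
    · exact (by norm_num : (0:ℕ) < 3)

section Trees
variable {V : Type*} {Γ : SimpleGraph V} {c : Sym2 V → ℕ}

lemma tree_point (v : V) :
    ∃ T : Γ.Subgraph, T.Connected ∧ v ∈ T.verts ∧ Set.InjOn c T.edgeSet := by
  refine ⟨Γ.singletonSubgraph v, Subgraph.singletonSubgraph_connected, by simp, ?_⟩
  rw [edgeSet_singletonSubgraph]
  exact Set.injOn_empty c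

lemma tree_edge {x y : V} (h : Γ.Adj x y) :
    ∃ T : Γ.Subgraph, T.Connected ∧ x ∈ T.verts ∧ y ∈ T.verts ∧ Set.InjOn c T.edgeSet := by
  refine ⟨Γ.subgraphOfAdj h, Subgraph.subgraphOfAdj_connected h, by simp, by simp, ?_⟩
  rw [edgeSet_subgraphOfAdj]
  exact Set.injOn_singleton c _

lemma tree_path2 {x m y : V} (h1 : Γ.Adj x m) (h2 : Γ.Adj m y)
    (d : c s(x, m) ≠ c s(m, y)) :
    ∃ T : Γ.Subgraph, T.Connected ∧ x ∈ T.verts ∧ m ∈ T.verts ∧ y ∈ T.verts ∧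
      Set.InjOn c T.edgeSet := by
  refine ⟨Γ.subgraphOfAdj h1 ⊔ Γ.subgraphOfAdj h2,
    Subgraph.connected_sup (Subgraph.subgraphOfAdj_connected h1).preconnected (Subgraph.subgraphOfAdj_connected h2).preconnected ⟨m, by simp⟩,
    by simp [Subgraph.verts_sup], by simp [Subgraph.verts_sup], by simp [Subgraph.verts_sup], ?_⟩
  intro e he e' he' hcc
  rw [Subgraph.edgeSet_sup, edgeSet_subgraphOfAdj, edgeSet_subgraphOfAdj] at he he'
  rcases he with rfl | rfl <;> rcases he' with rfl | rfl <;> first | rfl | omega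

lemma tree_star3 {m x y z : V} (h1 : Γ.Adj m x) (h2 : Γ.Adj m y) (h3 : Γ.Adj m z)
    (d12 : c s(m, x) ≠ c s(m, y)) (d13 : c s(m, x) ≠ c s(m, z))
    (d23 : c s(m, y) ≠ c s(m, z)) :
    ∃ T : Γ.Subgraph, T.Connected ∧ x ∈ T.verts ∧ y ∈ T.verts ∧ z ∈ T.verts ∧
      Set.InjOn c T.edgeSet := by
  refine ⟨Γ.subgraphOfAdj h1 ⊔ Γ.subgraphOfAdj h2 ⊔ Γ.subgraphOfAdj h3,
    Subgraph.connected_sup (Subgraph.connected_sup (Subgraph.subgraphOfAdj_connected h1).preconnected (Subgraph.subgraphOfAdj_connected h2).preconnected ⟨m, by simp⟩).preconnected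
      (Subgraph.subgraphOfAdj_connected h3).preconnected ⟨m, by simp [Subgraph.verts_sup]⟩,
    by simp [Subgraph.verts_sup], by simp [Subgraph.verts_sup], by simp [Subgraph.verts_sup], ?_⟩
  intro e he e' he' hcc
  rw [Subgraph.edgeSet_sup, Subgraph.edgeSet_sup, edgeSet_subgraphOfAdj,
    edgeSet_subgraphOfAdj, edgeSet_subgraphOfAdj] at he he'
  rcases he with (rfl | rfl) | rfl <;> rcases he' with (rfl | rfl) | rfl <;>
    first | rfl | omega

lemma tree_path3 {x p q y : V} (h1 : Γ.Adj x p) (h2 : Γ.Adj p q) (h3 : Γ.Adj q y)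
    (d12 : c s(x, p) ≠ c s(p, q)) (d13 : c s(x, p) ≠ c s(q, y))
    (d23 : c s(p, q) ≠ c s(q, y)) :
    ∃ T : Γ.Subgraph, T.Connected ∧ x ∈ T.verts ∧ p ∈ T.verts ∧ q ∈ T.verts ∧
      y ∈ T.verts ∧ Set.InjOn c T.edgeSet := by
  refine ⟨Γ.subgraphOfAdj h1 ⊔ Γ.subgraphOfAdj h2 ⊔ Γ.subgraphOfAdj h3,
    Subgraph.connected_sup (Subgraph.connected_sup (Subgraph.subgraphOfAdj_connected h1).preconnected (Subgraph.subgraphOfAdj_connected h2).preconnected ⟨p, by simp⟩).preconnected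
      (Subgraph.subgraphOfAdj_connected h3).preconnected ⟨q, by simp [Subgraph.verts_sup]⟩,
    by simp [Subgraph.verts_sup], by simp [Subgraph.verts_sup],
    by simp [Subgraph.verts_sup], by simp [Subgraph.verts_sup], ?_⟩
  intro e he e' he' hcc
  rw [Subgraph.edgeSet_sup, Subgraph.edgeSet_sup, edgeSet_subgraphOfAdj,
    edgeSet_subgraphOfAdj, edgeSet_subgraphOfAdj] at he he'
  rcases he with (rfl | rfl) | rfl <;> rcases he' with (rfl | rfl) | rfl <;>
    first | rfl | omega

end Trees

lemma joinGraph_adj_lr {α β : Type*} (G : SimpleGraph α) (H : SimpleGraph β)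
    (a : α) (b : β) : (joinGraph G H).Adj (Sum.inl a) (Sum.inr b) := trivial
lemma joinGraph_adj_rl {α β : Type*} (G : SimpleGraph α) (H : SimpleGraph β)
    (a : α) (b : β) : (joinGraph G H).Adj (Sum.inr b) (Sum.inl a) := trivial

section Cases
variable {α β : Type*} {s : ℕ} (eα : α ≃ Fin s) (eβ : β ≃ Fin s)
  (G : SimpleGraph α) (H : SimpleGraph β)

local notation "Γ" => joinGraph G H
local notation "fα" => fun a => ((eα a : Fin s) : ℕ)
local notation "fβ" => fun b => ((eβ b : Fin s) : ℕ)
local notation "cc" => crossCol (fun a => ((eα a : Fin s) : ℕ)) (fun b => ((eβ b : Fin s) : ℕ))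

lemma fβ_symm (i : Fin s) : ((eβ (eβ.symm i) : Fin s) : ℕ) = (i : ℕ) := by simp
lemma fα_symm (i : Fin s) : ((eα (eα.symm i) : Fin s) : ℕ) = (i : ℕ) := by simp

/-- Star at `inr (eβ.symm (eα a2))` for three sorted G-vertices. -/
lemma star_for {a1 a2 a3 : α} (h12 : ((eα a1 : Fin s) : ℕ) < eα a2)
    (h23 : ((eα a2 : Fin s) : ℕ) < eα a3) :
    ∃ T : (Γ).Subgraph, T.Connected ∧ Sum.inl a1 ∈ T.verts ∧ Sum.inl a2 ∈ T.verts ∧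
      Sum.inl a3 ∈ T.verts ∧ Set.InjOn cc T.edgeSet := by
  have k1 : cc s(Sum.inr (eβ.symm (eα a2)), Sum.inl a1) = 1 := by
    rw [crossCol_rl, fβ_symm]; exact colFun_lt h12
  have k2 : cc s(Sum.inr (eβ.symm (eα a2)), Sum.inl a2) = 0 := by
    rw [crossCol_rl, fβ_symm]; exact colFun_self _
  have k3 : cc s(Sum.inr (eβ.symm (eα a2)), Sum.inl a3) = 2 := by
    rw [crossCol_rl, fβ_symm]; exact colFun_gt (by omega)
  exact tree_star3 (c := cc) (joinGraph_adj_rl G H a1 (eβ.symm (eα a2)))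
    (joinGraph_adj_rl G H a2 (eβ.symm (eα a2)))
    (joinGraph_adj_rl G H a3 (eβ.symm (eα a2))) (by omega) (by omega) (by omega)

lemma caseAAA {a1 a2 a3 : α} (h12 : a1 ≠ a2) (h13 : a1 ≠ a3) (h23 : a2 ≠ a3) :
    ∃ T : (Γ).Subgraph, T.Connected ∧ Sum.inl a1 ∈ T.verts ∧ Sum.inl a2 ∈ T.verts ∧
      Sum.inl a3 ∈ T.verts ∧ Set.InjOn cc T.edgeSet := by
  have n12 : ((eα a1 : Fin s) : ℕ) ≠ eα a2 := fun h => h12 (eα.injective (Fin.val_injective h))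
  have n13 : ((eα a1 : Fin s) : ℕ) ≠ eα a3 := fun h => h13 (eα.injective (Fin.val_injective h))
  have n23 : ((eα a2 : Fin s) : ℕ) ≠ eα a3 := fun h => h23 (eα.injective (Fin.val_injective h))
  rcases Nat.lt_or_ge (eα a1 : ℕ) (eα a2 : ℕ) with o12 | o12 <;>
    rcases Nat.lt_or_ge (eα a1 : ℕ) (eα a3 : ℕ) with o13 | o13 <;>
    rcases Nat.lt_or_ge (eα a2 : ℕ) (eα a3 : ℕ) with o23 | o23
  · obtain ⟨T, hc, m1, m2, m3, hi⟩ := star_for eα eβ G H o12 o23; exact ⟨T, hc, m1, m2, m3, hi⟩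
  · obtain ⟨T, hc, m1, m3, m2, hi⟩ := star_for eα eβ G H (a1 := a1) (a2 := a3) (a3 := a2) o13 (by omega)
    exact ⟨T, hc, m1, m2, m3, hi⟩
  · omega
  · obtain ⟨T, hc, m3, m1, m2, hi⟩ := star_for eα eβ G H (a1 := a3) (a2 := a1) (a3 := a2) (by omega) o12
    exact ⟨T, hc, m1, m2, m3, hi⟩
  · obtain ⟨T, hc, m2, m1, m3, hi⟩ := star_for eα eβ G H (a1 := a2) (a2 := a1) (a3 := a3) (by omega) o13
    exact ⟨T, hc, m1, m2, m3, hi⟩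
  · omega
  · obtain ⟨T, hc, m2, m3, m1, hi⟩ := star_for eα eβ G H (a1 := a2) (a2 := a3) (a3 := a1) o23 (by omega)
    exact ⟨T, hc, m1, m2, m3, hi⟩
  · obtain ⟨T, hc, m3, m2, m1, hi⟩ := star_for eα eβ G H (a1 := a3) (a2 := a2) (a3 := a1) (by omega) (by omega)
    exact ⟨T, hc, m1, m2, m3, hi⟩

lemma star_forB {b1 b2 b3 : β} (h12 : ((eβ b1 : Fin s) : ℕ) < eβ b2)
    (h23 : ((eβ b2 : Fin s) : ℕ) < eβ b3) :
    ∃ T : (Γ).Subgraph, T.Connected ∧ Sum.inr b1 ∈ T.verts ∧ Sum.inr b2 ∈ T.verts ∧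
      Sum.inr b3 ∈ T.verts ∧ Set.InjOn cc T.edgeSet := by
  have k1 : cc s(Sum.inl (eα.symm (eβ b2)), Sum.inr b1) = 2 := by
    rw [crossCol_lr, fα_symm]; exact colFun_gt h12
  have k2 : cc s(Sum.inl (eα.symm (eβ b2)), Sum.inr b2) = 0 := by
    rw [crossCol_lr, fα_symm]; exact colFun_self _
  have k3 : cc s(Sum.inl (eα.symm (eβ b2)), Sum.inr b3) = 1 := by
    rw [crossCol_lr, fα_symm]; exact colFun_lt (by omega)
  exact tree_star3 (c := cc) (joinGraph_adj_lr G H (eα.symm (eβ b2)) b1)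
    (joinGraph_adj_lr G H (eα.symm (eβ b2)) b2)
    (joinGraph_adj_lr G H (eα.symm (eβ b2)) b3) (by omega) (by omega) (by omega)

lemma caseBBB {b1 b2 b3 : β} (h12 : b1 ≠ b2) (h13 : b1 ≠ b3) (h23 : b2 ≠ b3) :
    ∃ T : (Γ).Subgraph, T.Connected ∧ Sum.inr b1 ∈ T.verts ∧ Sum.inr b2 ∈ T.verts ∧
      Sum.inr b3 ∈ T.verts ∧ Set.InjOn cc T.edgeSet := by
  have n12 : ((eβ b1 : Fin s) : ℕ) ≠ eβ b2 := fun h => h12 (eβ.injective (Fin.val_injective h))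
  have n13 : ((eβ b1 : Fin s) : ℕ) ≠ eβ b3 := fun h => h13 (eβ.injective (Fin.val_injective h))
  have n23 : ((eβ b2 : Fin s) : ℕ) ≠ eβ b3 := fun h => h23 (eβ.injective (Fin.val_injective h))
  rcases Nat.lt_or_ge (eβ b1 : ℕ) (eβ b2 : ℕ) with o12 | o12 <;>
    rcases Nat.lt_or_ge (eβ b1 : ℕ) (eβ b3 : ℕ) with o13 | o13 <;>
    rcases Nat.lt_or_ge (eβ b2 : ℕ) (eβ b3 : ℕ) with o23 | o23
  · obtain ⟨T, hc, m1, m2, m3, hi⟩ := star_forB eα eβ G H o12 o23; exact ⟨T, hc, m1, m2, m3, hi⟩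
  · obtain ⟨T, hc, m1, m3, m2, hi⟩ := star_forB eα eβ G H (b1 := b1) (b2 := b3) (b3 := b2) o13 (by omega)
    exact ⟨T, hc, m1, m2, m3, hi⟩
  · omega
  · obtain ⟨T, hc, m3, m1, m2, hi⟩ := star_forB eα eβ G H (b1 := b3) (b2 := b1) (b3 := b2) (by omega) o12
    exact ⟨T, hc, m1, m2, m3, hi⟩
  · obtain ⟨T, hc, m2, m1, m3, hi⟩ := star_forB eα eβ G H (b1 := b2) (b2 := b1) (b3 := b3) (by omega) o13
    exact ⟨T, hc, m1, m2, m3, hi⟩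
  · omega
  · obtain ⟨T, hc, m2, m3, m1, hi⟩ := star_forB eα eβ G H (b1 := b2) (b2 := b3) (b3 := b1) o23 (by omega)
    exact ⟨T, hc, m1, m2, m3, hi⟩
  · obtain ⟨T, hc, m3, m2, m1, hi⟩ := star_forB eα eβ G H (b1 := b3) (b2 := b2) (b3 := b1) (by omega) (by omega)
    exact ⟨T, hc, m1, m2, m3, hi⟩

lemma pathAAB_lt {a1 a2 : α} (b : β) (h1 : ((eα a1 : Fin s) : ℕ) < eα a2)
    (h2 : ((eα a2 : Fin s) : ℕ) < eβ b) :
    ∃ T : (Γ).Subgraph, T.Connected ∧ Sum.inl a1 ∈ T.verts ∧ Sum.inl a2 ∈ T.verts ∧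
      Sum.inr b ∈ T.verts ∧ Set.InjOn cc T.edgeSet := by
  have k1 : cc s(Sum.inr b, Sum.inl a2) = 1 := by
    rw [crossCol_rl]; exact colFun_lt h2
  have k2 : cc s(Sum.inl a2, Sum.inr (eβ.symm (eα a1))) = 2 := by
    rw [crossCol_lr, fβ_symm]; exact colFun_gt h1
  have k3 : cc s(Sum.inr (eβ.symm (eα a1)), Sum.inl a1) = 0 := by
    rw [crossCol_rl, fβ_symm]; exact colFun_self _
  obtain ⟨T, hc, mx, mp, mq, my, hi⟩ := tree_path3 (c := cc) (joinGraph_adj_rl G H a2 b)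
    (joinGraph_adj_lr G H a2 (eβ.symm (eα a1)))
    (joinGraph_adj_rl G H a1 (eβ.symm (eα a1))) (by omega) (by omega) (by omega)
  exact ⟨T, hc, my, mp, mx, hi⟩

lemma pathAAB_gt {a1 a2 : α} (b : β) (h1 : ((eα a1 : Fin s) : ℕ) < eα a2)
    (h2 : ((eβ b : Fin s) : ℕ) < eα a1) :
    ∃ T : (Γ).Subgraph, T.Connected ∧ Sum.inl a1 ∈ T.verts ∧ Sum.inl a2 ∈ T.verts ∧
      Sum.inr b ∈ T.verts ∧ Set.InjOn cc T.edgeSet := by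
  have k1 : cc s(Sum.inr b, Sum.inl a1) = 2 := by
    rw [crossCol_rl]; exact colFun_gt h2
  have k2 : cc s(Sum.inl a1, Sum.inr (eβ.symm (eα a2))) = 1 := by
    rw [crossCol_lr, fβ_symm]; exact colFun_lt h1
  have k3 : cc s(Sum.inr (eβ.symm (eα a2)), Sum.inl a2) = 0 := by
    rw [crossCol_rl, fβ_symm]; exact colFun_self _
  obtain ⟨T, hc, mx, mp, mq, my, hi⟩ := tree_path3 (c := cc) (joinGraph_adj_rl G H a1 b)
    (joinGraph_adj_lr G H a1 (eβ.symm (eα a2)))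
    (joinGraph_adj_rl G H a2 (eβ.symm (eα a2))) (by omega) (by omega) (by omega)
  exact ⟨T, hc, mp, my, mx, hi⟩

lemma caseAAB {a1 a2 : α} (b : β) (h12 : a1 ≠ a2) :
    ∃ T : (Γ).Subgraph, T.Connected ∧ Sum.inl a1 ∈ T.verts ∧ Sum.inl a2 ∈ T.verts ∧
      Sum.inr b ∈ T.verts ∧ Set.InjOn cc T.edgeSet := by
  have n12 : ((eα a1 : Fin s) : ℕ) ≠ eα a2 := fun h => h12 (eα.injective (Fin.val_injective h))
  by_cases hcc : colFun ((eα a1 : Fin s) : ℕ) ((eβ b : Fin s) : ℕ)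
      = colFun ((eα a2 : Fin s) : ℕ) ((eβ b : Fin s) : ℕ)
  · rcases Nat.lt_trichotomy ((eα a1 : Fin s) : ℕ) ((eβ b : Fin s) : ℕ) with o1 | o1 | o1 <;>
      rcases Nat.lt_trichotomy ((eα a2 : Fin s) : ℕ) ((eβ b : Fin s) : ℕ) with o2 | o2 | o2
    · rcases Nat.lt_trichotomy ((eα a1 : Fin s) : ℕ) ((eα a2 : Fin s) : ℕ) with o3 | o3 | o3
      · exact pathAAB_lt eα eβ G H b o3 o2
      · exact absurd o3 n12
      · obtain ⟨T, hc, m2, m1, mb, hi⟩ := pathAAB_lt eα eβ G H b o3 o1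
        exact ⟨T, hc, m1, m2, mb, hi⟩
    · exfalso; rw [colFun_lt o1, o2, colFun_self] at hcc; omega
    · exfalso; rw [colFun_lt o1, colFun_gt o2] at hcc; omega
    · exfalso; rw [o1, colFun_self, colFun_lt o2] at hcc; omega
    · exact absurd (o1.trans o2.symm) n12
    · exfalso; rw [o1, colFun_self, colFun_gt o2] at hcc; omega
    · exfalso; rw [colFun_gt o1, colFun_lt o2] at hcc; omega
    · exfalso; rw [colFun_gt o1, o2, colFun_self] at hcc; omega
    · rcases Nat.lt_trichotomy ((eα a1 : Fin s) : ℕ) ((eα a2 : Fin s) : ℕ) with o3 | o3 | o3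
      · exact pathAAB_gt eα eβ G H b o3 o1
      · exact absurd o3 n12
      · obtain ⟨T, hc, m2, m1, mb, hi⟩ := pathAAB_gt eα eβ G H b o3 o2
        exact ⟨T, hc, m1, m2, mb, hi⟩
  · obtain ⟨T, hc, m1, mb, m2, hi⟩ := tree_path2 (c := cc)
      (joinGraph_adj_lr G H a1 b) (joinGraph_adj_rl G H a2 b)
      (by rw [crossCol_lr, crossCol_rl]; exact hcc)
    exact ⟨T, hc, m1, m2, mb, hi⟩

lemma pathABB_one (a : α) {b1 b2 : β} (h1 : ((eβ b1 : Fin s) : ℕ) < eβ b2)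
    (h2 : ((eα a : Fin s) : ℕ) < eβ b2) :
    ∃ T : (Γ).Subgraph, T.Connected ∧ Sum.inl a ∈ T.verts ∧ Sum.inr b1 ∈ T.verts ∧
      Sum.inr b2 ∈ T.verts ∧ Set.InjOn cc T.edgeSet := by
  have k1 : cc s(Sum.inl a, Sum.inr b2) = 1 := by
    rw [crossCol_lr]; exact colFun_lt h2
  have k2 : cc s(Sum.inr b2, Sum.inl (eα.symm (eβ b2))) = 0 := by
    rw [crossCol_rl, fα_symm]; exact colFun_self _
  have k3 : cc s(Sum.inl (eα.symm (eβ b2)), Sum.inr b1) = 2 := by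
    rw [crossCol_lr, fα_symm]; exact colFun_gt h1
  obtain ⟨T, hc, mx, mp, mq, my, hi⟩ := tree_path3 (c := cc)
    (joinGraph_adj_lr G H a b2) (joinGraph_adj_rl G H (eα.symm (eβ b2)) b2)
    (joinGraph_adj_lr G H (eα.symm (eβ b2)) b1) (by omega) (by omega) (by omega)
  exact ⟨T, hc, mx, my, mp, hi⟩

lemma pathABB_two (a : α) {b1 b2 : β} (h1 : ((eβ b1 : Fin s) : ℕ) < eβ b2)
    (h2 : ((eβ b1 : Fin s) : ℕ) < eα a) :
    ∃ T : (Γ).Subgraph, T.Connected ∧ Sum.inl a ∈ T.verts ∧ Sum.inr b1 ∈ T.verts ∧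
      Sum.inr b2 ∈ T.verts ∧ Set.InjOn cc T.edgeSet := by
  have k1 : cc s(Sum.inl a, Sum.inr b1) = 2 := by
    rw [crossCol_lr]; exact colFun_gt h2
  have k2 : cc s(Sum.inr b1, Sum.inl (eα.symm (eβ b1))) = 0 := by
    rw [crossCol_rl, fα_symm]; exact colFun_self _
  have k3 : cc s(Sum.inl (eα.symm (eβ b1)), Sum.inr b2) = 1 := by
    rw [crossCol_lr, fα_symm]; exact colFun_lt h1
  obtain ⟨T, hc, mx, mp, mq, my, hi⟩ := tree_path3 (c := cc)
    (joinGraph_adj_lr G H a b1) (joinGraph_adj_rl G H (eα.symm (eβ b1)) b1)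
    (joinGraph_adj_lr G H (eα.symm (eβ b1)) b2) (by omega) (by omega) (by omega)
  exact ⟨T, hc, mx, mp, my, hi⟩

lemma caseABB (a : α) {b1 b2 : β} (h12 : b1 ≠ b2) :
    ∃ T : (Γ).Subgraph, T.Connected ∧ Sum.inl a ∈ T.verts ∧ Sum.inr b1 ∈ T.verts ∧
      Sum.inr b2 ∈ T.verts ∧ Set.InjOn cc T.edgeSet := by
  have n12 : ((eβ b1 : Fin s) : ℕ) ≠ eβ b2 := fun h => h12 (eβ.injective (Fin.val_injective h))
  by_cases hcc : colFun ((eα a : Fin s) : ℕ) ((eβ b1 : Fin s) : ℕ)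
      = colFun ((eα a : Fin s) : ℕ) ((eβ b2 : Fin s) : ℕ)
  · rcases Nat.lt_trichotomy ((eα a : Fin s) : ℕ) ((eβ b1 : Fin s) : ℕ) with o1 | o1 | o1 <;>
      rcases Nat.lt_trichotomy ((eα a : Fin s) : ℕ) ((eβ b2 : Fin s) : ℕ) with o2 | o2 | o2
    · rcases Nat.lt_trichotomy ((eβ b1 : Fin s) : ℕ) ((eβ b2 : Fin s) : ℕ) with o3 | o3 | o3
      · exact pathABB_one eα eβ G H a o3 o2
      · exact absurd o3 n12
      · obtain ⟨T, hc, ma, m2, m1, hi⟩ := pathABB_one eα eβ G H a o3 o1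
        exact ⟨T, hc, ma, m1, m2, hi⟩
    · exfalso; rw [colFun_lt o1, o2, colFun_self] at hcc; omega
    · exfalso; rw [colFun_lt o1, colFun_gt o2] at hcc; omega
    · exfalso; rw [o1, colFun_self, colFun_lt (show ((eβ b1 : Fin s) : ℕ) < eβ b2 by omega)] at hcc; omega
    · exact absurd (o1.symm.trans o2) n12
    · exfalso; rw [o1, colFun_self, colFun_gt (show ((eβ b2 : Fin s) : ℕ) < eβ b1 by omega)] at hcc; omega
    · exfalso; rw [colFun_gt o1, colFun_lt o2] at hcc; omega
    · exfalso; rw [colFun_gt o1, o2, colFun_self] at hcc; omega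
    · rcases Nat.lt_trichotomy ((eβ b1 : Fin s) : ℕ) ((eβ b2 : Fin s) : ℕ) with o3 | o3 | o3
      · exact pathABB_two eα eβ G H a o3 o1
      · exact absurd o3 n12
      · obtain ⟨T, hc, ma, m2, m1, hi⟩ := pathABB_two eα eβ G H a o3 o2
        exact ⟨T, hc, ma, m1, m2, hi⟩
  · obtain ⟨T, hc, m1, ma, m2, hi⟩ := tree_path2 (c := cc)
      (joinGraph_adj_rl G H a b1) (joinGraph_adj_lr G H a b2)
      (by rw [crossCol_rl, crossCol_lr]; exact hcc)
    exact ⟨T, hc, ma, m1, m2, hi⟩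

lemma pairAA {a1 a2 : α} (h12 : a1 ≠ a2) :
    ∃ T : (Γ).Subgraph, T.Connected ∧ Sum.inl a1 ∈ T.verts ∧ Sum.inl a2 ∈ T.verts ∧
      Set.InjOn cc T.edgeSet := by
  have n12 : ((eα a1 : Fin s) : ℕ) ≠ eα a2 := fun h => h12 (eα.injective (Fin.val_injective h))
  obtain ⟨T, hc, m1, mm, m2, hi⟩ := tree_path2 (c := cc)
    (joinGraph_adj_lr G H a1 (eβ.symm (eα a1)))
    (joinGraph_adj_rl G H a2 (eβ.symm (eα a1))) (by
      rw [crossCol_lr, crossCol_rl, fβ_symm, colFun_self]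
      intro h
      exact n12 (colFun_eq_zero h.symm).symm)
  exact ⟨T, hc, m1, m2, hi⟩

lemma pairBB {b1 b2 : β} (h12 : b1 ≠ b2) :
    ∃ T : (Γ).Subgraph, T.Connected ∧ Sum.inr b1 ∈ T.verts ∧ Sum.inr b2 ∈ T.verts ∧
      Set.InjOn cc T.edgeSet := by
  have n12 : ((eβ b1 : Fin s) : ℕ) ≠ eβ b2 := fun h => h12 (eβ.injective (Fin.val_injective h))
  obtain ⟨T, hc, m1, mm, m2, hi⟩ := tree_path2 (c := cc)
    (joinGraph_adj_rl G H (eα.symm (eβ b1)) b1)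
    (joinGraph_adj_lr G H (eα.symm (eβ b1)) b2) (by
      rw [crossCol_rl, crossCol_lr, fα_symm, colFun_self]
      intro h
      exact n12 (colFun_eq_zero h.symm))
  exact ⟨T, hc, m1, m2, hi⟩

lemma key2 (x y : α ⊕ β) :
    ∃ T : (Γ).Subgraph, T.Connected ∧ x ∈ T.verts ∧ y ∈ T.verts ∧
      Set.InjOn cc T.edgeSet := by
  by_cases hxy : x = y
  · obtain ⟨T, hc, m, hi⟩ := @tree_point _ (joinGraph G H) cc x
    exact ⟨T, hc, m, hxy ▸ m, hi⟩
  · rcases x with a1 | b1 <;> rcases y with a2 | b2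
    · exact pairAA eα eβ G H (fun h => hxy (congrArg _ h))
    · obtain ⟨T, hc, m1, m2, hi⟩ := tree_edge (c := cc) (joinGraph_adj_lr G H a1 b2)
      exact ⟨T, hc, m1, m2, hi⟩
    · obtain ⟨T, hc, m1, m2, hi⟩ := tree_edge (c := cc) (joinGraph_adj_rl G H a2 b1)
      exact ⟨T, hc, m1, m2, hi⟩
    · exact pairBB eα eβ G H (fun h => hxy (congrArg _ h))

lemma key3 (x y z : α ⊕ β) :
    ∃ T : (Γ).Subgraph, T.Connected ∧ x ∈ T.verts ∧ y ∈ T.verts ∧ z ∈ T.verts ∧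
      Set.InjOn cc T.edgeSet := by
  by_cases hxy : x = y
  · obtain ⟨T, hc, m1, m2, hi⟩ := key2 eα eβ G H y z
    exact ⟨T, hc, hxy ▸ m1, m1, m2, hi⟩
  · by_cases hxz : x = z
    · obtain ⟨T, hc, m1, m2, hi⟩ := key2 eα eβ G H x y
      exact ⟨T, hc, m1, m2, hxz ▸ m1, hi⟩
    · by_cases hyz : y = z
      · obtain ⟨T, hc, m1, m2, hi⟩ := key2 eα eβ G H x y
        exact ⟨T, hc, m1, m2, hyz ▸ m2, hi⟩
      · have inj : ∀ (p q : α) , Sum.inl p = (Sum.inl q : α ⊕ β) → p = q := by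
          intro p q h; exact Sum.inl.inj h
        have injr : ∀ (p q : β) , Sum.inr p = (Sum.inr q : α ⊕ β) → p = q := by
          intro p q h; exact Sum.inr.inj h
        rcases x with a1 | b1 <;> rcases y with a2 | b2 <;> rcases z with a3 | b3
        · exact caseAAA eα eβ G H (fun h => hxy (congrArg Sum.inl h)) (fun h => hxz (congrArg Sum.inl h))
            (fun h => hyz (congrArg Sum.inl h))
        · exact caseAAB eα eβ G H b3 (fun h => hxy (congrArg _ h))
        · obtain ⟨T, hc, m1, m2, mb, hi⟩ := caseAAB eα eβ G H b2
            (fun h => hxz (congrArg _ h))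
          exact ⟨T, hc, m1, mb, m2, hi⟩
        · obtain ⟨T, hc, ma, m1, m2, hi⟩ := caseABB eα eβ G H a1
            (fun h => hyz (congrArg _ h))
          exact ⟨T, hc, ma, m1, m2, hi⟩
        · obtain ⟨T, hc, m1, m2, mb, hi⟩ := caseAAB eα eβ G H b1
            (fun h => hyz (congrArg _ h))
          exact ⟨T, hc, mb, m1, m2, hi⟩
        · obtain ⟨T, hc, ma, m1, m2, hi⟩ := caseABB eα eβ G H a2
            (fun h => hxz (congrArg _ h))
          exact ⟨T, hc, m1, ma, m2, hi⟩
        · obtain ⟨T, hc, ma, m1, m2, hi⟩ := caseABB eα eβ G H a3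
            (fun h => hxy (congrArg _ h))
          exact ⟨T, hc, m1, m2, ma, hi⟩
        · exact caseBBB eα eβ G H (fun h => hxy (congrArg Sum.inr h)) (fun h => hxz (congrArg Sum.inr h))
            (fun h => hyz (congrArg Sum.inr h))
end Cases


section Helpers

lemma subset_triple {V : Type*} [Nonempty V] {S : Set V} (hfin : S.Finite)
    (h : S.ncard ≤ 3) : ∃ x y z : V, S ⊆ {x, y, z} := by
  rcases (by omega : S.ncard = 0 ∨ S.ncard = 1 ∨ S.ncard = 2 ∨ S.ncard = 3) with h0 | h1 | h2 | h3
  · obtain rfl := (Set.ncard_eq_zero hfin).mp h0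
    exact ⟨Classical.arbitrary V, Classical.arbitrary V, Classical.arbitrary V, by simp⟩
  · obtain ⟨a, rfl⟩ := Set.ncard_eq_one.mp h1
    exact ⟨a, a, a, by simp⟩
  · obtain ⟨a, b, _, rfl⟩ := Set.ncard_eq_two.mp h2
    exact ⟨a, a, b, by intro w hw; rcases hw with rfl | rfl <;> simp⟩
  · obtain ⟨a, b, c, _, _, _, rfl⟩ := Set.ncard_eq_three.mp h3
    exact ⟨a, b, c, subset_rfl⟩

lemma exists_nonadj {γ : Type*} (G : SimpleGraph γ) (h : G ≠ ⊤) :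
    ∃ a b : γ, a ≠ b ∧ ¬ G.Adj a b := by
  by_contra hh
  push_neg at hh
  apply h
  ext a b
  simp only [SimpleGraph.top_adj]
  exact ⟨fun hadj => hadj.ne, fun hne => hh a b hne⟩

lemma three_distinct {γ : Type*} [Fintype γ] (h : 3 ≤ Fintype.card γ) :
    ∃ x y z : γ, x ≠ y ∧ x ≠ z ∧ y ≠ z := by
  let f := (Fintype.equivFin γ).symm
  refine ⟨f ⟨0, by omega⟩, f ⟨1, by omega⟩, f ⟨2, by omega⟩, ?_, ?_, ?_⟩ <;>
    · intro hq
      have := f.injective hq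
      simp [Fin.ext_iff] at this

end Helpers

/-- For connected graphs `G` and `H` with `|V(G)| = |V(H)| = s ≥ 3`, at least one of
which is not complete, `rx₃(G ∨ H) = 3`. -/
theorem rx3_join_eq_three {α β : Type*} [Fintype α] [Fintype β]
    (G : SimpleGraph α) (H : SimpleGraph β) (hG : G.Connected) (hH : H.Connected)
    (hα : 3 ≤ Fintype.card α) (hαβ : Fintype.card α = Fintype.card β)
    (hnc : G ≠ ⊤ ∨ H ≠ ⊤) :
    rx3 (joinGraph G H) = 3 := by
  classical
  have hαne : Nonempty α := Fintype.card_pos_iff.mp (by omega)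
  have hβcard : 3 ≤ Fintype.card β := hαβ ▸ hα
  set s := Fintype.card α with hs
  let eα : α ≃ Fin s := Fintype.equivFin α
  let eβ : β ≃ Fin s := (Fintype.equivFin β).trans (finCongr hαβ.symm)
  let c : Sym2 (α ⊕ β) → ℕ :=
    crossCol (fun a => ((eα a : Fin s) : ℕ)) (fun b => ((eβ b : Fin s) : ℕ))
  have hmem : 3 ∈ {n | ∃ c : Sym2 (α ⊕ β) → ℕ,
      (∀ e ∈ (joinGraph G H).edgeSet, c e < n) ∧ IsRainbowColoring3 (joinGraph G H) c} := by
    refine ⟨c, fun e _ => crossCol_lt_three _ _ e, ?_⟩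
    intro S hS
    obtain ⟨x, y, z, hsub⟩ := subset_triple (Set.toFinite S) hS
    obtain ⟨T, hcon, m1, m2, m3, hi⟩ := key3 eα eβ G H x y z
    refine ⟨T, hcon, ?_, hi⟩
    intro w hw
    rcases hsub hw with rfl | rfl | rfl <;> assumption
  have hlow : ∀ n ∈ {n | ∃ c : Sym2 (α ⊕ β) → ℕ,
      (∀ e ∈ (joinGraph G H).edgeSet, c e < n) ∧ IsRainbowColoring3 (joinGraph G H) c},
      3 ≤ n := by
    rintro n ⟨c', hc', hr'⟩
    by_contra hn
    push_neg at hn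
    have hc2 : ∀ e ∈ (joinGraph G H).edgeSet, c' e < 2 := by
      intro e he
      have := hc' e he
      omega
    rcases hnc with hG' | hH'
    · obtain ⟨a, b, hab, hnadj⟩ := exists_nonadj G hG'
      obtain ⟨w1, w2, w3, d12, d13, d23⟩ := three_distinct hβcard
      exact no_two_coloring c' hc2 hr'
        (u := Sum.inl a) (v := Sum.inl b)
        (w1 := Sum.inr w1) (w2 := Sum.inr w2) (w3 := Sum.inr w3)
        (fun h => hnadj h) (fun h => hab (Sum.inl.inj h))
        (fun h => d12 (Sum.inr.inj h)) (fun h => d13 (Sum.inr.inj h))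
        (fun h => d23 (Sum.inr.inj h))
        (by simp) (by simp) (by simp) (by simp) (by simp) (by simp)
    · obtain ⟨a, b, hab, hnadj⟩ := exists_nonadj H hH'
      obtain ⟨w1, w2, w3, d12, d13, d23⟩ := three_distinct hα
      exact no_two_coloring c' hc2 hr'
        (u := Sum.inr a) (v := Sum.inr b)
        (w1 := Sum.inl w1) (w2 := Sum.inl w2) (w3 := Sum.inl w3)
        (fun h => hnadj h) (fun h => hab (Sum.inr.inj h))
        (fun h => d12 (Sum.inl.inj h)) (fun h => d13 (Sum.inl.inj h))
        (fun h => d23 (Sum.inl.inj h))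
        (by simp) (by simp) (by simp) (by simp) (by simp) (by simp)
  exact le_antisymm (Nat.sInf_le hmem) (le_csInf ⟨3, hmem⟩ hlow)
end

section
/- Let G be a connected graph with at least 3 vertices and let G' be a graph obtained from G by splitting a vertex v, i.e., V(G') = (V(G) \ {v}) ∪ {v1, v2} for two new adjacent vertices v1, v2; the neighborhood N_G(v) is partitioned into two disjoint sets N_1 and N_2 such that in G' the vertex v1 is adjacent exactly to v2 and the vertices of N_1, the vertex v2 is adjacent exactly to v1 and the vertices of N_2, and all edges of G not incident with v are unchanged. Then rx_3(G') ≤ rx_3(G) + 1. -/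
open SimpleGraph

/-- Splitting a vertex increases the 3-rainbow index by at most one. Here `G'` is the
graph obtained from `G` by splitting the vertex `v` into two adjacent vertices
`v₁ = Sum.inl v` and `v₂ = Sum.inr ()`: the neighborhood of `v` is partitioned into
disjoint sets `N₁` and `N₂`, the vertex `v₁` is adjacent exactly to `v₂` and the
vertices of `N₁`, the vertex `v₂` is adjacent exactly to `v₁` and the vertices of
`N₂`, and all edges of `G` not incident with `v` are unchanged. Then
`rx₃(G') ≤ rx₃(G) + 1`. -/
theorem rx3_splitVertex_le {V : Type*} [Fintype V] (G : SimpleGraph V)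
    (hG : G.Connected) (hcard : 3 ≤ Fintype.card V)
    (v : V) (N1 N2 : Set V) (hpart : N1 ∪ N2 = G.neighborSet v)
    (hdisj : Disjoint N1 N2)
    (G' : SimpleGraph (V ⊕ Unit))
    (hadj : ∀ x y : V ⊕ Unit, G'.Adj x y ↔
      ((∃ a b : V, x = Sum.inl a ∧ y = Sum.inl b ∧ a ≠ v ∧ b ≠ v ∧ G.Adj a b) ∨
       (∃ a : V, x = Sum.inl a ∧ y = Sum.inl v ∧ a ∈ N1) ∨
       (∃ b : V, x = Sum.inl v ∧ y = Sum.inl b ∧ b ∈ N1) ∨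
       (∃ a : V, x = Sum.inl a ∧ y = Sum.inr () ∧ a ∈ N2) ∨
       (∃ b : V, x = Sum.inr () ∧ y = Sum.inl b ∧ b ∈ N2) ∨
       (x = Sum.inl v ∧ y = Sum.inr ()) ∨
       (x = Sum.inr () ∧ y = Sum.inl v))) :
    rx3 G' ≤ rx3 G + 1 := by
  classical
  -- the defining set for rx3 G is nonempty
  have hne : {n | ∃ c : Sym2 V → ℕ, (∀ e ∈ G.edgeSet, c e < n) ∧ IsRainbowColoring3 G c}.Nonempty := by
    haveI : Fintype (Sym2 V) := Fintype.ofFinite _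
    refine ⟨Fintype.card (Sym2 V), fun e => (Fintype.equivFin (Sym2 V) e : ℕ), ?_, ?_⟩
    · intro e _; exact (Fintype.equivFin (Sym2 V) e).2
    · intro S hS
      refine ⟨⊤, Subgraph.connected_iff'.mpr ((Subgraph.topIso).connected_iff.mpr hG), ?_, ?_⟩
      · intro x _; trivial
      · intro e _ f _ hef
        exact (Fintype.equivFin (Sym2 V)).injective (Fin.ext hef)
  obtain ⟨c, hcbound, hcrainbow⟩ := Nat.sInf_mem hne
  set n := rx3 G with hn
  -- the projection back to V
  let π : V ⊕ Unit → V := fun x => Sum.elim id (fun _ => v) x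
  -- the new coloring
  let c' : Sym2 (V ⊕ Unit) → ℕ :=
    fun e => if e = s(Sum.inl v, Sum.inr ()) then n else c (Sym2.map π e)
  have hN1 : ∀ a ∈ N1, G.Adj v a := by
    intro a ha
    have : a ∈ G.neighborSet v := hpart ▸ Set.mem_union_left _ ha
    exact this
  have hN2 : ∀ a ∈ N2, G.Adj v a := by
    intro a ha
    have : a ∈ G.neighborSet v := hpart ▸ Set.mem_union_right _ ha
    exact this
  -- bound on new coloring
  have hbound' : ∀ e ∈ G'.edgeSet, c' e < n + 1 := by
    intro e he
    induction e with
    | _ x y =>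
      rw [mem_edgeSet, hadj] at he
      by_cases hbr : s(x, y) = s(Sum.inl v, Sum.inr ())
      · simp only [c', hbr, if_pos rfl]; omega
      · have hlt : Sym2.map π s(x, y) ∈ G.edgeSet → c' s(x, y) < n + 1 := by
          intro hmem
          simp only [c', if_neg hbr]
          exact Nat.lt_succ_of_lt (hcbound _ hmem)
        rcases he with ⟨a, b, hx, hy, _, _, hab⟩ | ⟨a, hx, hy, ha⟩ | ⟨b, hx, hy, hb⟩ |
          ⟨a, hx, hy, ha⟩ | ⟨b, hx, hy, hb⟩ | ⟨hx, hy⟩ | ⟨hx, hy⟩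
        · subst hx; subst hy
          exact hlt (by simpa [π] using hab)
        · subst hx; subst hy
          exact hlt (by simpa [π] using (hN1 a ha).symm)
        · subst hx; subst hy
          exact hlt (by simpa [π] using hN1 b hb)
        · subst hx; subst hy
          exact hlt (by simpa [π] using (hN2 a ha).symm)
        · subst hx; subst hy
          exact hlt (by simpa [π, Sym2.eq_swap] using hN2 b hb)
        · exact absurd (by rw [hx, hy]) hbr
        · exact absurd (by rw [hx, hy, Sym2.eq_swap]) hbr
  -- now show rx3 G' ≤ n + 1 by exhibiting c' as a rainbow coloring
  refine Nat.sInf_le ⟨c', hbound', ?_⟩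
  intro S' hS'
  -- project the vertex set down to G
  obtain ⟨T, hTconn, hTsub, hTinj⟩ := hcrainbow (π '' S') (le_trans (Set.ncard_image_le S'.toFinite) hS')
  -- the image of an endpoint in an edge of T
  let g : V → V → V ⊕ Unit := fun a b => if b = v ∧ a ∈ N2 then Sum.inr () else Sum.inl b
  have hπg : ∀ a b, π (g a b) = b := by
    intro a b
    by_cases h : b = v ∧ a ∈ N2 <;> simp [g, h, π]
  -- some helper facts about g
  have hgv : ∀ a b, g a b = Sum.inr () ↔ (b = v ∧ a ∈ N2) := by
    intro a b
    by_cases h : b = v ∧ a ∈ N2 <;> simp [g, h]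
  have hgl : ∀ a b, ¬ (b = v ∧ a ∈ N2) → g a b = Sum.inl b := by
    intro a b h; simp [g, h]
  -- the lifted subgraph
  have hadjsub : ∀ x y : V ⊕ Unit,
      ((∃ a b, T.Adj a b ∧ x = g b a ∧ y = g a b) ∨
        (v ∈ T.verts ∧ ((x = Sum.inl v ∧ y = Sum.inr ()) ∨ (x = Sum.inr () ∧ y = Sum.inl v))))
      → G'.Adj x y := by
    intro x y h
    rw [hadj]
    rcases h with ⟨a, b, hab, hx, hy⟩ | ⟨_, ⟨hx, hy⟩ | ⟨hx, hy⟩⟩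
    · have hGab : G.Adj a b := T.adj_sub hab
      have hne' : a ≠ b := hGab.ne
      subst hx; subst hy
      by_cases hbv : b = v
      · subst b
        have hav : a ≠ v := hne'
        have haN : a ∈ N1 ∪ N2 := by rw [hpart]; exact hGab.symm
        have hxa : g v a = Sum.inl a := hgl v a (fun hc => hav hc.1)
        by_cases haN2 : a ∈ N2
        · have hyv : g a v = Sum.inr () := (hgv a v).mpr ⟨rfl, haN2⟩
          rw [hxa, hyv]
          exact Or.inr (Or.inr (Or.inr (Or.inl ⟨a, rfl, rfl, haN2⟩)))
        · have hyv : g a v = Sum.inl v := hgl a v (fun hc => haN2 hc.2)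
          rw [hxa, hyv]
          have haN1 : a ∈ N1 := haN.resolve_right haN2
          exact Or.inr (Or.inl ⟨a, rfl, rfl, haN1⟩)
      · by_cases hav : a = v
        · subst a
          have hbN : b ∈ N1 ∪ N2 := by rw [hpart]; exact hGab
          have hyb : g v b = Sum.inl b := hgl v b (fun hc => hbv hc.1)
          by_cases hbN2 : b ∈ N2
          · have hxv : g b v = Sum.inr () := (hgv b v).mpr ⟨rfl, hbN2⟩
            rw [hxv, hyb]
            exact Or.inr (Or.inr (Or.inr (Or.inr (Or.inl ⟨b, rfl, rfl, hbN2⟩))))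
          · have hxv : g b v = Sum.inl v := hgl b v (fun hc => hbN2 hc.2)
            rw [hxv, hyb]
            have hbN1 : b ∈ N1 := hbN.resolve_right hbN2
            exact Or.inr (Or.inr (Or.inl ⟨b, rfl, rfl, hbN1⟩))
        · have hxa : g b a = Sum.inl a := hgl b a (fun hc => hav hc.1)
          have hyb : g a b = Sum.inl b := hgl a b (fun hc => hbv hc.1)
          rw [hxa, hyb]
          exact Or.inl ⟨a, b, rfl, rfl, hav, hbv, hGab⟩
    · exact Or.inr (Or.inr (Or.inr (Or.inr (Or.inr (Or.inl ⟨hx, hy⟩)))))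
    · exact Or.inr (Or.inr (Or.inr (Or.inr (Or.inr (Or.inr ⟨hx, hy⟩)))))
  -- build the lifted subgraph T'
  let T' : G'.Subgraph :=
    { verts := (Sum.inl '' T.verts) ∪ {x | x = Sum.inr () ∧ v ∈ T.verts}
      Adj := fun x y =>
        (∃ a b, T.Adj a b ∧ x = g b a ∧ y = g a b) ∨
          (v ∈ T.verts ∧ ((x = Sum.inl v ∧ y = Sum.inr ()) ∨ (x = Sum.inr () ∧ y = Sum.inl v)))
      adj_sub := fun {x y} h => hadjsub x y h
      edge_vert := by
        rintro x y (⟨a, b, hab, hx, hy⟩ | ⟨hv, ⟨hx, hy⟩ | ⟨hx, hy⟩⟩)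
        · have haT : a ∈ T.verts := hab.fst_mem
          by_cases h2 : a = v ∧ b ∈ N2
          · rw [hx, (hgv b a).mpr h2]
            exact Or.inr ⟨rfl, h2.1 ▸ haT⟩
          · rw [hx, hgl b a h2]
            exact Or.inl ⟨a, haT, rfl⟩
        · exact hx ▸ Or.inl ⟨v, hv, rfl⟩
        · exact hx ▸ Or.inr ⟨rfl, hv⟩
      symm := by
        constructor
        rintro x y (⟨a, b, hab, hx, hy⟩ | ⟨hv, ⟨hx, hy⟩ | ⟨hx, hy⟩⟩)
        · exact Or.inl ⟨b, a, hab.symm, hy, hx⟩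
        · exact Or.inr ⟨hv, Or.inr ⟨hy, hx⟩⟩
        · exact Or.inr ⟨hv, Or.inl ⟨hy, hx⟩⟩ }
  have hT'adj : ∀ x y : V ⊕ Unit, T'.Adj x y ↔
      ((∃ a b, T.Adj a b ∧ x = g b a ∧ y = g a b) ∨
        (v ∈ T.verts ∧ ((x = Sum.inl v ∧ y = Sum.inr ()) ∨ (x = Sum.inr () ∧ y = Sum.inl v)))) :=
    fun _ _ => Iff.rfl

  have hT'verts : ∀ x : V ⊕ Unit, x ∈ T'.verts ↔
      (x ∈ Sum.inl '' T.verts ∨ (x = Sum.inr () ∧ v ∈ T.verts)) := fun _ => Iff.rfl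
  have hmemL : ∀ a ∈ T.verts, Sum.inl a ∈ T'.verts := fun a ha => Or.inl ⟨a, ha, rfl⟩
  -- reachability steps
  have hstepv : ∀ a (hab : T.Adj a v) (ha : Sum.inl a ∈ T'.verts) (hb : Sum.inl v ∈ T'.verts),
      T'.coe.Reachable ⟨Sum.inl a, ha⟩ ⟨Sum.inl v, hb⟩ := by
    intro a hab ha hb
    have hav : a ≠ v := hab.ne
    have hvT : v ∈ T.verts := hab.snd_mem
    have hxa : g v a = Sum.inl a := hgl v a (fun hc => hav hc.1)
    by_cases haN2 : a ∈ N2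
    · have hyv : g a v = Sum.inr () := (hgv a v).mpr ⟨rfl, haN2⟩
      have h1 : T'.Adj (Sum.inl a) (Sum.inr ()) := by
        rw [hT'adj]; exact Or.inl ⟨a, v, hab, hxa.symm, hyv.symm⟩
      have h2 : T'.Adj (Sum.inr ()) (Sum.inl v) := by
        rw [hT'adj]; exact Or.inr ⟨hvT, Or.inr ⟨rfl, rfl⟩⟩
      exact (Adj.reachable h1.coe).trans (Adj.reachable h2.coe)
    · have hyv : g a v = Sum.inl v := hgl a v (fun hc => haN2 hc.2)
      have h1 : T'.Adj (Sum.inl a) (Sum.inl v) := by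
        rw [hT'adj]; exact Or.inl ⟨a, v, hab, hxa.symm, hyv.symm⟩
      exact Adj.reachable h1.coe
  have hstep : ∀ a b (hab : T.Adj a b) (ha : Sum.inl a ∈ T'.verts) (hb : Sum.inl b ∈ T'.verts),
      T'.coe.Reachable ⟨Sum.inl a, ha⟩ ⟨Sum.inl b, hb⟩ := by
    intro a b hab ha hb
    by_cases hbv : b = v
    · subst b; exact hstepv a hab ha hb
    · by_cases hav : a = v
      · subst a; exact (hstepv b hab.symm hb ha).symm
      · have hxa : g b a = Sum.inl a := hgl b a (fun hc => hav hc.1)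
        have hyb : g a b = Sum.inl b := hgl a b (fun hc => hbv hc.1)
        have h1 : T'.Adj (Sum.inl a) (Sum.inl b) := by
          rw [hT'adj]; exact Or.inl ⟨a, b, hab, hxa.symm, hyb.symm⟩
        exact Adj.reachable h1.coe
  have key : ∀ (x y : ↑T.verts) (p : T.coe.Walk x y)
      (hx : Sum.inl x.1 ∈ T'.verts) (hy : Sum.inl y.1 ∈ T'.verts),
      T'.coe.Reachable ⟨Sum.inl x.1, hx⟩ ⟨Sum.inl y.1, hy⟩ := by
    intro x y p
    induction p with
    | nil => intro hx hy; exact Reachable.refl _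
    | @cons u w _ h p ih =>
      intro hx hy
      have hmid : Sum.inl w.1 ∈ T'.verts := hmemL w.1 w.2
      have hTad : T.Adj u.1 w.1 := h
      exact (hstep u.1 w.1 hTad hx hmid).trans (ih hmid hy)
  have hreach : ∀ a b (ha : a ∈ T.verts) (hb : b ∈ T.verts)
      (ha' : Sum.inl a ∈ T'.verts) (hb' : Sum.inl b ∈ T'.verts),
      T'.coe.Reachable ⟨Sum.inl a, ha'⟩ ⟨Sum.inl b, hb'⟩ := by
    intro a b ha hb ha' hb'
    obtain ⟨p⟩ := hTconn.coe.preconnected ⟨a, ha⟩ ⟨b, hb⟩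
    exact key ⟨a, ha⟩ ⟨b, hb⟩ p ha' hb'
  have hred : ∀ (x : ↑T'.verts), ∃ (a : V) (ha : a ∈ T.verts) (hx' : Sum.inl a ∈ T'.verts),
      T'.coe.Reachable x ⟨Sum.inl a, hx'⟩ := by
    rintro ⟨x, hx⟩
    rcases x with a | u
    · have ha : a ∈ T.verts := by
        rcases (hT'verts _).mp hx with ⟨a', ha', heq⟩ | ⟨heq, _⟩
        · cases heq; exact ha'
        · exact absurd heq (by simp)
      exact ⟨a, ha, hx, Reachable.refl _⟩
    · obtain ⟨heq, hvT⟩ := ((hT'verts _).mp hx).resolve_left (by rintro ⟨a', _, h⟩; cases h)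
      have hvm : Sum.inl v ∈ T'.verts := hmemL v hvT
      have h2 : T'.Adj (Sum.inr ()) (Sum.inl v) := by
        rw [hT'adj]; exact Or.inr ⟨hvT, Or.inr ⟨rfl, rfl⟩⟩
      exact ⟨v, hvT, hvm, Adj.reachable h2.coe⟩
  have hT'conn : T'.Connected := by
    rw [Subgraph.connected_iff]
    refine ⟨⟨fun x y => ?_⟩, ?_⟩
    · obtain ⟨a, ha, ha', rx⟩ := hred x
      obtain ⟨b, hb, hb', ry⟩ := hred y
      exact rx.trans ((hreach a b ha hb ha' hb').trans ry.symm)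
    · obtain ⟨w, hw⟩ := hTconn.nonempty
      exact ⟨Sum.inl w, hmemL w hw⟩
  -- S' is contained in T'
  have hS'sub : S' ⊆ T'.verts := by
    intro x hx
    rcases x with a | u
    · have : a ∈ π '' S' := ⟨Sum.inl a, hx, rfl⟩
      exact hmemL a (hTsub this)
    · have : v ∈ π '' S' := ⟨Sum.inr u, hx, rfl⟩
      exact Or.inr ⟨rfl, hTsub this⟩
  -- injectivity of c' on the edges of T'
  have hgl' : ∀ a b w, g a b = Sum.inl w → b = w := by
    intro a b w h
    by_cases hc : b = v ∧ a ∈ N2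
    · rw [(hgv a b).mpr hc] at h; cases h
    · rw [hgl a b hc] at h; exact Sum.inl.inj h
  have hnotbr : ∀ a b, T.Adj a b → s(g b a, g a b) ≠ s(Sum.inl v, Sum.inr ()) := by
    intro a b hab heq
    rcases Sym2.eq_iff.mp heq with ⟨h1, h2⟩ | ⟨h1, h2⟩
    · have hbv : b = v := ((hgv a b).mp h2).1
      have hav : a = v := hgl' b a v h1
      exact hab.ne (hav.trans hbv.symm)
    · have hav : a = v := ((hgv b a).mp h1).1
      have hbv : b = v := hgl' a b v h2
      exact hab.ne (hav.trans hbv.symm)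
  have hcval : ∀ a b, T.Adj a b → c' s(g b a, g a b) = c s(a, b) := by
    intro a b hab
    simp only [c', if_neg (hnotbr a b hab), Sym2.map_pair_eq, hπg]
  have hinj : Set.InjOn c' T'.edgeSet := by
    have hcases : ∀ e ∈ T'.edgeSet, e = s(Sum.inl v, Sum.inr ()) ∨
        ∃ a b, T.Adj a b ∧ e = s(g b a, g a b) := by
      intro e he
      induction e with
      | _ x y =>
        rw [Subgraph.mem_edgeSet, hT'adj] at he
        rcases he with ⟨a, b, hab, hx, hy⟩ | ⟨_, ⟨hx, hy⟩ | ⟨hx, hy⟩⟩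
        · exact Or.inr ⟨a, b, hab, by rw [hx, hy]⟩
        · exact Or.inl (by rw [hx, hy])
        · exact Or.inl (by rw [hx, hy, Sym2.eq_swap])
    intro e1 he1 e2 he2 hceq
    have hval : ∀ a b, T.Adj a b → c s(a, b) < n := by
      intro a b hab
      exact hcbound _ (T.edgeSet_subset (Subgraph.mem_edgeSet.mpr hab))
    rcases hcases e1 he1 with h1 | ⟨a1, b1, hab1, h1⟩ <;>
      rcases hcases e2 he2 with h2 | ⟨a2, b2, hab2, h2⟩
    · rw [h1, h2]
    · exfalso
      rw [h1, h2, hcval a2 b2 hab2] at hceq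
      simp only [c', if_pos rfl] at hceq
      exact absurd (hceq ▸ hval a2 b2 hab2) (lt_irrefl n)
    · exfalso
      rw [h1, h2, hcval a1 b1 hab1] at hceq
      simp only [c', if_pos rfl] at hceq
      exact absurd (hceq.symm ▸ hval a1 b1 hab1) (lt_irrefl n)
    · rw [h1, h2, hcval a1 b1 hab1, hcval a2 b2 hab2] at hceq
      have he1T : s(a1, b1) ∈ T.edgeSet := Subgraph.mem_edgeSet.mpr hab1
      have he2T : s(a2, b2) ∈ T.edgeSet := Subgraph.mem_edgeSet.mpr hab2
      have heq := hTinj he1T he2T hceq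
      rw [h1, h2]
      rcases Sym2.eq_iff.mp heq with ⟨ha, hb⟩ | ⟨ha, hb⟩
      · rw [ha, hb]
      · rw [ha, hb, Sym2.eq_swap]
  exact ⟨T', hT'conn, hS'sub, hinj⟩
end

section
/- Let G be a connected graph with at least 3 vertices and let G' be obtained from G by subdividing an edge e = uv, i.e., deleting e, adding a new vertex x, and joining x to both u and v. Then rx_3(G') ≤ rx_3(G) + 1. -/
open SimpleGraph

/-- Auxiliary subgraph of the subdivided graph `G'` obtained from a subgraph `T` of `G` by
removing the edge `uv` (if present), and attaching the new vertex `x = Sum.inr ()` via the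
edges `u-x` (when `uv ∈ T`) and `v-x` (when `uv ∈ T` or the extra condition `cX` holds). -/
private def subdivideSubgraph {V : Type*} {G : SimpleGraph V} {G' : SimpleGraph (V ⊕ Unit)}
    (u v : V)
    (hadj : ∀ x y : V ⊕ Unit, G'.Adj x y ↔
      ((∃ a b : V, x = Sum.inl a ∧ y = Sum.inl b ∧ G.Adj a b ∧
          ¬((a = u ∧ b = v) ∨ (a = v ∧ b = u))) ∨
       (∃ a : V, x = Sum.inl a ∧ y = Sum.inr () ∧ (a = u ∨ a = v)) ∨
       (∃ b : V, x = Sum.inr () ∧ y = Sum.inl b ∧ (b = u ∨ b = v))))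
    (T : G.Subgraph) (cX : Prop) (hvT : cX → v ∈ T.verts) : G'.Subgraph where
  verts := Sum.inl '' T.verts ∪ {w | w = Sum.inr () ∧ (s(u, v) ∈ T.edgeSet ∨ cX)}
  Adj a b :=
    (∃ p q : V, a = Sum.inl p ∧ b = Sum.inl q ∧ T.Adj p q ∧ s(p, q) ≠ s(u, v)) ∨
    (s(u, v) ∈ T.edgeSet ∧
      ((a = Sum.inl u ∧ b = Sum.inr ()) ∨ (a = Sum.inr () ∧ b = Sum.inl u))) ∨
    ((s(u, v) ∈ T.edgeSet ∨ cX) ∧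
      ((a = Sum.inl v ∧ b = Sum.inr ()) ∨ (a = Sum.inr () ∧ b = Sum.inl v)))
  adj_sub := by
    rintro a b (⟨p, q, rfl, rfl, hpq, hne⟩ | ⟨hE, (⟨rfl, rfl⟩ | ⟨rfl, rfl⟩)⟩ |
      ⟨hX, (⟨rfl, rfl⟩ | ⟨rfl, rfl⟩)⟩) <;> rw [hadj]
    · exact Or.inl ⟨p, q, rfl, rfl, T.adj_sub hpq, fun h => hne (Sym2.eq_iff.mpr h)⟩
    · exact Or.inr (Or.inl ⟨u, rfl, rfl, Or.inl rfl⟩)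
    · exact Or.inr (Or.inr ⟨u, rfl, rfl, Or.inl rfl⟩)
    · exact Or.inr (Or.inl ⟨v, rfl, rfl, Or.inr rfl⟩)
    · exact Or.inr (Or.inr ⟨v, rfl, rfl, Or.inr rfl⟩)
  edge_vert := by
    rintro a b (⟨p, q, rfl, rfl, hpq, hne⟩ | ⟨hE, (⟨rfl, rfl⟩ | ⟨rfl, rfl⟩)⟩ |
      ⟨hX, (⟨rfl, rfl⟩ | ⟨rfl, rfl⟩)⟩)
    · exact Or.inl ⟨p, T.edge_vert hpq, rfl⟩
    · exact Or.inl ⟨u, T.edge_vert (Subgraph.mem_edgeSet.mp hE), rfl⟩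
    · exact Or.inr ⟨rfl, Or.inl hE⟩
    · refine Or.inl ⟨v, ?_, rfl⟩
      rcases hX with hE | hc
      · exact T.edge_vert (Subgraph.mem_edgeSet.mp hE).symm
      · exact hvT hc
    · exact Or.inr ⟨rfl, hX⟩
  symm := by
    constructor
    rintro a b (⟨p, q, rfl, rfl, hpq, hne⟩ | ⟨hE, (⟨h1, h2⟩ | ⟨h1, h2⟩)⟩ |
      ⟨hX, (⟨h1, h2⟩ | ⟨h1, h2⟩)⟩)
    · exact Or.inl ⟨q, p, rfl, rfl, hpq.symm, fun h => hne (Sym2.eq_swap.trans h)⟩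
    · exact Or.inr (Or.inl ⟨hE, Or.inr ⟨h2, h1⟩⟩)
    · exact Or.inr (Or.inl ⟨hE, Or.inl ⟨h2, h1⟩⟩)
    · exact Or.inr (Or.inr ⟨hX, Or.inr ⟨h2, h1⟩⟩)
    · exact Or.inr (Or.inr ⟨hX, Or.inl ⟨h2, h1⟩⟩)

/-- Subdividing an edge increases the 3-rainbow index by at most one. Here `G'` is the
graph obtained from `G` by subdividing the edge `e = uv`: the edge `uv` is deleted, a
new vertex `x = Sum.inr ()` is added and joined to both `u` and `v`, and all other
edges are unchanged. Then `rx₃(G') ≤ rx₃(G) + 1`. -/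
theorem rx3_subdivide_le {V : Type*} [Fintype V] (G : SimpleGraph V)
    (hG : G.Connected) (hcard : 3 ≤ Fintype.card V)
    (u v : V) (huv : G.Adj u v)
    (G' : SimpleGraph (V ⊕ Unit))
    (hadj : ∀ x y : V ⊕ Unit, G'.Adj x y ↔
      ((∃ a b : V, x = Sum.inl a ∧ y = Sum.inl b ∧ G.Adj a b ∧
          ¬((a = u ∧ b = v) ∨ (a = v ∧ b = u))) ∨
       (∃ a : V, x = Sum.inl a ∧ y = Sum.inr () ∧ (a = u ∨ a = v)) ∨
       (∃ b : V, x = Sum.inr () ∧ y = Sum.inl b ∧ (b = u ∨ b = v)))) :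
    rx3 G' ≤ rx3 G + 1 := by
  classical
  -- the defining set of `rx3 G` is nonempty, so `rx3 G` belongs to it
  have hne : {n | ∃ c : Sym2 V → ℕ, (∀ e ∈ G.edgeSet, c e < n) ∧ IsRainbowColoring3 G c}.Nonempty := by
    refine ⟨Fintype.card (Sym2 V), fun e => (Fintype.equivFin (Sym2 V) e : ℕ),
      fun e _ => (Fintype.equivFin (Sym2 V) e).isLt, ?_⟩
    intro S _
    refine ⟨⊤, ?_, by simp, ?_⟩
    · exact Subgraph.connected_iff'.mpr ((Subgraph.topIso (G := G)).connected_iff.mpr hG)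
    · intro e _ e' _ h
      exact (Fintype.equivFin (Sym2 V)).injective (Fin.val_injective h)
  have hmem : rx3 G ∈ {n | ∃ c : Sym2 V → ℕ, (∀ e ∈ G.edgeSet, c e < n) ∧ IsRainbowColoring3 G c} :=
    Nat.sInf_mem hne
  obtain ⟨c, hb, hr⟩ := hmem
  set n := rx3 G with hn
  have hune : u ≠ v := huv.ne
  -- the new coloring
  have hf : ∀ a b : V ⊕ Unit,
      (fun a b => match a, b with
        | Sum.inl a, Sum.inl b => c s(a, b)
        | Sum.inl a, Sum.inr _ => if a = v then n else c s(u, v)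
        | Sum.inr _, Sum.inl b => if b = v then n else c s(u, v)
        | Sum.inr _, Sum.inr _ => 0) a b =
      (fun a b => match a, b with
        | Sum.inl a, Sum.inl b => c s(a, b)
        | Sum.inl a, Sum.inr _ => if a = v then n else c s(u, v)
        | Sum.inr _, Sum.inl b => if b = v then n else c s(u, v)
        | Sum.inr _, Sum.inr _ => 0) b a := by
    rintro (a | a) (b | b) <;> simp [Sym2.eq_swap]
  set c' : Sym2 (V ⊕ Unit) → ℕ := Sym2.lift ⟨_, hf⟩ with hc'
  have hc'll : ∀ a b : V, c' s(Sum.inl a, Sum.inl b) = c s(a, b) := fun a b => rfl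
  have hc'u : c' s(Sum.inl u, Sum.inr ()) = c s(u, v) := by
    show (if u = v then n else c s(u, v)) = c s(u, v)
    simp [hune]
  have hc'v : c' s(Sum.inl v, Sum.inr ()) = n := by
    show (if v = v then n else c s(u, v)) = n
    simp
  have hcuv : c s(u, v) < n := hb _ (G.mem_edgeSet.mpr huv)
  -- membership of `n+1` in the defining set for `G'`
  have key : n + 1 ∈ {m | ∃ d : Sym2 (V ⊕ Unit) → ℕ,
      (∀ e ∈ G'.edgeSet, d e < m) ∧ IsRainbowColoring3 G' d} := by
    refine ⟨c', ?_, ?_⟩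
    · -- the bound on colors
      intro e he
      induction e using Sym2.ind with
      | _ a b =>
        rw [SimpleGraph.mem_edgeSet, hadj] at he
        rcases he with ⟨p, q, rfl, rfl, hpq, _⟩ | ⟨p, rfl, rfl, _⟩ | ⟨q, rfl, rfl, _⟩
        · rw [hc'll]
          exact (hb _ (G.mem_edgeSet.mpr hpq)).trans (Nat.lt_succ_self n)
        · show (if p = v then n else c s(u, v)) < n + 1
          split
          · exact Nat.lt_succ_self n
          · exact hcuv.trans (Nat.lt_succ_self n)
        · show (if q = v then n else c s(u, v)) < n + 1
          split
          · exact Nat.lt_succ_self n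
          · exact hcuv.trans (Nat.lt_succ_self n)
    · -- the rainbow property
      intro S' hS3
      -- the set of `G`-vertices to connect
      set S : Set V := Sum.inl ⁻¹' S' ∪ {w | w = v ∧ Sum.inr () ∈ S'} with hSdef
      have hpre : (Sum.inl ⁻¹' S' : Set V).ncard ≤ S'.ncard := by
        rw [← Set.ncard_image_of_injective _ (Sum.inl_injective (β := Unit))]
        exact Set.ncard_le_ncard (Set.image_preimage_subset _ _) (Set.toFinite _)
      have hScard : S.ncard ≤ 3 := by
        by_cases hx : Sum.inr () ∈ S'
        · have h1 : S = insert v (Sum.inl ⁻¹' S') := by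
            ext w
            simp only [hSdef, Set.mem_union, Set.mem_setOf_eq, Set.mem_insert_iff, hx, and_true]
            tauto
          have h2 : (Sum.inl ⁻¹' S' : Set V).ncard ≤ 2 := by
            have h3 : Sum.inl '' (Sum.inl ⁻¹' S' : Set V) ⊆ S' \ {Sum.inr ()} := by
              rintro _ ⟨a, ha, rfl⟩
              exact ⟨ha, by simp⟩
            have h4 : (S' \ {Sum.inr ()}).ncard ≤ 2 := by
              rw [Set.ncard_diff_singleton_of_mem hx]
              omega
            calc (Sum.inl ⁻¹' S' : Set V).ncard
                = (Sum.inl '' (Sum.inl ⁻¹' S' : Set V)).ncard :=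
                  (Set.ncard_image_of_injective _ Sum.inl_injective).symm
              _ ≤ (S' \ {Sum.inr ()}).ncard := Set.ncard_le_ncard h3 (Set.toFinite _)
              _ ≤ 2 := h4
          calc S.ncard ≤ (Sum.inl ⁻¹' S' : Set V).ncard + 1 := h1 ▸ Set.ncard_insert_le _ _
            _ ≤ 3 := by omega
        · have h1 : S = Sum.inl ⁻¹' S' := by
            ext w
            simp [hSdef, hx]
          calc S.ncard = (Sum.inl ⁻¹' S' : Set V).ncard := by rw [h1]
            _ ≤ S'.ncard := hpre
            _ ≤ 3 := hS3
      obtain ⟨T, hTc, hTs, hTi⟩ := hr S hScard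
      have hvS : Sum.inr () ∈ S' → v ∈ T.verts := fun hx => hTs (Or.inr ⟨rfl, hx⟩)
      set T' : G'.Subgraph := subdivideSubgraph u v hadj T (Sum.inr () ∈ S') hvS with hT'
      have hmem_inl : ∀ {a : V}, a ∈ T.verts → Sum.inl a ∈ T'.verts :=
        fun h => Or.inl ⟨_, h, rfl⟩
      obtain ⟨t₀, ht₀⟩ := hTc.nonempty
      -- key reachability lemma: walks in T lift to T'
      have keyreach : ∀ (a b : T.verts) (p : T.coe.Walk a b),
          T'.coe.Reachable ⟨Sum.inl a.1, hmem_inl a.2⟩ ⟨Sum.inl b.1, hmem_inl b.2⟩ := by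
        intro a b p
        induction p with
        | nil => exact Reachable.refl _
        | @cons s t w h p ih =>
          have hst : T.Adj s.1 t.1 := h
          by_cases hcase : s(s.1, t.1) = s(u, v)
          · have hE : s(u, v) ∈ T.edgeSet := hcase ▸ Subgraph.mem_edgeSet.mpr hst
            have hxmem : Sum.inr () ∈ T'.verts := Or.inr ⟨rfl, Or.inl hE⟩
            rcases Sym2.eq_iff.mp hcase with ⟨hsu, htv⟩ | ⟨hsv, htu⟩
            · have a1 : T'.coe.Adj ⟨Sum.inl s.1, hmem_inl s.2⟩ ⟨Sum.inr (), hxmem⟩ :=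
                Or.inr (Or.inl ⟨hE, Or.inl ⟨congrArg Sum.inl hsu, rfl⟩⟩)
              have a2 : T'.coe.Adj ⟨Sum.inr (), hxmem⟩ ⟨Sum.inl t.1, hmem_inl t.2⟩ :=
                Or.inr (Or.inr ⟨Or.inl hE, Or.inr ⟨rfl, congrArg Sum.inl htv⟩⟩)
              exact (a1.reachable.trans a2.reachable).trans ih
            · have a1 : T'.coe.Adj ⟨Sum.inl s.1, hmem_inl s.2⟩ ⟨Sum.inr (), hxmem⟩ :=
                Or.inr (Or.inr ⟨Or.inl hE, Or.inl ⟨congrArg Sum.inl hsv, rfl⟩⟩)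
              have a2 : T'.coe.Adj ⟨Sum.inr (), hxmem⟩ ⟨Sum.inl t.1, hmem_inl t.2⟩ :=
                Or.inr (Or.inl ⟨hE, Or.inr ⟨rfl, congrArg Sum.inl htu⟩⟩)
              exact (a1.reachable.trans a2.reachable).trans ih
          · have a1 : T'.coe.Adj ⟨Sum.inl s.1, hmem_inl s.2⟩ ⟨Sum.inl t.1, hmem_inl t.2⟩ :=
              Or.inl ⟨s.1, t.1, rfl, rfl, hst, hcase⟩
            exact a1.reachable.trans ih
      have hbase : ∀ (w : V ⊕ Unit) (hw : w ∈ T'.verts),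
          T'.coe.Reachable ⟨w, hw⟩ ⟨Sum.inl t₀, hmem_inl ht₀⟩ := by
        rintro w (⟨a, ha, rfl⟩ | ⟨rfl, hX⟩)
        · obtain ⟨p⟩ := hTc ⟨a, ha⟩ ⟨t₀, ht₀⟩
          exact keyreach _ _ p
        · have hvT : v ∈ T.verts := by
            rcases hX with hE | hc
            · exact T.edge_vert (Subgraph.mem_edgeSet.mp hE).symm
            · exact hvS hc
          have a3 : T'.coe.Adj ⟨Sum.inr (), Or.inr ⟨rfl, hX⟩⟩ ⟨Sum.inl v, hmem_inl hvT⟩ :=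
            Or.inr (Or.inr ⟨hX, Or.inr ⟨rfl, rfl⟩⟩)
          obtain ⟨p⟩ := hTc ⟨v, hvT⟩ ⟨t₀, ht₀⟩
          exact a3.reachable.trans (keyreach _ _ p)
      refine ⟨T', ?_, ?_, ?_⟩
      · -- connectedness
        rw [Subgraph.connected_iff]
        refine ⟨⟨?_⟩, ⟨Sum.inl t₀, hmem_inl ht₀⟩⟩
        rintro ⟨w, hw⟩ ⟨w', hw'⟩
        exact (hbase w hw).trans (hbase w' hw').symm
      · -- S' ⊆ T'.verts
        rintro (a | b) hw
        · exact Or.inl ⟨a, hTs (Or.inl hw), rfl⟩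
        · exact Or.inr ⟨rfl, Or.inr hw⟩
      · -- injectivity of the coloring on the edges
        have norm : ∀ a b : V ⊕ Unit, T'.Adj a b →
            (∃ p q : V, s(a, b) = s(Sum.inl p, Sum.inl q) ∧ T.Adj p q ∧ s(p, q) ≠ s(u, v)) ∨
            (s(a, b) = s(Sum.inl u, Sum.inr ()) ∧ s(u, v) ∈ T.edgeSet) ∨
            (s(a, b) = s(Sum.inl v, Sum.inr ())) := by
          rintro a b (⟨p, q, rfl, rfl, h1, h2⟩ | ⟨hE, (⟨rfl, rfl⟩ | ⟨rfl, rfl⟩)⟩ |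
            ⟨hX, (⟨rfl, rfl⟩ | ⟨rfl, rfl⟩)⟩)
          · exact Or.inl ⟨p, q, rfl, h1, h2⟩
          · exact Or.inr (Or.inl ⟨rfl, hE⟩)
          · exact Or.inr (Or.inl ⟨Sym2.eq_swap, hE⟩)
          · exact Or.inr (Or.inr rfl)
          · exact Or.inr (Or.inr Sym2.eq_swap)
        intro e1 he1 e2 he2 hce
        induction e1 using Sym2.ind with
        | _ a b =>
        induction e2 using Sym2.ind with
        | _ a' b' =>
        rcases norm _ _ (Subgraph.mem_edgeSet.mp he1) with
          ⟨p, q, hq1, h11, h12⟩ | ⟨hq1, h11⟩ | hq1 <;>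
        rcases norm _ _ (Subgraph.mem_edgeSet.mp he2) with
          ⟨p', q', hq2, h21, h22⟩ | ⟨hq2, h21⟩ | hq2 <;>
        rw [hq1, hq2] <;> rw [hq1, hq2] at hce
        · -- both ordinary edges
          rw [hc'll, hc'll] at hce
          have := hTi (Subgraph.mem_edgeSet.mpr h11) (Subgraph.mem_edgeSet.mpr h21) hce
          calc s(Sum.inl p, Sum.inl q) = Sym2.map Sum.inl s(p, q) := (Sym2.map_pair_eq _ _ _).symm
            _ = Sym2.map Sum.inl s(p', q') := by rw [this]
            _ = s(Sum.inl p', Sum.inl q') := Sym2.map_pair_eq _ _ _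
        · -- ordinary vs u-x
          rw [hc'll, hc'u] at hce
          exact absurd (hTi (Subgraph.mem_edgeSet.mpr h11) h21 hce) h12
        · -- ordinary vs v-x
          rw [hc'll, hc'v] at hce
          exact absurd (hce ▸ hb _ (G.mem_edgeSet.mpr (T.adj_sub h11))) (lt_irrefl n)
        · -- u-x vs ordinary
          rw [hc'u, hc'll] at hce
          exact absurd (hTi h11 (Subgraph.mem_edgeSet.mpr h21) hce).symm h22
        · -- u-x vs v-x
          rw [hc'u, hc'v] at hce
          exact absurd (hce ▸ hcuv) (lt_irrefl n)
        · -- v-x vs ordinary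
          rw [hc'v, hc'll] at hce
          exact absurd (hce ▸ hb _ (G.mem_edgeSet.mpr (T.adj_sub h21))) (lt_irrefl n)
        · -- v-x vs u-x
          rw [hc'v, hc'u] at hce
          exact absurd (hce ▸ hcuv) (lt_irrefl n)
  exact Nat.sInf_le key
end
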